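/- arXiv:2112.11274 — 8 statements merged into one kernel-verified Lean document; each statement's English description precedes it below -/
import Mathlib

section
/- For all real numbers c > 0 and α > 0 there exists ε > 0 (depending only on c and α) such that the following holds. Let (X, d) be a finite metric space whose metric takes values in the non-negative integers, let k, r be positive integers, and let K > 0. Assume: (A1) for every a ∈ X and every integer 0 ≤ t < r, |B(a, r−t)| ≤ 2·e^{−ct}·|B(a, r)|; (A2) for all a, b ∈ X with d(a,b) = k and every integer 0 ≤ i ≤ αk, the sphere S(a, r−i) is non-empty and, for x drawn uniformly at random from S(a, r−i), E[d(x,b) − d(x,a)] ≥ 2αk; (A3) for the same a, b, i and x as in (A2), the random variable ℓ(x) = d(x,b) − d(x,a) satisfies P(|ℓ(x) − E ℓ(x)| ≥ t) ≤ 2·exp(−t²/K) for all t ≥ 0. Then for all a, b ∈ X with d(a,b) = k, |B(a,r) ∩ B(b,r)| ≤ 4·exp(−ε·min(k, k²/K))·|B(a,r)|. -/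
open Finset

lemma aux_ncard_biUnion_le {X : Type} [Finite X] (m : ℕ) (T : ℕ → Set X) :
    (⋃ i ∈ Finset.range m, T i).ncard ≤ ∑ i ∈ Finset.range m, (T i).ncard := by
  induction m with
  | zero => simp
  | succ n ih =>
    rw [Finset.range_add_one, Finset.set_biUnion_insert,
      Finset.sum_insert Finset.notMem_range_self]
    exact le_trans (Set.ncard_union_le _ _) (by omega)

lemma aux_sum_ncard_le {X : Type} [Finite X] (m : ℕ) (S : ℕ → Set X) (B : Set X) :
    (∀ i < m, S i ⊆ B) → (∀ i j, i < m → j < m → i ≠ j → Disjoint (S i) (S j)) →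
    ∑ i ∈ Finset.range m, (S i).ncard ≤ B.ncard := by
  induction m generalizing B with
  | zero => intro _ _; simp
  | succ n ih =>
    intro hsub hdisj
    rw [Finset.sum_range_succ]
    have h1 : ∑ i ∈ Finset.range n, (S i).ncard ≤ (B \ S n).ncard := by
      refine ih (B \ S n) (fun i hi x hx => ⟨hsub i (by omega) hx, ?_⟩)
        (fun i j hi hj hij => hdisj i j (by omega) (by omega) hij)
      exact fun hxn => (hdisj i n (by omega) (by omega) (by omega)).ne_of_mem hx hxn rfl
    have h2 : (B \ S n).ncard + (S n).ncard = B.ncard :=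
      Set.ncard_diff_add_ncard_of_subset (hsub n (by omega)) (Set.toFinite _)
    omega

set_option maxHeartbeats 1000000 in
/-- Sufficient conditions for exponential decay of intersection volume of balls
in a finite integer-valued metric space. -/
theorem stmt0 (c α : ℝ) (hc : 0 < c) (hα : 0 < α) :
    ∃ ε > (0 : ℝ), ∀ (X : Type) [MetricSpace X] [Fintype X],
      (∀ x y : X, ∃ m : ℕ, dist x y = m) →
      ∀ (k r : ℕ) (K : ℝ), 0 < k → 0 < r → 0 < K →
      -- (A1) exponential growth at radius r with rate c
      (∀ (a : X) (t : ℕ), t < r →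
        ({x : X | dist x a ≤ (r : ℝ) - (t : ℝ)}.ncard : ℝ) ≤
          2 * Real.exp (-c * t) * ({x : X | dist x a ≤ (r : ℝ)}.ncard : ℝ)) →
      -- (A2) (r,k)-dispersed with constant α
      (∀ a b : X, dist a b = (k : ℝ) → ∀ i : ℕ, (i : ℝ) ≤ α * k →
        {x : X | dist x a = (r : ℝ) - (i : ℝ)}.Nonempty ∧
        2 * α * k ≤
          (∑ᶠ x ∈ {x : X | dist x a = (r : ℝ) - (i : ℝ)}, (dist x b - dist x a)) /
            ({x : X | dist x a = (r : ℝ) - (i : ℝ)}.ncard : ℝ)) →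
      -- (A3) the centered random variable ℓ(x) = d(x,b) - d(x,a) is K-subgaussian
      (∀ a b : X, dist a b = (k : ℝ) → ∀ i : ℕ, (i : ℝ) ≤ α * k → ∀ t : ℝ, 0 ≤ t →
        ({x : X | dist x a = (r : ℝ) - (i : ℝ) ∧
            t ≤ |(dist x b - dist x a) -
              (∑ᶠ y ∈ {y : X | dist y a = (r : ℝ) - (i : ℝ)}, (dist y b - dist y a)) /
                ({y : X | dist y a = (r : ℝ) - (i : ℝ)}.ncard : ℝ)|}.ncard : ℝ) ≤
          2 * Real.exp (-t ^ 2 / K) *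
            ({x : X | dist x a = (r : ℝ) - (i : ℝ)}.ncard : ℝ)) →
      -- conclusion
      ∀ a b : X, dist a b = (k : ℝ) →
        ({x : X | dist x a ≤ (r : ℝ) ∧ dist x b ≤ (r : ℝ)}.ncard : ℝ) ≤
          4 * Real.exp (-ε * min (k : ℝ) ((k : ℝ) ^ 2 / K)) *
            ({x : X | dist x a ≤ (r : ℝ)}.ncard : ℝ) := by
  classical
  have hlog2 : (0:ℝ) < Real.log 2 := Real.log_pos (by norm_num)
  refine ⟨min (α^2) (min (c*α/2) (α/4 * Real.log 2)), by positivity, ?_⟩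
  set ε := min (α^2) (min (c*α/2) (α/4 * Real.log 2)) with hεdef
  intro X _ _ hint k r K hk hr hK hA1 hA2 hA3 a b hab
  have hε0 : 0 < ε := by positivity
  have hεa : ε ≤ α^2 := min_le_left _ _
  have hεb : ε ≤ c*α/2 := le_trans (min_le_right _ _) (min_le_left _ _)
  have hεc : ε ≤ α/4 * Real.log 2 := le_trans (min_le_right _ _) (min_le_right _ _)
  have hk1 : (1:ℝ) ≤ (k:ℝ) := by exact_mod_cast hk
  have hmin_le : min (k:ℝ) ((k:ℝ)^2/K) ≤ (k:ℝ) := min_le_left _ _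
  have hmin_le' : min (k:ℝ) ((k:ℝ)^2/K) ≤ (k:ℝ)^2/K := min_le_right _ _
  have hmin0 : (0:ℝ) ≤ min (k:ℝ) ((k:ℝ)^2/K) := le_min (by positivity) (by positivity)
  have hBfin : {x : X | dist x a ≤ (r:ℝ)}.Finite := Set.toFinite _
  have hB0 : (0:ℝ) ≤ ({x : X | dist x a ≤ (r:ℝ)}.ncard : ℝ) := Nat.cast_nonneg _
  have hIB : ({x : X | dist x a ≤ (r:ℝ) ∧ dist x b ≤ (r:ℝ)}.ncard : ℝ) ≤
      ({x : X | dist x a ≤ (r:ℝ)}.ncard : ℝ) := by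
    have := Set.ncard_le_ncard (s := {x : X | dist x a ≤ (r:ℝ) ∧ dist x b ≤ (r:ℝ)})
      (t := {x : X | dist x a ≤ (r:ℝ)}) (fun x hx => hx.1) hBfin
    exact_mod_cast this
  by_cases hcase : α * k < 4
  · -- trivial case: α k < 4, the prefactor is at least 1
    have h2 : (1:ℝ) ≤ 4 * Real.exp (-ε * min (k:ℝ) ((k:ℝ)^2/K)) := by
      have hx : ε * min (k:ℝ) ((k:ℝ)^2/K) ≤ Real.log 2 := by
        have h1 : ε * min (k:ℝ) ((k:ℝ)^2/K) ≤ ε * k := by nlinarith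
        have h2 : ε * k ≤ (α/4 * Real.log 2) * k := by nlinarith
        nlinarith
      have h3 : Real.exp (-Real.log 2) ≤ Real.exp (-ε * min (k:ℝ) ((k:ℝ)^2/K)) := by
        apply Real.exp_le_exp.mpr; nlinarith
      have h4 : Real.exp (-Real.log 2) = 1/2 := by
        rw [Real.exp_neg, Real.exp_log (by norm_num : (0:ℝ) < 2)]; norm_num
      nlinarith
    nlinarith
  · push_neg at hcase
    set m := ⌊α * k⌋₊ with hmdef
    have hm_le : (m:ℝ) ≤ α * k := Nat.floor_le (by positivity)
    have hm_gt : α * k - 1 < (m:ℝ) := Nat.sub_one_lt_floor _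
    have hm1 : 1 ≤ m := by
      have : (1:ℝ) ≤ (m:ℝ) := by linarith
      exact_mod_cast this
    -- r ≥ m, from nonemptiness of the sphere S(a, r-m)
    have hmr : m ≤ r := by
      obtain ⟨⟨x0, hx0⟩, -⟩ := hA2 a b hab m hm_le
      have h0 : (0:ℝ) ≤ (r:ℝ) - (m:ℝ) := hx0 ▸ dist_nonneg
      have : (m:ℝ) ≤ (r:ℝ) := by linarith
      exact_mod_cast this
    set t := min m (r - 1) with htdef
    have ht_lt : t < r := lt_of_le_of_lt (min_le_right _ _) (by omega)
    have htm : t ≤ m := min_le_left _ _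
    have ht_ge : (m:ℝ) - 1 ≤ (t:ℝ) := by
      have h1 : m - 1 ≤ t := le_min (Nat.sub_le _ _) (Nat.sub_le_sub_right hmr 1)
      have h2 : ((m - 1 : ℕ):ℝ) = (m:ℝ) - 1 := by
        rw [Nat.cast_sub hm1]; norm_num
      calc (m:ℝ) - 1 = ((m-1:ℕ):ℝ) := h2.symm
        _ ≤ (t:ℝ) := by exact_mod_cast h1
    -- the expectation
    set E : ℕ → ℝ := fun i =>
      (∑ᶠ y ∈ {y : X | dist y a = (r : ℝ) - (i : ℝ)}, (dist y b - dist y a)) /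
        ({y : X | dist y a = (r : ℝ) - (i : ℝ)}.ncard : ℝ) with hEdef
    -- tail sets
    set T : ℕ → Set X := fun i =>
      {x : X | dist x a = (r : ℝ) - (i : ℝ) ∧
        α * k ≤ |(dist x b - dist x a) - E i|} with hTdef
    set S : ℕ → Set X := fun i => {x : X | dist x a = (r : ℝ) - (i : ℝ)} with hSdef
    set D : Set X := {x : X | dist x a ≤ (r : ℝ) - (t : ℝ)} with hDdef
    set U : Set X := ⋃ i ∈ Finset.range m, T i with hUdef
    -- the covering
    have hcover : {x : X | dist x a ≤ (r:ℝ) ∧ dist x b ≤ (r:ℝ)} ⊆ D ∪ U := by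
      rintro x ⟨hxa, hxb⟩
      obtain ⟨n, hn⟩ := hint x a
      by_cases hdeep : (n:ℝ) ≤ (r:ℝ) - (m:ℝ)
      · left
        have : (t:ℝ) ≤ (m:ℝ) := by exact_mod_cast htm
        simp only [hDdef, Set.mem_setOf_eq, hn]
        linarith
      · right
        push_neg at hdeep
        have hnr : n ≤ r := by
          have : (n:ℝ) ≤ (r:ℝ) := by rw [← hn]; exact hxa
          exact_mod_cast this
        set i := r - n with hidef
        have hicast : (i:ℝ) = (r:ℝ) - (n:ℝ) := by
          rw [hidef, Nat.cast_sub hnr]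
        have him : i < m := by
          have : (i:ℝ) < (m:ℝ) := by rw [hicast]; linarith
          exact_mod_cast this
        have hiαk : (i:ℝ) ≤ α * k := by
          have : (i:ℝ) ≤ (m:ℝ) := by exact_mod_cast him.le
          linarith
        have hxS : dist x a = (r:ℝ) - (i:ℝ) := by rw [hn, hicast]; ring
        have hE : 2 * α * k ≤ E i := (hA2 a b hab i hiαk).2
        have hℓ : dist x b - dist x a ≤ (i:ℝ) := by
          rw [hxS]; linarith
        refine Set.mem_biUnion (Finset.mem_range.mpr him) ⟨hxS, ?_⟩
        rw [le_abs]
        right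
        nlinarith
    -- counting
    have hDcard : (D.ncard : ℝ) ≤
        2 * Real.exp (-c * t) * ({x : X | dist x a ≤ (r:ℝ)}.ncard : ℝ) :=
      hA1 a t ht_lt
    have hTcard : ∀ i < m, ((T i).ncard : ℝ) ≤
        2 * Real.exp (-(α*k)^2 / K) * ((S i).ncard : ℝ) := by
      intro i him
      have hiαk : (i:ℝ) ≤ α * k := by
        have : (i:ℝ) < (m:ℝ) := by exact_mod_cast him
        linarith
      exact hA3 a b hab i hiαk (α * k) (by positivity)
    have hSsub : ∀ i < m, S i ⊆ {x : X | dist x a ≤ (r:ℝ)} := by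
      intro i him x hx
      have hi0 : (0:ℝ) ≤ (i:ℝ) := Nat.cast_nonneg _
      simp only [hSdef, Set.mem_setOf_eq] at hx
      simp only [Set.mem_setOf_eq, hx]
      linarith
    have hSdisj : ∀ i j, i < m → j < m → i ≠ j → Disjoint (S i) (S j) := by
      intro i j _ _ hij
      rw [Set.disjoint_left]
      intro x hxi hxj
      simp only [hSdef, Set.mem_setOf_eq] at hxi hxj
      have : (i:ℝ) = (j:ℝ) := by rw [hxi] at hxj; linarith
      exact hij (by exact_mod_cast this)
    have hSsum : (∑ i ∈ Finset.range m, ((S i).ncard : ℝ)) ≤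
        ({x : X | dist x a ≤ (r:ℝ)}.ncard : ℝ) := by
      rw [← Nat.cast_sum]
      exact_mod_cast aux_sum_ncard_le m S _ hSsub hSdisj
    have hUcard : (U.ncard : ℝ) ≤
        2 * Real.exp (-(α*k)^2 / K) * ({x : X | dist x a ≤ (r:ℝ)}.ncard : ℝ) := by
      have h1 : (U.ncard : ℝ) ≤ ∑ i ∈ Finset.range m, ((T i).ncard : ℝ) := by
        rw [← Nat.cast_sum]
        exact_mod_cast aux_ncard_biUnion_le m T
      have h2 : ∑ i ∈ Finset.range m, ((T i).ncard : ℝ) ≤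
          ∑ i ∈ Finset.range m, 2 * Real.exp (-(α*k)^2 / K) * ((S i).ncard : ℝ) := by
        apply Finset.sum_le_sum
        intro i hi
        exact hTcard i (Finset.mem_range.mp hi)
      rw [← Finset.mul_sum] at h2
      have h3 := mul_le_mul_of_nonneg_left hSsum
        (le_of_lt (by positivity : (0:ℝ) < 2 * Real.exp (-(α*k)^2 / K)))
      linarith
    have hIDU : ({x : X | dist x a ≤ (r:ℝ) ∧ dist x b ≤ (r:ℝ)}.ncard : ℝ) ≤
        (D.ncard : ℝ) + (U.ncard : ℝ) := by
      have h1 : {x : X | dist x a ≤ (r:ℝ) ∧ dist x b ≤ (r:ℝ)}.ncard ≤ (D ∪ U).ncard :=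
        Set.ncard_le_ncard hcover (Set.toFinite _)
      have h2 := Set.ncard_union_le D U
      exact_mod_cast le_trans h1 h2
    -- comparing exponentials
    have hexp1 : Real.exp (-c * t) ≤ Real.exp (-ε * min (k:ℝ) ((k:ℝ)^2/K)) := by
      apply Real.exp_le_exp.mpr
      have h1 : ε * min (k:ℝ) ((k:ℝ)^2/K) ≤ ε * k := by nlinarith
      have h2 : ε * k ≤ c * α * k / 2 := by nlinarith
      have h3 : c * α * k / 2 ≤ c * (α * k - 2) := by nlinarith
      have h4 : α * k - 2 ≤ (t:ℝ) := by linarith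
      nlinarith
    have hexp2 : Real.exp (-(α*k)^2 / K) ≤ Real.exp (-ε * min (k:ℝ) ((k:ℝ)^2/K)) := by
      apply Real.exp_le_exp.mpr
      have hq : (0:ℝ) ≤ (k:ℝ)^2 / K := by positivity
      have h1 : ε * min (k:ℝ) ((k:ℝ)^2/K) ≤ ε * ((k:ℝ)^2/K) := by nlinarith
      have h2 : ε * ((k:ℝ)^2/K) ≤ α^2 * ((k:ℝ)^2/K) := by nlinarith
      have h3 : -(α*(k:ℝ))^2 / K = -(α^2 * ((k:ℝ)^2/K)) := by ring
      rw [h3]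
      linarith
    have b1 : (D.ncard : ℝ) ≤
        2 * Real.exp (-ε * min (k:ℝ) ((k:ℝ)^2/K)) * ({x : X | dist x a ≤ (r:ℝ)}.ncard : ℝ) := by
      refine le_trans hDcard (mul_le_mul_of_nonneg_right ?_ hB0)
      exact mul_le_mul_of_nonneg_left hexp1 (by norm_num)
    have b2 : (U.ncard : ℝ) ≤
        2 * Real.exp (-ε * min (k:ℝ) ((k:ℝ)^2/K)) * ({x : X | dist x a ≤ (r:ℝ)}.ncard : ℝ) := by
      refine le_trans hUcard (mul_le_mul_of_nonneg_right ?_ hB0)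
      exact mul_le_mul_of_nonneg_left hexp2 (by norm_num)
    linarith
end

section
/- For every δ ∈ (0, 1/8) there exists K₀ > 0 such that the following holds for every K ≥ K₀. Let (X, d) be a finite metric space and r > 0 such that (P1) for every s ∈ ℝ all closed balls of radius s in X have the same cardinality, denoted vol(s). Suppose there exists t ∈ (0, r) such that (P2) vol(r−t) ≤ e^{−K}·vol(r), and (P3) for all a, b ∈ X with r−t < d(a,b) ≤ r one has |B(a,r) ∩ B(b,r)| ≤ e^{−K}·vol(r). Then there exists a subset C ⊆ X with d(c, c') > r for all distinct c, c' ∈ C and |C| ≥ (1−δ)·K·|X|/vol(r); moreover, the number of subsets C ⊆ X with all pairwise distances greater than r is at least exp((1/8 − δ)·K²·|X|/vol(r)). -/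
/-!
Work with the hard-core measure on codes, which gives a code `C` weight `q ^ #C`. Fix a point
`v` and condition on the part `J` of the code outside `B(v, r)`: the points of `B(v, r)` still
available form a set `F`, and `v` is in the code with probability `q · E[1 / Z(F)]`, where
`Z(F) ≤ (1 + q)^#F ≤ e^(q #F)` is the partition function of the codes inside `F`; by Jensen this
is at least `q · exp (-q · E[#F])`. At most `g = e^(-K) vol(r)` points of `F` lie in
`B(v, r - t)` (P2); for a point `u` of `F` in the annulus, removing `B(u, r)` from `F` removes at
most `g` points (P3), so `u` is in the code with conditional probability at least
`q e^(-q g)`. Hence `E[#F] ≤ g + e^(q g) / q · ∑_{u ∈ annulus} P(u ∈ C)`, and averaging over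
`v` gives `q Δ exp (-q g - e^(q g) x) ≤ x` for `x = Δ · E[#C] / |X|`, `Δ = vol(r)`.
With `q = δ e^K / Δ` this forces `x ≥ (1 - δ) K`, giving a large code. With `q = e^(K/2) / Δ` it
gives `x ≥ K / 4`; as the entropy of the hard-core measure is at least `E[#C] · log q⁻¹ ≥
E[#C] · K / 2` and at most the logarithm of the number of codes, the count follows.
-/

open Finset Real

namespace MetricCode

open scoped Classical

lemma sum_mul_exp_div_le_sum_mul_exp {ι : Type*} (s : Finset ι) {w a : ι → ℝ}
    (hw : ∀ i ∈ s, 0 ≤ w i) (hpos : 0 < ∑ i ∈ s, w i) :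
    (∑ i ∈ s, w i) * exp ((∑ i ∈ s, w i * a i) / ∑ i ∈ s, w i) ≤
      ∑ i ∈ s, w i * exp (a i) := by
  have h := convexOn_exp.map_centerMass_le hw hpos fun i _ => Set.mem_univ (a i)
  simp only [centerMass, smul_eq_mul, Function.comp_def] at h
  rw [div_eq_inv_mul, ← le_div_iff₀' hpos, div_eq_inv_mul]
  exact h

lemma le_of_mul_exp_neg_le {A c₁ c₂ x B : ℝ} (hA : 0 ≤ A) (hc₂ : 0 ≤ c₂)
    (hx : A * exp (-c₁ - c₂ * x) ≤ x) (hB : B < A * exp (-c₁ - c₂ * B)) : B ≤ x := by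
  by_contra! h
  have := mul_le_mul_of_nonneg_left
    (exp_le_exp.2 (by nlinarith : -c₁ - c₂ * B ≤ -c₁ - c₂ * x)) hA
  linarith

variable {X : Type*} [MetricSpace X]

def IsCode (r : ℝ) (C : Finset X) : Prop := (C : Set X).Pairwise fun c c' => r < dist c c'

noncomputable def codes (r : ℝ) (S : Finset X) : Finset (Finset X) :=
  {C ∈ S.powerset | IsCode r C}

/-- The partition function of the hard-core model at fugacity `q` on the codes inside `S`. -/
noncomputable def partFn (r q : ℝ) (S : Finset X) : ℝ := ∑ C ∈ codes r S, q ^ #C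

variable {r q : ℝ} {S T C D : Finset X}

lemma IsCode.mono (h : C ⊆ T) (hT : IsCode r T) : IsCode r C :=
  Set.Pairwise.mono (coe_subset.2 h) hT

@[simp] lemma isCode_empty : IsCode r (∅ : Finset X) := by simp [IsCode]

lemma isCode_union (hC : IsCode r C) (hD : IsCode r D)
    (h : ∀ c ∈ C, ∀ d ∈ D, r < dist c d) : IsCode r (C ∪ D) := by
  rw [IsCode, coe_union, Set.pairwise_union]
  exact ⟨hC, hD, fun c hc d hd _ => ⟨h c hc d hd, by rw [dist_comm]; exact h c hc d hd⟩⟩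

lemma isCode_insert {u : X} (hC : IsCode r C) (h : ∀ w ∈ C, r < dist w u) :
    IsCode r (insert u C) := by
  rw [IsCode, coe_insert, Set.pairwise_insert]
  exact ⟨hC, fun w hw _ => ⟨by rw [dist_comm]; exact h w hw, h w hw⟩⟩

@[simp] lemma mem_codes : C ∈ codes r S ↔ C ⊆ S ∧ IsCode r C := by simp [codes]

lemma one_le_partFn (hq : 0 ≤ q) (S : Finset X) : 1 ≤ partFn r q S := by
  have := single_le_sum (f := fun C : Finset X => q ^ #C) (fun C _ => pow_nonneg hq _)
    (mem_codes.2 ⟨empty_subset S, isCode_empty (r := r)⟩)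
  simpa [partFn] using this

lemma partFn_pos (hq : 0 ≤ q) (S : Finset X) : 0 < partFn r q S :=
  one_pos.trans_le (one_le_partFn hq S)

lemma partFn_mono (hq : 0 ≤ q) (h : S ⊆ T) : partFn r q S ≤ partFn r q T :=
  sum_le_sum_of_subset_of_nonneg (fun C hC => by simp_all [subset_trans _ h])
    fun C _ _ => pow_nonneg hq _

@[simp] lemma partFn_empty : partFn r q (∅ : Finset X) = 1 := by
  simp [partFn, codes, filter_singleton]

section Ball

variable [Fintype X]

noncomputable def cball (r : ℝ) (v : X) : Finset X := {x | dist x v ≤ r}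

@[simp] lemma mem_cball {v x : X} : x ∈ cball r v ↔ dist x v ≤ r := by simp [cball]

lemma self_mem_cball (hr : 0 ≤ r) (v : X) : v ∈ cball r v := by simpa using hr

lemma erase_mem_codes_sdiff {u : X} (hC : C ∈ codes r S) (hu : u ∈ C) :
    C.erase u ∈ codes r (S \ cball r u) := by
  obtain ⟨hCS, hcode⟩ := mem_codes.1 hC
  refine mem_codes.2 ⟨fun w hw => ?_, hcode.mono (erase_subset u C)⟩
  obtain ⟨hwu, hwC⟩ := mem_erase.1 hw
  simpa [hCS hwC] using hcode hwC hu hwu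

lemma insert_mem_codes {u : X} (hD : D ∈ codes r (S \ cball r u)) (hu : u ∈ S) :
    insert u D ∈ codes r S := by
  obtain ⟨hDS, hcode⟩ := mem_codes.1 hD
  refine mem_codes.2 ⟨insert_subset hu (hDS.trans sdiff_subset), isCode_insert hcode ?_⟩
  intro w hw
  simpa using (mem_sdiff.1 (hDS hw)).2

/-- Inserting `u` is a bijection from the codes avoiding `cball r u` onto those containing `u`. -/
lemma sum_codes_filter_mem (hr : 0 ≤ r) (q : ℝ) {u : X} (hu : u ∈ S) :
    ∑ C ∈ codes r S with u ∈ C, q ^ #C = q * partFn r q (S \ cball r u) := by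
  rw [partFn, mul_sum]
  have hu' : ∀ D ∈ codes r (S \ cball r u), u ∉ D := fun D hD huD => by
    simpa [self_mem_cball hr] using (mem_codes.1 hD).1 huD
  refine sum_bij' (fun C _ => C.erase u) (fun D _ => insert u D)
    (fun C hC => erase_mem_codes_sdiff (mem_filter.1 hC).1 (mem_filter.1 hC).2)
    (fun D hD => mem_filter.2 ⟨insert_mem_codes hD hu, mem_insert_self u D⟩)
    (fun C hC => insert_erase (mem_filter.1 hC).2) (fun D hD => erase_insert (hu' D hD)) ?_
  intro C hC
  rw [← card_erase_add_one (mem_filter.1 hC).2, pow_succ, mul_comm]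

lemma partFn_eq_erase_add (hr : 0 ≤ r) (q : ℝ) {u : X} (hu : u ∈ S) :
    partFn r q S = partFn r q (S.erase u) + q * partFn r q (S \ cball r u) := by
  have hcodes : codes r (S.erase u) = {C ∈ codes r S | u ∉ C} := by
    ext C
    simp only [mem_codes, mem_filter, subset_erase]
    tauto
  rw [← sum_codes_filter_mem hr q hu, partFn, partFn, hcodes, add_comm,
    sum_filter_add_sum_filter_not]

lemma partFn_le_one_add_mul_erase (hr : 0 ≤ r) (hq : 0 ≤ q) (S : Finset X) (u : X) :
    partFn r q S ≤ (1 + q) * partFn r q (S.erase u) := by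
  by_cases hu : u ∈ S
  · have hsub : S \ cball r u ⊆ S.erase u := by
      intro w hw
      rw [mem_sdiff] at hw
      exact mem_erase.2 ⟨fun h => hw.2 (h ▸ self_mem_cball hr w), hw.1⟩
    rw [partFn_eq_erase_add hr q hu]
    nlinarith [partFn_mono (r := r) hq hsub]
  · rw [erase_eq_of_notMem hu]
    nlinarith [partFn_pos (r := r) hq S]

lemma partFn_le_pow_mul_sdiff (hr : 0 ≤ r) (hq : 0 ≤ q) (S T : Finset X) :
    partFn r q S ≤ (1 + q) ^ #T * partFn r q (S \ T) := by
  induction T using Finset.induction_on with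
  | empty => simp
  | @insert a T ha ih =>
    calc partFn r q S ≤ (1 + q) ^ #T * partFn r q (S \ T) := ih
      _ ≤ (1 + q) ^ #T * ((1 + q) * partFn r q ((S \ T).erase a)) := by
        gcongr
        exact partFn_le_one_add_mul_erase hr hq _ a
      _ = (1 + q) ^ #(insert a T) * partFn r q (S \ insert a T) := by
        rw [card_insert_of_notMem ha, sdiff_insert, pow_succ, mul_assoc]

lemma partFn_le_exp_mul_sdiff (hr : 0 ≤ r) (hq : 0 ≤ q) {g : ℝ}
    (hT : (#(S ∩ T) : ℝ) ≤ g) :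
    partFn r q S ≤ exp (q * g) * partFn r q (S \ T) := by
  calc partFn r q S ≤ (1 + q) ^ #(S ∩ T) * partFn r q (S \ (S ∩ T)) :=
        partFn_le_pow_mul_sdiff hr hq S (S ∩ T)
    _ ≤ exp (q * g) * partFn r q (S \ T) := by
        rw [sdiff_inter_self_left]
        gcongr
        · exact (partFn_pos hq _).le
        calc (1 + q) ^ #(S ∩ T) ≤ exp q ^ #(S ∩ T) := by
              gcongr
              linarith [add_one_le_exp q]
          _ = exp (q * #(S ∩ T)) := by rw [← exp_nat_mul, mul_comm]
          _ ≤ exp (q * g) := by gcongr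

lemma partFn_le_exp_mul_card (hr : 0 ≤ r) (hq : 0 ≤ q) (S : Finset X) :
    partFn r q S ≤ exp (q * #S) := by
  simpa using partFn_le_exp_mul_sdiff (T := S) hr hq (S := S) (by simp)

noncomputable def uncovered (r : ℝ) (v : X) (J : Finset X) : Finset X :=
  {u ∈ cball r v | ∀ w ∈ J, r < dist u w}

lemma uncovered_subset (v : X) (J : Finset X) : uncovered r v J ⊆ cball r v := filter_subset _ _

lemma sum_codes_univ_eq_sum_uncovered {M : Type*} [AddCommMonoid M] (v : X)
    (φ : Finset X → M) :
    ∑ C ∈ codes r univ, φ C =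
      ∑ J ∈ codes r (univ \ cball r v), ∑ D ∈ codes r (uncovered r v J), φ (J ∪ D) := by
  rw [sum_sigma']
  refine (sum_bij' (fun p _ => p.1 ∪ p.2) (fun C _ => ⟨C \ cball r v, C ∩ cball r v⟩)
    ?_ ?_ ?_ ?_ fun _ _ => rfl).symm
  · rintro ⟨J, D⟩ hp
    simp only [mem_sigma, mem_codes, uncovered, subset_iff, mem_filter] at hp ⊢
    exact ⟨fun _ _ => mem_univ _, isCode_union hp.1.2 hp.2.2
      fun c hc d hd => by rw [dist_comm]; exact (hp.2.1 hd).2 c hc⟩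
  · intro C hC
    simp only [mem_sigma, mem_codes, uncovered, subset_iff, mem_filter, mem_sdiff, mem_inter,
      mem_univ, true_and] at hC ⊢
    refine ⟨⟨fun w hw => hw.2, hC.2.mono sdiff_subset⟩,
      fun u hu => ⟨hu.2, fun w hw => hC.2 hu.1 hw.1 ?_⟩, hC.2.mono inter_subset_left⟩
    rintro rfl
    exact hw.2 hu.2
  · rintro ⟨J, D⟩ hp
    simp only [mem_sigma, mem_codes, uncovered, subset_iff, mem_filter, mem_sdiff,
      mem_univ, true_and] at hp
    have hJ : (J ∪ D) \ cball r v = J := by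
      ext w
      have := @hp.1.1 w
      have := @hp.2.1 w
      simp only [mem_sdiff, mem_union]
      tauto
    have hD : (J ∪ D) ∩ cball r v = D := by
      ext w
      have := @hp.1.1 w
      have := @hp.2.1 w
      simp only [mem_inter, mem_union]
      tauto
    simp [hJ, hD]
  · intro C _
    exact sdiff_union_inter C (cball r v)

lemma disjoint_of_mem_codes_uncovered {v : X} {J D : Finset X}
    (hJ : J ∈ codes r (univ \ cball r v)) (hD : D ∈ codes r (uncovered r v J)) : Disjoint J D :=
  disjoint_left.2 fun _ hwJ hwD =>
    (mem_sdiff.1 ((mem_codes.1 hJ).1 hwJ)).2 (uncovered_subset v J ((mem_codes.1 hD).1 hwD))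

lemma partFn_univ_eq_sum_uncovered (q : ℝ) (v : X) :
    partFn r q (univ : Finset X) =
      ∑ J ∈ codes r (univ \ cball r v), q ^ #J * partFn r q (uncovered r v J) := by
  rw [partFn, sum_codes_univ_eq_sum_uncovered v]
  refine sum_congr rfl fun J hJ => ?_
  rw [partFn, mul_sum]
  refine sum_congr rfl fun D hD => ?_
  rw [card_union_of_disjoint (disjoint_of_mem_codes_uncovered hJ hD), pow_add]

lemma mul_partFn_compl_cball_eq_sum_uncovered (hr : 0 ≤ r) (q : ℝ) {u v : X}
    (hu : u ∈ cball r v) :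
    q * partFn r q (univ \ cball r u) =
      ∑ J ∈ codes r (univ \ cball r v), q ^ #J *
        if u ∈ uncovered r v J then q * partFn r q (uncovered r v J \ cball r u) else 0 := by
  rw [← sum_codes_filter_mem hr q (mem_univ u), sum_filter, sum_codes_univ_eq_sum_uncovered v]
  refine sum_congr rfl fun J hJ => ?_
  have huJ : u ∉ J := fun h => (mem_sdiff.1 ((mem_codes.1 hJ).1 h)).2 hu
  split_ifs with huF
  · rw [← sum_codes_filter_mem hr q huF, sum_filter, mul_sum]
    refine sum_congr rfl fun D hD => ?_
    simp only [mem_union, huJ, false_or, mul_ite, mul_zero,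
      card_union_of_disjoint (disjoint_of_mem_codes_uncovered hJ hD), pow_add]
  · refine (sum_eq_zero fun D hD => ?_).trans (mul_zero _).symm
    have huD : u ∉ D := fun h => huF ((mem_codes.1 hD).1 h)
    simp [huJ, huD]

noncomputable def meanCodeSize (r q : ℝ) (X : Type*) [MetricSpace X] [Fintype X] : ℝ :=
  (∑ C ∈ codes r (univ : Finset X), q ^ #C * #C) / partFn r q (univ : Finset X)

lemma meanCodeSize_mul_partFn (hr : 0 ≤ r) (hq : 0 ≤ q) :
    meanCodeSize r q X * partFn r q (univ : Finset X) =
      ∑ u : X, q * partFn r q (univ \ cball r u) := by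
  rw [meanCodeSize, div_mul_cancel₀ _ (partFn_pos hq _).ne']
  simp_rw [← sum_codes_filter_mem hr q (mem_univ _), sum_filter]
  rw [sum_comm]
  refine sum_congr rfl fun C _ => ?_
  rw [sum_ite_mem, univ_inter, sum_const, nsmul_eq_mul, mul_comm]

noncomputable def annulus (r t : ℝ) (v : X) : Finset X := {u ∈ cball r v | r - t < dist u v}

lemma sum_sum_cball_eq (r : ℝ) (f : X → ℝ) :
    ∑ v : X, ∑ u ∈ cball r v, f u = ∑ u : X, #(cball r u) * f u := by
  simp_rw [cball, sum_filter]
  rw [sum_comm]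
  refine sum_congr rfl fun u _ => ?_
  simp_rw [dist_comm u, ← sum_filter, sum_const, nsmul_eq_mul]

/-- If `F ⊆ cball r v`, then all but at most `g` points of `F` lie in the annulus, and removing
the `cball r u` of an annulus point `u` costs at most a factor `exp (q * g)`. -/
lemma mul_partFn_mul_card_sub_le (hr : 0 ≤ r) (hq : 0 ≤ q) {t g : ℝ} {v : X} {F : Finset X}
    (hF : F ⊆ cball r v) (hthin : (#(cball (r - t) v) : ℝ) ≤ g)
    (hinter : ∀ u : X, r - t < dist u v → dist u v ≤ r →
      (#(cball r u ∩ cball r v) : ℝ) ≤ g) :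
    q * partFn r q F * (#F - g) ≤
      exp (q * g) * ∑ u ∈ annulus r t v,
        if u ∈ F then q * partFn r q (F \ cball r u) else 0 := by
  have hcard : (#F : ℝ) - g ≤ #(F ∩ annulus r t v) := by
    have hsub : F \ annulus r t v ⊆ cball (r - t) v := fun u hu => by
      simp only [mem_sdiff, annulus, mem_filter, not_and, not_lt] at hu
      simpa using hu.2 (hF hu.1)
    have hsplit : (#(F \ annulus r t v) : ℝ) + #(F ∩ annulus r t v) = #F := by
      exact_mod_cast card_sdiff_add_card_inter F (annulus r t v)
    have : (#(F \ annulus r t v) : ℝ) ≤ #(cball (r - t) v) := by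
      exact_mod_cast card_le_card hsub
    linarith
  have hremove : ∀ u ∈ F ∩ annulus r t v,
      q * partFn r q F ≤ exp (q * g) * (q * partFn r q (F \ cball r u)) := by
    intro u hu
    simp only [mem_inter, annulus, mem_filter, mem_cball] at hu
    have hFu : (#(F ∩ cball r u) : ℝ) ≤ g := by
      refine le_trans ?_ (hinter u hu.2.2 hu.2.1)
      exact_mod_cast card_le_card fun w hw => by
        rw [mem_inter] at hw ⊢
        exact ⟨hw.2, hF hw.1⟩
    rw [mul_left_comm]
    exact mul_le_mul_of_nonneg_left (partFn_le_exp_mul_sdiff hr hq hFu) hq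
  calc q * partFn r q F * (#F - g) ≤ q * partFn r q F * #(F ∩ annulus r t v) := by
        gcongr
        exact mul_nonneg hq (partFn_pos hq F).le
    _ = ∑ u ∈ F ∩ annulus r t v, q * partFn r q F := by rw [sum_const, nsmul_eq_mul, mul_comm]
    _ ≤ ∑ u ∈ F ∩ annulus r t v, exp (q * g) * (q * partFn r q (F \ cball r u)) :=
        sum_le_sum hremove
    _ = _ := by rw [sum_ite_mem, inter_comm, mul_sum]

/-- `partFn r q univ` times the hard-core expectation of the number of points of `cball r v`
left uncovered by the part of the code outside `cball r v`. -/
noncomputable def uncoveredMoment (r q : ℝ) (v : X) : ℝ :=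
  ∑ J ∈ codes r (univ \ cball r v), q ^ #J * partFn r q (uncovered r v J) * #(uncovered r v J)

lemma mul_uncoveredMoment_sub_le (hr : 0 ≤ r) (hq : 0 ≤ q) {t g : ℝ} (v : X)
    (hthin : (#(cball (r - t) v) : ℝ) ≤ g)
    (hinter : ∀ u : X, r - t < dist u v → dist u v ≤ r →
      (#(cball r u ∩ cball r v) : ℝ) ≤ g) :
    q * (uncoveredMoment r q v - g * partFn r q (univ : Finset X)) ≤
      exp (q * g) * ∑ u ∈ annulus r t v, q * partFn r q (univ \ cball r u) := by
  calc q * (uncoveredMoment r q v - g * partFn r q (univ : Finset X))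
      = ∑ J ∈ codes r (univ \ cball r v), q ^ #J *
          (q * partFn r q (uncovered r v J) * (#(uncovered r v J) - g)) := by
        rw [partFn_univ_eq_sum_uncovered q v, uncoveredMoment, mul_sum, ← sum_sub_distrib,
          mul_sum]
        exact sum_congr rfl fun J _ => by ring
    _ ≤ ∑ J ∈ codes r (univ \ cball r v), q ^ #J * (exp (q * g) * ∑ u ∈ annulus r t v,
          if u ∈ uncovered r v J then q * partFn r q (uncovered r v J \ cball r u) else 0) :=
        sum_le_sum fun J _ => mul_le_mul_of_nonneg_left
          (mul_partFn_mul_card_sub_le hr hq (uncovered_subset v J) hthin hinter) (pow_nonneg hq _)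
    _ = exp (q * g) * ∑ u ∈ annulus r t v, ∑ J ∈ codes r (univ \ cball r v), q ^ #J *
          if u ∈ uncovered r v J then q * partFn r q (uncovered r v J \ cball r u) else 0 := by
        simp_rw [mul_sum]
        rw [sum_comm]
        exact sum_congr rfl fun _ _ => sum_congr rfl fun _ _ => by ring
    _ = _ := by
        refine congrArg _ (sum_congr rfl fun u hu => ?_)
        exact (mul_partFn_compl_cball_eq_sum_uncovered hr q (filter_subset _ _ hu)).symm

lemma sum_sum_annulus_le (hr : 0 ≤ r) (hq : 0 ≤ q) (t : ℝ) {Δ : ℝ}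
    (hball : ∀ v : X, (#(cball r v) : ℝ) = Δ) :
    ∑ v : X, ∑ u ∈ annulus r t v, q * partFn r q (univ \ cball r u) ≤
      Δ * (meanCodeSize r q X * partFn r q (univ : Finset X)) := by
  have hnonneg : ∀ u : X, 0 ≤ q * partFn r q (univ \ cball r u) :=
    fun u => mul_nonneg hq (partFn_pos hq _).le
  calc ∑ v : X, ∑ u ∈ annulus r t v, q * partFn r q (univ \ cball r u)
      ≤ ∑ v : X, ∑ u ∈ cball r v, q * partFn r q (univ \ cball r u) :=
        sum_le_sum fun v _ => sum_le_sum_of_subset_of_nonneg (filter_subset _ _)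
          fun u _ _ => hnonneg u
    _ = Δ * (meanCodeSize r q X * partFn r q (univ : Finset X)) := by
        rw [sum_sum_cball_eq, meanCodeSize_mul_partFn hr hq, mul_sum]
        simp_rw [hball]

lemma mul_sum_uncoveredMoment_le (hr : 0 ≤ r) (hq : 0 ≤ q) {t g Δ : ℝ}
    (hball : ∀ v : X, (#(cball r v) : ℝ) = Δ)
    (hthin : ∀ v : X, (#(cball (r - t) v) : ℝ) ≤ g)
    (hinter : ∀ u v : X, r - t < dist u v → dist u v ≤ r →
      (#(cball r u ∩ cball r v) : ℝ) ≤ g) :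
    q * ∑ v : X, uncoveredMoment r q v ≤
      q * (Fintype.card X * g * partFn r q (univ : Finset X)) +
        exp (q * g) * (Δ * (meanCodeSize r q X * partFn r q (univ : Finset X))) := by
  have hsum : ∑ v : X, q * (uncoveredMoment r q v - g * partFn r q (univ : Finset X)) ≤
      exp (q * g) * ∑ v : X, ∑ u ∈ annulus r t v, q * partFn r q (univ \ cball r u) := by
    rw [mul_sum]
    exact sum_le_sum fun v _ => mul_uncoveredMoment_sub_le hr hq v (hthin v) fun u => hinter u v
  rw [← mul_sum, sum_sub_distrib, sum_const, card_univ, nsmul_eq_mul] at hsum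
  nlinarith [mul_le_mul_of_nonneg_left (sum_sum_annulus_le (q := q) hr hq t hball)
    (exp_pos (q * g)).le]

lemma partFn_mul_exp_neg_le (hr : 0 ≤ r) (hq : 0 ≤ q) (v : X) :
    partFn r q (univ : Finset X) *
        exp (-(q * uncoveredMoment r q v) / partFn r q (univ : Finset X)) ≤
      partFn r q (univ \ cball r v) := by
  have hZ := partFn_univ_eq_sum_uncovered (r := r) q v
  have h := sum_mul_exp_div_le_sum_mul_exp (codes r (univ \ cball r v))
    (w := fun J => q ^ #J * partFn r q (uncovered r v J))
    (a := fun J => -(q * #(uncovered r v J)))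
    (fun J _ => mul_nonneg (pow_nonneg hq _) (partFn_pos hq _).le) (hZ ▸ partFn_pos hq _)
  rw [← hZ] at h
  calc partFn r q (univ : Finset X) *
        exp (-(q * uncoveredMoment r q v) / partFn r q (univ : Finset X))
      = partFn r q (univ : Finset X) * exp ((∑ J ∈ codes r (univ \ cball r v),
          q ^ #J * partFn r q (uncovered r v J) * -(q * #(uncovered r v J))) /
            partFn r q (univ : Finset X)) := by
        rw [uncoveredMoment, mul_sum, ← sum_neg_distrib]
        congr 3
        exact sum_congr rfl fun J _ => by ring
    _ ≤ _ := h
    _ ≤ ∑ J ∈ codes r (univ \ cball r v), q ^ #J := by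
        refine sum_le_sum fun J _ => ?_
        calc q ^ #J * partFn r q (uncovered r v J) * exp (-(q * #(uncovered r v J)))
            ≤ q ^ #J * exp (q * #(uncovered r v J)) * exp (-(q * #(uncovered r v J))) := by
              gcongr
              exact partFn_le_exp_mul_card hr hq _
          _ = q ^ #J := by rw [mul_assoc, ← exp_add, add_neg_cancel, exp_zero, mul_one]

lemma mul_card_mul_exp_neg_le [Nonempty X] (hr : 0 ≤ r) (hq : 0 ≤ q) :
    q * Fintype.card X * exp (-(q * ∑ v : X, uncoveredMoment r q v) /
      (Fintype.card X * partFn r q (univ : Finset X))) ≤ meanCodeSize r q X := by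
  set Z := partFn r q (univ : Finset X)
  have hZ : 0 < Z := partFn_pos hq _
  have h := sum_mul_exp_div_le_sum_mul_exp univ (w := fun _ : X => Z)
    (a := fun v => -(q * uncoveredMoment r q v) / Z) (fun _ _ => hZ.le)
    (by simpa using mul_pos (Nat.cast_pos.2 Fintype.card_pos) hZ)
  have hnum : ∑ v : X, Z * (-(q * uncoveredMoment r q v) / Z) =
      -(q * ∑ v : X, uncoveredMoment r q v) := by
    rw [mul_sum, ← sum_neg_distrib]
    exact sum_congr rfl fun v _ => by field_simp
  rw [hnum, sum_const, card_univ, nsmul_eq_mul] at h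
  have hocc : q * (Fintype.card X * Z * exp (-(q * ∑ v : X, uncoveredMoment r q v) /
      (Fintype.card X * Z))) ≤ meanCodeSize r q X * Z := by
    rw [meanCodeSize_mul_partFn hr hq, ← mul_sum]
    exact mul_le_mul_of_nonneg_left
      (h.trans (sum_le_sum fun v _ => partFn_mul_exp_neg_le hr hq v)) hq
  exact le_of_mul_le_mul_right (by linarith) hZ

lemma mul_exp_le_normalized_meanCodeSize [Nonempty X] (hr : 0 ≤ r) (hq : 0 ≤ q) {t g Δ : ℝ}
    (hball : ∀ v : X, (#(cball r v) : ℝ) = Δ)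
    (hthin : ∀ v : X, (#(cball (r - t) v) : ℝ) ≤ g)
    (hinter : ∀ u v : X, r - t < dist u v → dist u v ≤ r →
      (#(cball r u ∩ cball r v) : ℝ) ≤ g) :
    q * Δ * exp (-(q * g) - exp (q * g) * (Δ * meanCodeSize r q X / Fintype.card X)) ≤
      Δ * meanCodeSize r q X / Fintype.card X := by
  set Z := partFn r q (univ : Finset X)
  set n : ℝ := (Fintype.card X : ℝ)
  have hn : 0 < n := Nat.cast_pos.2 Fintype.card_pos
  have hZ : 0 < Z := partFn_pos hq _
  have hΔ : 0 ≤ Δ := hball (Classical.arbitrary X) ▸ Nat.cast_nonneg _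
  have hY := mul_sum_uncoveredMoment_le hr hq hball hthin hinter
  have hexp : -(q * g) - exp (q * g) * (Δ * meanCodeSize r q X / n) ≤
      -(q * ∑ v : X, uncoveredMoment r q v) / (n * Z) := by
    rw [le_div_iff₀ (mul_pos hn hZ)]
    field_simp
    linarith
  calc q * Δ * exp (-(q * g) - exp (q * g) * (Δ * meanCodeSize r q X / n))
      ≤ q * Δ * exp (-(q * ∑ v : X, uncoveredMoment r q v) / (n * Z)) := by gcongr
    _ = Δ / n * (q * n * exp (-(q * ∑ v : X, uncoveredMoment r q v) / (n * Z))) := by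
        field_simp
    _ ≤ Δ / n * meanCodeSize r q X := by
        gcongr
        exact mul_card_mul_exp_neg_le hr hq
    _ = Δ * meanCodeSize r q X / n := by ring

lemma card_cball_eq_ncard (s : ℝ) (v : X) : #(cball s v) = {x | dist x v ≤ s}.ncard := by
  rw [← Set.ncard_coe_finset]
  congr
  ext
  simp

lemma card_cball_inter_cball_eq_ncard (u v : X) :
    #(cball r u ∩ cball r v) = {x | dist x u ≤ r ∧ dist x v ≤ r}.ncard := by
  rw [← Set.ncard_coe_finset]
  congr
  ext
  simp

lemma exists_isCode_meanCodeSize_le (hq : 0 ≤ q) :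
    ∃ C : Finset X, IsCode r C ∧ meanCodeSize r q X ≤ #C := by
  obtain ⟨C, hC, hmax⟩ := exists_max_image (codes r (univ : Finset X)) (fun C => #C)
    ⟨∅, by simp⟩
  refine ⟨C, (mem_codes.1 hC).2, ?_⟩
  rw [meanCodeSize, div_le_iff₀ (partFn_pos hq _), partFn, mul_sum]
  refine sum_le_sum fun D hD => ?_
  rw [mul_comm]
  exact mul_le_mul_of_nonneg_right (by exact_mod_cast hmax D hD) (pow_nonneg hq _)

lemma partFn_one_univ : partFn r 1 (univ : Finset X) = Nat.card {C : Finset X // IsCode r C} := by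
  rw [partFn, Nat.card_eq_fintype_card, Fintype.card_subtype]
  simp [codes]

lemma one_le_card_codes : (1 : ℝ) ≤ Nat.card {C : Finset X // IsCode r C} :=
  partFn_one_univ (X := X) (r := r) ▸ one_le_partFn zero_le_one _

lemma exp_meanCodeSize_mul_log_le (hq : 0 < q) :
    exp (meanCodeSize r q X * log q⁻¹) ≤ Nat.card {C : Finset X // IsCode r C} := by
  set Z := partFn r q (univ : Finset X)
  have h := sum_mul_exp_div_le_sum_mul_exp (codes r (univ : Finset X)) (w := fun C => q ^ #C)
    (a := fun C => #C * log q⁻¹) (fun C _ => pow_nonneg hq.le _) (partFn_pos hq.le _)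
  have hweights : ∀ C : Finset X, q ^ #C * exp (#C * log q⁻¹) = 1 := fun C => by
    rw [exp_nat_mul, exp_log (inv_pos.2 hq), ← mul_pow, mul_inv_cancel₀ hq.ne', one_pow]
  have hmean : (∑ C ∈ codes r (univ : Finset X), q ^ #C * (#C * log q⁻¹)) / Z =
      meanCodeSize r q X * log q⁻¹ := by
    rw [meanCodeSize, div_mul_eq_mul_div, sum_mul]
    exact congrArg (· / Z) (sum_congr rfl fun C _ => by ring)
  rw [sum_congr rfl fun C _ => hweights C, ← partFn] at h
  rw [hmean] at h
  calc exp (meanCodeSize r q X * log q⁻¹) ≤ Z * exp (meanCodeSize r q X * log q⁻¹) :=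
        le_mul_of_one_le_left (exp_pos _).le (one_le_partFn hq.le _)
    _ ≤ ∑ C ∈ codes r (univ : Finset X), (1 : ℝ) := h
    _ = Nat.card {C : Finset X // IsCode r C} := by
        rw [← partFn_one_univ, partFn]
        simp

lemma exists_isCode_card_ge [Nonempty X] (hr : 0 ≤ r) {δ K t Δ : ℝ} (hδ : 0 < δ)
    (hball : ∀ v : X, (#(cball r v) : ℝ) = Δ)
    (hthin : ∀ v : X, (#(cball (r - t) v) : ℝ) ≤ exp (-K) * Δ)
    (hinter : ∀ u v : X, r - t < dist u v → dist u v ≤ r →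
      (#(cball r u ∩ cball r v) : ℝ) ≤ exp (-K) * Δ)
    (hK : (1 - δ) * K < δ * exp K * exp (-δ - exp δ * ((1 - δ) * K))) :
    ∃ C : Finset X, IsCode r C ∧ (1 - δ) * K * Fintype.card X / Δ ≤ #C := by
  obtain ⟨v⟩ := ‹Nonempty X›
  have hn : (0 : ℝ) < Fintype.card X := Nat.cast_pos.2 Fintype.card_pos
  have hΔ : 0 < Δ := hball v ▸ Nat.cast_pos.2 (card_pos.2 ⟨v, self_mem_cball hr v⟩)
  set q := δ * exp K / Δ
  have hq : 0 ≤ q := by positivity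
  have hqΔ : q * Δ = δ * exp K := div_mul_cancel₀ _ hΔ.ne'
  have hqg : q * (exp (-K) * Δ) = δ := by
    rw [mul_left_comm, hqΔ, mul_left_comm, ← exp_add, neg_add_cancel, exp_zero, mul_one]
  have hcore := mul_exp_le_normalized_meanCodeSize hr hq hball hthin hinter
  rw [hqΔ, hqg] at hcore
  have hx := le_of_mul_exp_neg_le (by positivity) (exp_pos δ).le hcore hK
  obtain ⟨C, hC, hm⟩ := exists_isCode_meanCodeSize_le (r := r) (X := X) hq
  refine ⟨C, hC, le_trans ?_ hm⟩
  rw [le_div_iff₀ hn] at hx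
  rw [div_le_iff₀ hΔ]
  linarith

lemma exp_le_card_codes [Nonempty X] (hr : 0 ≤ r) {K t Δ : ℝ} (htr : t ≤ r) (hK0 : 0 ≤ K)
    (hball : ∀ v : X, (#(cball r v) : ℝ) = Δ)
    (hthin : ∀ v : X, (#(cball (r - t) v) : ℝ) ≤ exp (-K) * Δ)
    (hinter : ∀ u v : X, r - t < dist u v → dist u v ≤ r →
      (#(cball r u ∩ cball r v) : ℝ) ≤ exp (-K) * Δ)
    (hK : K / 4 < exp (K / 2) * exp (-exp (-(K / 2)) - exp (exp (-(K / 2))) * (K / 4))) :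
    exp (1 / 8 * K ^ 2 * Fintype.card X / Δ) ≤ Nat.card {C : Finset X // IsCode r C} := by
  obtain ⟨v⟩ := ‹Nonempty X›
  have hn : (0 : ℝ) < Fintype.card X := Nat.cast_pos.2 Fintype.card_pos
  have hΔK : exp K ≤ Δ := by
    have h1 : (1 : ℝ) ≤ #(cball (r - t) v) :=
      Nat.one_le_cast.2 (card_pos.2 ⟨v, self_mem_cball (by linarith) v⟩)
    have h2 := h1.trans (hthin v)
    rwa [exp_neg, ← div_eq_inv_mul, one_le_div (exp_pos K)] at h2
  have hΔ : 0 < Δ := (exp_pos K).trans_le hΔK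
  set q := exp (K / 2) / Δ
  have hq : 0 < q := by positivity
  have hqΔ : q * Δ = exp (K / 2) := div_mul_cancel₀ _ hΔ.ne'
  have hqg : q * (exp (-K) * Δ) = exp (-(K / 2)) := by
    rw [mul_left_comm, hqΔ, ← exp_add]
    ring_nf
  have hcore := mul_exp_le_normalized_meanCodeSize hr hq.le hball hthin hinter
  rw [hqΔ, hqg] at hcore
  have hx := le_of_mul_exp_neg_le (exp_pos _).le (exp_pos _).le hcore hK
  have hm : K * Fintype.card X / (4 * Δ) ≤ meanCodeSize r q X := by
    rw [le_div_iff₀ hn] at hx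
    rw [div_le_iff₀ (by positivity)]
    linarith
  have hlog : K / 2 ≤ log q⁻¹ := by
    rw [inv_div, log_div hΔ.ne' (exp_pos _).ne', log_exp, le_sub_iff_add_le, add_halves]
    exact (le_log_iff_exp_le hΔ).2 hΔK
  calc exp (1 / 8 * K ^ 2 * Fintype.card X / Δ)
      = exp (K * Fintype.card X / (4 * Δ) * (K / 2)) := by ring_nf
    _ ≤ exp (meanCodeSize r q X * log q⁻¹) := by
        gcongr
        exact (div_nonneg (mul_nonneg hK0 hn.le) (by positivity)).trans hm
    _ ≤ _ := exp_meanCodeSize_mul_log_le hq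

end Ball

section Asymptotics

open Filter Topology

lemma eventually_mul_lt_exp (a : ℝ) {c : ℝ} (hc : 0 < c) (d : ℝ) :
    ∀ᶠ K in atTop, a * K < exp (c * K + d) := by
  have h := (isLittleO_pow_exp_pos_mul_atTop 1 hc).bound (c := exp d / (|a| + 1)) (by positivity)
  filter_upwards [h, eventually_ge_atTop 1] with K hK hK1
  rw [pow_one, Real.norm_of_nonneg (by linarith), Real.norm_of_nonneg (exp_pos _).le,
    div_mul_eq_mul_div, le_div_iff₀ (by positivity)] at hK
  calc a * K ≤ |a| * K := by gcongr; exact le_abs_self a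
    _ < K * (|a| + 1) := by linarith
    _ ≤ exp (c * K + d) := by rw [exp_add]; linarith

lemma eventually_code_size_bound {δ : ℝ} (hδ : 0 < δ) :
    ∀ᶠ K in atTop, (1 - δ) * K < δ * exp K * exp (-δ - exp δ * ((1 - δ) * K)) := by
  have hc : 0 < 1 - exp δ * (1 - δ) := by
    have := mul_lt_mul_of_pos_left (one_sub_lt_exp_neg hδ.ne') (exp_pos δ)
    rw [← exp_add, add_neg_cancel, exp_zero] at this
    linarith
  filter_upwards [eventually_mul_lt_exp (1 - δ) hc (log δ - δ)] with K hK
  rwa [show (1 - exp δ * (1 - δ)) * K + (log δ - δ) =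
      log δ + (K + (-δ - exp δ * ((1 - δ) * K))) by ring, exp_add, exp_log hδ, exp_add,
    ← mul_assoc] at hK

lemma eventually_count_bound :
    ∀ᶠ K in atTop,
      K / 4 < exp (K / 2) * exp (-exp (-(K / 2)) - exp (exp (-(K / 2))) * (K / 4)) := by
  have hlim : Tendsto (fun K : ℝ => exp (exp (-(K / 2)))) atTop (𝓝 1) := by
    have := tendsto_exp_neg_atTop_nhds_zero.comp (tendsto_id.atTop_div_const two_pos)
    simpa [Function.comp_def] using (continuous_exp.tendsto 0).comp this
  filter_upwards [hlim.eventually (gt_mem_nhds (by norm_num : (1 : ℝ) < 3 / 2)),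
    eventually_ge_atTop 0, eventually_mul_lt_exp (1 / 4) (by norm_num : (0 : ℝ) < 1 / 8) (-1)]
    with K hexp hK hlt
  have hsmall : exp (-(K / 2)) ≤ 1 := exp_le_one_iff.2 (by linarith)
  rw [← exp_add]
  calc K / 4 = 1 / 4 * K := by ring
    _ < exp (1 / 8 * K + -1) := hlt
    _ ≤ _ := exp_le_exp.2 <| by
        nlinarith [mul_le_mul_of_nonneg_right hexp.le (by linarith : (0 : ℝ) ≤ K / 4)]

end Asymptotics

end MetricCode

open MetricCode Filter

theorem stmt2_general (δ : ℝ) (hδ0 : 0 < δ) :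
    ∃ K₀ > (0 : ℝ), ∀ K : ℝ, K₀ ≤ K →
      ∀ (X : Type) [MetricSpace X] [Fintype X] (r : ℝ), 0 < r →
      ∀ vol : ℝ → ℕ,
      -- (P1) homogeneity: all balls of radius s have the same cardinality vol(s)
      (∀ (s : ℝ) (a : X), {x : X | dist x a ≤ s}.ncard = vol s) →
      ∀ t : ℝ, 0 < t → t < r →
      -- (P2) exponential growth
      ((vol (r - t) : ℝ) ≤ Real.exp (-K) * (vol r : ℝ)) →
      -- (P3) small intersection volume
      (∀ a b : X, r - t < dist a b → dist a b ≤ r →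
        ({x : X | dist x a ≤ r ∧ dist x b ≤ r}.ncard : ℝ) ≤
          Real.exp (-K) * (vol r : ℝ)) →
      (∃ C : Finset X, (∀ c ∈ C, ∀ c' ∈ C, c ≠ c' → r < dist c c') ∧
          (1 - δ) * K * (Fintype.card X : ℝ) / (vol r : ℝ) ≤ (C.card : ℝ)) ∧
        Real.exp ((1 / 8 - δ) * K ^ 2 * (Fintype.card X : ℝ) / (vol r : ℝ)) ≤
          (Nat.card {C : Finset X // ∀ c ∈ C, ∀ c' ∈ C, c ≠ c' → r < dist c c'} : ℝ) := by
  obtain ⟨K₁, hK₁⟩ := eventually_atTop.1 ((eventually_ge_atTop 0).and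
    ((eventually_code_size_bound hδ0).and eventually_count_bound))
  refine ⟨max K₁ 1, by positivity, fun K hK X _ _ r hr vol hP1 t _ htr hP2 hP3 => ?_⟩
  obtain ⟨hK0, hsize, hcount⟩ := hK₁ K (le_of_max_le_left hK)
  rcases isEmpty_or_nonempty X with hX | hX
  · simp only [Fintype.card_eq_zero, Nat.cast_zero, mul_zero, zero_div, Real.exp_zero]
    exact ⟨⟨∅, isCode_empty, by simp⟩, one_le_card_codes⟩
  classical
  have hball : ∀ (s : ℝ) (v : X), (#(cball s v) : ℝ) = vol s := fun s v => by
    rw [card_cball_eq_ncard, hP1]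
  have hthin : ∀ v : X, (#(cball (r - t) v) : ℝ) ≤ Real.exp (-K) * vol r :=
    fun v => (hball (r - t) v).trans_le hP2
  have hinter : ∀ u v : X, r - t < dist u v → dist u v ≤ r →
      (#(cball r u ∩ cball r v) : ℝ) ≤ Real.exp (-K) * vol r := fun u v h₁ h₂ => by
    rw [card_cball_inter_cball_eq_ncard]
    exact hP3 u v h₁ h₂
  refine ⟨exists_isCode_card_ge hr.le hδ0 (hball r) hthin hinter hsize, ?_⟩
  refine le_trans (Real.exp_le_exp.2 ?_)
    (exp_le_card_codes hr.le htr.le hK0 (hball r) hthin hinter hcount)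
  gcongr
  linarith

/-- Improvement on the sphere-covering bound: in a homogeneous finite metric space
with exponential growth and small intersection of balls, there is a large code,
and the number of codes is large. -/
theorem stmt2 (δ : ℝ) (hδ0 : 0 < δ) (hδ : δ < 1 / 8) :
    ∃ K₀ > (0 : ℝ), ∀ K : ℝ, K₀ ≤ K →
      ∀ (X : Type) [MetricSpace X] [Fintype X] (r : ℝ), 0 < r →
      ∀ vol : ℝ → ℕ,
      -- (P1) homogeneity: all balls of radius s have the same cardinality vol(s)
      (∀ (s : ℝ) (a : X), {x : X | dist x a ≤ s}.ncard = vol s) →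
      ∀ t : ℝ, 0 < t → t < r →
      -- (P2) exponential growth
      ((vol (r - t) : ℝ) ≤ Real.exp (-K) * (vol r : ℝ)) →
      -- (P3) small intersection volume
      (∀ a b : X, r - t < dist a b → dist a b ≤ r →
        ({x : X | dist x a ≤ r ∧ dist x b ≤ r}.ncard : ℝ) ≤
          Real.exp (-K) * (vol r : ℝ)) →
      (∃ C : Finset X, (∀ c ∈ C, ∀ c' ∈ C, c ≠ c' → r < dist c c') ∧
          (1 - δ) * K * (Fintype.card X : ℝ) / (vol r : ℝ) ≤ (C.card : ℝ)) ∧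
        Real.exp ((1 / 8 - δ) * K ^ 2 * (Fintype.card X : ℝ) / (vol r : ℝ)) ≤
          (Nat.card {C : Finset X // ∀ c ∈ C, ∀ c' ∈ C, c ≠ c' → r < dist c c'} : ℝ) :=
  stmt2_general δ hδ0
end

section
/- Let q ≥ 2 and n ≥ 1 be integers, let 0 ≤ k ≤ n, and let c₁,…,c_n be non-negative reals not all zero. Suppose f : {0,1,…,q−1}^n → ℝ satisfies the bounded differences condition |f(x) − f(x')| ≤ Σ_{i=1}^{n} c_i·1[x_i ≠ x'_i] for all x, x' ∈ {0,1,…,q−1}^n. Let η be drawn uniformly at random from the set of words in {0,1,…,q−1}^n with exactly k non-zero coordinates. Then for all t ≥ 0, P(|f(η) − E f(η)| ≥ t) ≤ 2·exp(−t² / (68·Σ_{i=1}^{n} c_i²)). -/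
set_option maxHeartbeats 1000000

open Finset

namespace Stmt6Aux

variable {q : ℕ} [NeZero q]

def wt {n : ℕ} (x : Fin n → Fin q) : ℕ := (Finset.univ.filter fun i => x i ≠ 0).card

def slice (q : ℕ) [NeZero q] (n k : ℕ) : Finset (Fin n → Fin q) :=
  Finset.univ.filter fun x => wt x = k

lemma mem_slice {n k : ℕ} {x : Fin n → Fin q} : x ∈ slice q n k ↔ wt x = k := by
  simp [slice]

lemma wt_eq_sum {n : ℕ} (x : Fin n → Fin q) :
    wt x = ∑ i, if x i ≠ 0 then 1 else 0 := by
  simp [wt, Finset.card_filter]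

lemma wt_cons {n : ℕ} (v : Fin q) (y : Fin n → Fin q) :
    wt (Fin.cons v y) = (if v ≠ 0 then 1 else 0) + wt y := by
  rw [wt_eq_sum, wt_eq_sum, Fin.sum_univ_succ]
  simp

lemma wt_update_zero {n : ℕ} (x : Fin n → Fin q) (j : Fin n) (hj : x j ≠ 0) :
    wt (Function.update x j 0) + 1 = wt x := by
  rw [wt_eq_sum, wt_eq_sum]
  rw [← Finset.sum_erase_add _ _ (Finset.mem_univ j), ← Finset.sum_erase_add _ _ (Finset.mem_univ j)]
  have heq : ∑ i ∈ Finset.univ.erase j, (if Function.update x j 0 i ≠ 0 then (1:ℕ) else 0)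
      = ∑ i ∈ Finset.univ.erase j, (if x i ≠ 0 then (1:ℕ) else 0) :=
    Finset.sum_congr rfl fun i hi => by rw [Function.update_of_ne (Finset.ne_of_mem_erase hi)]
  rw [heq]
  simp [hj]

lemma wt_update_ne {n : ℕ} (y : Fin n → Fin q) (j : Fin n) (v : Fin q)
    (hj : y j = 0) (hv : v ≠ 0) :
    wt (Function.update y j v) = wt y + 1 := by
  rw [wt_eq_sum, wt_eq_sum]
  rw [← Finset.sum_erase_add _ _ (Finset.mem_univ j), ← Finset.sum_erase_add _ _ (Finset.mem_univ j)]
  have heq : ∑ i ∈ Finset.univ.erase j, (if Function.update y j v i ≠ 0 then (1:ℕ) else 0)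
      = ∑ i ∈ Finset.univ.erase j, (if y i ≠ 0 then (1:ℕ) else 0) :=
    Finset.sum_congr rfl fun i hi => by rw [Function.update_of_ne (Finset.ne_of_mem_erase hi)]
  rw [heq]
  simp [hj, hv]

lemma wt_le {n : ℕ} (x : Fin n → Fin q) : wt x ≤ n := by
  simpa [wt] using (Finset.card_filter_le Finset.univ fun i => x i ≠ 0)

lemma one_ne_zero' (hq : 2 ≤ q) : (1 : Fin q) ≠ 0 := by
  intro h
  have := congrArg Fin.val h
  simp [Fin.val_one' q, Nat.mod_eq_of_lt (by omega : 1 < q)] at this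

lemma slice_nonempty (hq : 2 ≤ q) {n k : ℕ} (hk : k ≤ n) : (slice q n k).Nonempty := by
  have h1 := one_ne_zero' hq
  refine ⟨fun i => if (i : ℕ) < k then 1 else 0, ?_⟩
  rw [mem_slice, wt_eq_sum]
  have h2 : ∀ i : Fin n, (if (fun i : Fin n => if (i : ℕ) < k then (1 : Fin q) else 0) i ≠ 0 then (1:ℕ) else 0)
      = if (i : ℕ) ∈ Finset.range k then 1 else 0 := by
    intro i
    by_cases h : (i : ℕ) < k <;> simp [h, h1, Finset.mem_range]
  rw [Finset.sum_congr rfl fun i _ => h2 i,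
    Fin.sum_univ_eq_sum_range (fun j => if j ∈ Finset.range k then (1:ℕ) else 0),
    Finset.sum_ite_mem, Finset.inter_eq_right.mpr (Finset.range_subset_range.mpr hk)]
  simp

lemma slice_empty {n k : ℕ} (hk : n < k) : slice q n k = ∅ := by
  rw [Finset.eq_empty_iff_forall_notMem]
  intro x hx
  rw [mem_slice] at hx
  have := wt_le x
  omega


lemma sum_pi_succ {n : ℕ} (F : (Fin (n+1) → Fin q) → ℝ) :
    ∑ x, F x = ∑ v : Fin q, ∑ y : Fin n → Fin q, F (Fin.cons v y) := by
  calc ∑ x, F x = ∑ p : Fin q × (Fin n → Fin q), F (Fin.cons p.1 p.2) :=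
        (Fintype.sum_equiv (Fin.consEquiv (fun _ => Fin q)) _ _ (fun p => rfl)).symm
    _ = ∑ v : Fin q, ∑ y : Fin n → Fin q, F (Fin.cons v y) := Fintype.sum_prod_type (f := fun p => F (Fin.cons p.1 p.2))

lemma sum_slice_zero {n : ℕ} (h : (Fin (n+1) → Fin q) → ℝ) :
    ∑ x ∈ slice q (n+1) 0, h x = ∑ y ∈ slice q n 0, h (Fin.cons 0 y) := by
  rw [slice, Finset.sum_filter, sum_pi_succ (fun x => if wt x = 0 then h x else 0)]
  rw [Finset.sum_eq_single (0 : Fin q)]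
  · rw [slice, Finset.sum_filter]
    apply Finset.sum_congr rfl
    intro y _
    rw [wt_cons]
    simp
  · intro v _ hv
    apply Finset.sum_eq_zero
    intro y _
    rw [wt_cons]
    simp [hv]
  · simp

lemma sum_slice_succ {n k : ℕ} (hk : 1 ≤ k) (h : (Fin (n+1) → Fin q) → ℝ) :
    ∑ x ∈ slice q (n+1) k, h x
      = ∑ v : Fin q, ∑ y ∈ slice q n (if v = 0 then k else k - 1), h (Fin.cons v y) := by
  rw [slice, Finset.sum_filter, sum_pi_succ (fun x => if wt x = k then h x else 0)]
  apply Finset.sum_congr rfl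
  intro v _
  rw [slice, Finset.sum_filter]
  apply Finset.sum_congr rfl
  intro y _
  rw [wt_cons]
  by_cases hv : v = 0
  · simp only [hv]
    simp
  · simp only [hv, if_neg hv, if_false]
    have : ((if ¬v = 0 then 1 else 0) + wt y = k) ↔ (wt y = k - 1) := by
      simp [hv]; omega
    simp only [ne_eq, this]

lemma card_zeros {n : ℕ} (y : Fin n → Fin q) :
    (Finset.univ.filter fun j => y j = 0).card = n - wt y := by
  have := Finset.card_filter_add_card_filter_not (s := (Finset.univ : Finset (Fin n)))
    (p := fun j => y j = 0)
  simp only [Finset.card_univ, Fintype.card_fin] at this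
  have h2 : (Finset.univ.filter fun j => ¬ y j = 0).card = wt y := rfl
  omega

lemma card_nonzero_vals (hq : 2 ≤ q) :
    (Finset.univ.filter fun v : Fin q => ¬ v = 0).card = q - 1 := by
  rw [Finset.filter_not]
  rw [Finset.card_sdiff_of_subset (Finset.filter_subset _ _)]
  simp [Finset.filter_eq']

lemma coupling {n k : ℕ} (hq : 2 ≤ q) (hk1 : 1 ≤ k) (hkn : k ≤ n)
    (h : (Fin n → Fin q) → ℝ) :
    ∑ x ∈ slice q n k, ∑ j ∈ Finset.univ.filter (fun j => x j ≠ 0), h (Function.update x j 0)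
      = ((n - k + 1 : ℕ) * (q - 1 : ℕ)) * ∑ y ∈ slice q n (k-1), h y := by
  rw [← Finset.sum_sigma (slice q n k) (fun x => Finset.univ.filter (fun j => x j ≠ 0))
    (fun p => h (Function.update p.1 p.2 0))]
  have key : ∑ p ∈ (slice q n k).sigma (fun x => Finset.univ.filter (fun j => x j ≠ 0)),
      h (Function.update p.1 p.2 0)
      = ∑ p ∈ (slice q n (k-1)).sigma (fun y =>
          (Finset.univ.filter fun j => y j = 0) ×ˢ (Finset.univ.filter fun v : Fin q => ¬ v = 0)),
        h p.1 := by
    apply Finset.sum_nbij' (i := fun p => ⟨Function.update p.1 p.2 0, (p.2, p.1 p.2)⟩)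
      (j := fun p => ⟨Function.update p.1 p.2.1 p.2.2, p.2.1⟩)
    · rintro ⟨x, j⟩ hp
      simp only [Finset.mem_sigma, Finset.mem_filter, Finset.mem_univ, true_and, mem_slice] at hp
      obtain ⟨hx, hj⟩ := hp
      simp only [Finset.mem_sigma, Finset.mem_product, Finset.mem_filter, Finset.mem_univ,
        true_and, mem_slice]
      refine ⟨?_, ?_, ?_⟩
      · have := wt_update_zero x j hj
        omega
      · exact Function.update_self _ _ _
      · exact hj
    · rintro ⟨y, jv⟩ hp
      obtain ⟨j, v⟩ := jv
      simp only [Finset.mem_sigma, Finset.mem_product, Finset.mem_filter, Finset.mem_univ,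
        true_and, mem_slice] at hp
      obtain ⟨hy, hj, hv⟩ := hp
      simp only [Finset.mem_sigma, Finset.mem_filter, Finset.mem_univ, true_and, mem_slice]
      constructor
      · rw [wt_update_ne y j v hj hv]
        omega
      · rw [Function.update_self]
        exact hv
    · rintro ⟨x, j⟩ hp
      simp only [Finset.mem_sigma, Finset.mem_filter, Finset.mem_univ, true_and, mem_slice] at hp
      show (⟨Function.update (Function.update x j 0) j (x j), j⟩
          : Σ _ : Fin n → Fin q, Fin n) = ⟨x, j⟩
      have h1 : Function.update (Function.update x j 0) j (x j) = x := by
        rw [Function.update_idem, Function.update_eq_self]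
      rw [h1]
    · rintro ⟨y, jv⟩ hp
      obtain ⟨j, v⟩ := jv
      simp only [Finset.mem_sigma, Finset.mem_product, Finset.mem_filter, Finset.mem_univ,
        true_and, mem_slice] at hp
      show (⟨Function.update (Function.update y j v) j 0, (j, Function.update y j v j)⟩
          : Σ _ : Fin n → Fin q, Fin n × Fin q) = ⟨y, (j, v)⟩
      have h1 : Function.update (Function.update y j v) j 0 = y := by
        rw [Function.update_idem, show (0 : Fin q) = y j from hp.2.1.symm,
          Function.update_eq_self]
      have h2 : Function.update y j v j = v := Function.update_self _ _ _
      rw [h1, h2]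
    · rintro ⟨x, j⟩ _
      rfl
  rw [key, Finset.sum_sigma]
  rw [Finset.mul_sum]
  apply Finset.sum_congr rfl
  intro y hy
  dsimp only
  rw [Finset.sum_const, Finset.card_product, card_zeros, card_nonzero_vals hq]
  rw [mem_slice] at hy
  rw [hy]
  have hnk : n - (k-1) = n - k + 1 := by omega
  rw [hnk]
  push_cast
  ring

/-- crude finite Hoeffding lemma via convexity of exp -/
lemma hoeff {ι : Type*} (s : Finset ι) (w g : ι → ℝ) (hw : ∀ i ∈ s, 0 ≤ w i)
    (r l : ℝ) (hr : 0 ≤ r) (hg : ∀ i ∈ s, |g i| ≤ r)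
    (hmean : ∑ i ∈ s, w i * g i = 0) :
    ∑ i ∈ s, w i * Real.exp (l * g i) ≤ (∑ i ∈ s, w i) * Real.exp (l^2 * r^2 / 2) := by
  rcases eq_or_lt_of_le hr with hr0 | hr0
  · have hg0 : ∀ i ∈ s, g i = 0 := by
      intro i hi
      have h1 := hg i hi
      rw [← hr0] at h1
      exact abs_eq_zero.mp (le_antisymm h1 (abs_nonneg _))
    calc ∑ i ∈ s, w i * Real.exp (l * g i) = ∑ i ∈ s, w i := by
          apply Finset.sum_congr rfl
          intro i hi
          rw [hg0 i hi]
          simp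
      _ ≤ (∑ i ∈ s, w i) * Real.exp (l^2*r^2/2) := by
          nlinarith [Real.one_le_exp (by positivity : (0:ℝ) ≤ l^2*r^2/2),
            Finset.sum_nonneg hw]
  · have hrne : r ≠ 0 := ne_of_gt hr0
    have key : ∀ i ∈ s, Real.exp (l * g i)
        ≤ Real.cosh (l*r) + (g i / r) * Real.sinh (l*r) := by
      intro i hi
      have h1 := abs_le.mp (hg i hi)
      have ha : 0 ≤ (r - g i) / (2*r) := by
        apply div_nonneg (by linarith) (by linarith)
      have hb : 0 ≤ (r + g i) / (2*r) := by
        apply div_nonneg (by linarith) (by linarith)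
      have hab : (r - g i) / (2*r) + (r + g i) / (2*r) = 1 := by
        field_simp
        ring
      have hcvx := convexOn_exp.2 (Set.mem_univ (-(l*r))) (Set.mem_univ (l*r)) ha hb hab
      simp only [smul_eq_mul] at hcvx
      have harg : (r - g i) / (2*r) * (-(l*r)) + (r + g i) / (2*r) * (l*r) = l * g i := by
        rw [div_mul_eq_mul_div, div_mul_eq_mul_div, ← add_div,
          show (r - g i) * -(l*r) + (r + g i)*(l*r) = (l * g i) * (2*r) by ring,
          mul_div_assoc, div_self (by positivity : (2*r) ≠ 0), mul_one]
      rw [harg] at hcvx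
      calc Real.exp (l * g i)
          ≤ (r - g i) / (2*r) * Real.exp (-(l*r)) + (r + g i) / (2*r) * Real.exp (l*r) :=
            hcvx
        _ = Real.cosh (l*r) + (g i / r) * Real.sinh (l*r) := by
            rw [Real.cosh_eq, Real.sinh_eq]
            field_simp
            ring
    calc ∑ i ∈ s, w i * Real.exp (l * g i)
        ≤ ∑ i ∈ s, (w i * Real.cosh (l*r) + (w i * g i) * (Real.sinh (l*r) / r)) := by
          apply Finset.sum_le_sum
          intro i hi
          calc w i * Real.exp (l * g i)
              ≤ w i * (Real.cosh (l*r) + (g i / r) * Real.sinh (l*r)) :=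
                mul_le_mul_of_nonneg_left (key i hi) (hw i hi)
            _ = w i * Real.cosh (l*r) + (w i * g i) * (Real.sinh (l*r) / r) := by
                field_simp
      _ = (∑ i ∈ s, w i) * Real.cosh (l*r) + (∑ i ∈ s, w i * g i) * (Real.sinh (l*r) / r) := by
          rw [Finset.sum_add_distrib, ← Finset.sum_mul, ← Finset.sum_mul]
      _ = (∑ i ∈ s, w i) * Real.cosh (l*r) := by
          rw [hmean]
          ring
      _ ≤ (∑ i ∈ s, w i) * Real.exp (l^2*r^2/2) := by
          apply mul_le_mul_of_nonneg_left _ (Finset.sum_nonneg hw)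
          rw [show l^2*r^2/2 = (l*r)^2/2 by ring]
          exact Real.cosh_le_exp_half_sq (l*r)

/-- bounded differences property -/
def BD {n : ℕ} (c : Fin n → ℝ) (f : (Fin n → Fin q) → ℝ) : Prop :=
  ∀ x x' : Fin n → Fin q, |f x - f x'| ≤ ∑ i, if x i ≠ x' i then c i else 0

lemma bd_cons {n : ℕ} {c : Fin (n+1) → ℝ} {f : (Fin (n+1) → Fin q) → ℝ}
    (hf : BD c f) (v : Fin q) :
    BD (fun i => c i.succ) (fun y => f (Fin.cons v y)) := by
  intro y y'
  have h1 := hf (Fin.cons v y) (Fin.cons v y')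
  rw [Fin.sum_univ_succ] at h1
  simpa using h1

lemma diff_cons_same {n : ℕ} {c : Fin (n+1) → ℝ} {f : (Fin (n+1) → Fin q) → ℝ}
    (hf : BD c f) (hc : ∀ i, 0 ≤ c i) (v w : Fin q) (y : Fin n → Fin q) :
    |f (Fin.cons v y) - f (Fin.cons w y)| ≤ c 0 := by
  have h1 := hf (Fin.cons v y) (Fin.cons w y)
  rw [Fin.sum_univ_succ] at h1
  simp only [Fin.cons_zero, Fin.cons_succ, ne_eq, not_true, if_false] at h1
  refine h1.trans ?_
  rw [Finset.sum_const, smul_zero, add_zero]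
  by_cases h : v = w <;> simp [h, hc 0]

lemma diff_cross {n : ℕ} {c : Fin (n+1) → ℝ} {f : (Fin (n+1) → Fin q) → ℝ}
    (hf : BD c f) (hc : ∀ i, 0 ≤ c i) (v : Fin q) (x : Fin n → Fin q) (j : Fin n) :
    |f (Fin.cons 0 x) - f (Fin.cons v (Function.update x j 0))| ≤ c 0 + c j.succ := by
  have h1 := hf (Fin.cons 0 x) (Fin.cons v (Function.update x j 0))
  rw [Fin.sum_univ_succ] at h1
  simp only [Fin.cons_zero, Fin.cons_succ] at h1
  refine h1.trans ?_
  have h2 : ∀ i : Fin n, (if x i ≠ Function.update x j 0 i then c i.succ else 0)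
      ≤ (if i = j then c j.succ else 0) := by
    intro i
    by_cases h : i = j
    · subst h
      by_cases hxi : x i = 0 <;> simp [hxi, hc]
    · rw [Function.update_of_ne h]
      simp [hc, h]
  have h3 : ∑ i : Fin n, (if x i ≠ Function.update x j 0 i then c i.succ else 0)
      ≤ c j.succ := by
    calc ∑ i : Fin n, (if x i ≠ Function.update x j 0 i then c i.succ else 0)
        ≤ ∑ i : Fin n, (if i = j then c j.succ else 0) := Finset.sum_le_sum fun i _ => h2 i
      _ = c j.succ := by rw [Finset.sum_ite_eq' Finset.univ j (fun _ => c j.succ)]; simp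
  have h4 : (if (0 : Fin q) ≠ v then c 0 else 0) ≤ c 0 := by
    by_cases h : (0 : Fin q) ≠ v <;> simp [h, hc 0]
  linarith

lemma mu_cross {n k : ℕ} (hq : 2 ≤ q) (hk1 : 1 ≤ k) (hkn : k ≤ n)
    (c : Fin (n+1) → ℝ) (hc : ∀ i, 0 ≤ c i) (hmono : ∀ j : Fin n, c j.succ ≤ c 0)
    (f : (Fin (n+1) → Fin q) → ℝ) (hf : BD c f) (v : Fin q) (hv : v ≠ 0) :
    |(∑ y ∈ slice q n k, f (Fin.cons 0 y)) / ((slice q n k).card : ℝ)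
      - (∑ y ∈ slice q n (k-1), f (Fin.cons v y)) / ((slice q n (k-1)).card : ℝ)| ≤ 2 * c 0 := by
  set N0 : ℝ := ((slice q n k).card : ℝ) with hN0
  set N1 : ℝ := ((slice q n (k-1)).card : ℝ) with hN1
  have hN0pos : 0 < N0 := by
    rw [hN0]
    exact_mod_cast Finset.card_pos.mpr (slice_nonempty hq hkn)
  have hN1pos : 0 < N1 := by
    rw [hN1]
    exact_mod_cast Finset.card_pos.mpr (slice_nonempty hq (by omega : k - 1 ≤ n))
  set M : ℝ := ((n - k + 1 : ℕ) : ℝ) * ((q - 1 : ℕ) : ℝ) with hM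
  set A : ℝ := ∑ y ∈ slice q n k, f (Fin.cons 0 y) with hA
  set B : ℝ := ∑ y ∈ slice q n (k-1), f (Fin.cons v y) with hB
  have hinner : ∀ (r : ℝ), ∀ x ∈ slice q n k,
      ∑ _j ∈ Finset.univ.filter (fun j => x j ≠ 0), r = (k:ℝ) * r := by
    intro r x hx
    rw [mem_slice] at hx
    rw [Finset.sum_const, nsmul_eq_mul]
    congr 1
    exact_mod_cast hx
  have hcount : (k : ℝ) * N0 = M * N1 := by
    have h1 := coupling (n := n) (k := k) hq hk1 hkn (fun _ => (1:ℝ))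
    rw [Finset.sum_congr rfl (hinner 1), Finset.sum_const, Finset.sum_const, nsmul_eq_mul,
      nsmul_eq_mul, mul_one, mul_one] at h1
    rw [hN0, hN1, hM]
    linear_combination h1
  have hMpos : (0:ℝ) < M := by
    have hkpos' : (0:ℝ) < (k:ℝ) := by exact_mod_cast hk1
    nlinarith
  have hcoup : ∑ x ∈ slice q n k, ∑ j ∈ Finset.univ.filter (fun j => x j ≠ 0),
      f (Fin.cons v (Function.update x j 0)) = M * B := by
    rw [coupling (n := n) (k := k) hq hk1 hkn (fun y => f (Fin.cons v y)), hM, hB]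
  have hconst : ∑ x ∈ slice q n k, ∑ _j ∈ Finset.univ.filter (fun j => x j ≠ 0),
      f (Fin.cons 0 x) = (k : ℝ) * A := by
    rw [hA, Finset.mul_sum]
    exact Finset.sum_congr rfl fun x hx => hinner _ x hx
  set T : ℝ := ∑ x ∈ slice q n k, ∑ j ∈ Finset.univ.filter (fun j => x j ≠ 0),
      (f (Fin.cons 0 x) - f (Fin.cons v (Function.update x j 0))) with hT
  have hTval : T = (k : ℝ) * A - M * B := by
    rw [hT, ← hconst, ← hcoup, ← Finset.sum_sub_distrib]
    apply Finset.sum_congr rfl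
    intro x _
    rw [← Finset.sum_sub_distrib]
  have hkpos : (0:ℝ) < (k:ℝ) := by exact_mod_cast hk1
  have hkN0 : (0:ℝ) < (k:ℝ) * N0 := by positivity
  have hTabs : |T| ≤ 2 * c 0 * ((k:ℝ) * N0) := by
    calc |T| ≤ ∑ x ∈ slice q n k, |∑ j ∈ Finset.univ.filter (fun j => x j ≠ 0),
          (f (Fin.cons 0 x) - f (Fin.cons v (Function.update x j 0)))| :=
        Finset.abs_sum_le_sum_abs _ _
      _ ≤ ∑ x ∈ slice q n k, ∑ _j ∈ Finset.univ.filter (fun j => x j ≠ 0), (2 * c 0) := by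
        apply Finset.sum_le_sum
        intro x _
        refine (Finset.abs_sum_le_sum_abs _ _).trans ?_
        apply Finset.sum_le_sum
        intro j _
        refine (diff_cross hf hc v x j).trans ?_
        have := hmono j
        linarith
      _ = ∑ _x ∈ slice q n k, ((k:ℝ) * (2 * c 0)) :=
        Finset.sum_congr rfl fun x hx => hinner _ x hx
      _ = 2 * c 0 * ((k:ℝ) * N0) := by
        rw [Finset.sum_const, nsmul_eq_mul, hN0]
        ring
  have hdiff : A / N0 - B / N1 = T / ((k:ℝ) * N0) := by
    have e1 : A / N0 = ((k:ℝ) * A) / ((k:ℝ) * N0) :=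
      (mul_div_mul_left A N0 (ne_of_gt hkpos)).symm
    have e2 : B / N1 = (M * B) / ((k:ℝ) * N0) := by
      rw [hcount]
      exact (mul_div_mul_left B N1 (ne_of_gt hMpos)).symm
    rw [e1, e2, div_sub_div_same, hTval]
  rw [hdiff, abs_div, abs_of_pos hkN0, div_le_iff₀ hkN0]
  exact hTabs

lemma mu_same {n m : ℕ} (c : Fin (n+1) → ℝ) (hc : ∀ i, 0 ≤ c i)
    (f : (Fin (n+1) → Fin q) → ℝ) (hf : BD c f) (v w : Fin q) :
    |(∑ y ∈ slice q n m, f (Fin.cons v y)) / ((slice q n m).card : ℝ)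
      - (∑ y ∈ slice q n m, f (Fin.cons w y)) / ((slice q n m).card : ℝ)| ≤ c 0 := by
  rcases Nat.eq_zero_or_pos (slice q n m).card with h0 | hpos
  · rw [h0]
    simp [hc 0]
  · have hN : (0:ℝ) < ((slice q n m).card : ℝ) := by exact_mod_cast hpos
    rw [div_sub_div_same, ← Finset.sum_sub_distrib, abs_div, abs_of_pos hN, div_le_iff₀ hN]
    calc |∑ y ∈ slice q n m, (f (Fin.cons v y) - f (Fin.cons w y))|
        ≤ ∑ y ∈ slice q n m, |f (Fin.cons v y) - f (Fin.cons w y)| :=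
          Finset.abs_sum_le_sum_abs _ _
      _ ≤ ∑ _y ∈ slice q n m, c 0 := Finset.sum_le_sum fun y _ => diff_cons_same hf hc v w y
      _ = c 0 * ((slice q n m).card : ℝ) := by
        rw [Finset.sum_const, nsmul_eq_mul]
        ring

lemma core (hq : 2 ≤ q) :
    ∀ n : ℕ, ∀ k : ℕ, ∀ c : Fin n → ℝ, (∀ i, 0 ≤ c i) →
    (∀ i j : Fin n, i ≤ j → c j ≤ c i) →
    ∀ f : (Fin n → Fin q) → ℝ, BD c f → ∀ l : ℝ,
    ∑ x ∈ slice q n k,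
        Real.exp (l * (f x - (∑ y ∈ slice q n k, f y) / ((slice q n k).card : ℝ)))
      ≤ ((slice q n k).card : ℝ) * Real.exp (2 * l^2 * ∑ i, (c i)^2) := by
  intro n
  induction n with
  | zero =>
    intro k c hc hmono f hf l
    match k with
    | 0 =>
      haveI : Unique (Fin 0 → Fin q) :=
        ⟨⟨fun i => i.elim0⟩, fun g => funext fun i => i.elim0⟩
      have huniv : slice q 0 0 = Finset.univ := by
        apply Finset.eq_univ_of_forall
        intro x
        rw [mem_slice, wt_eq_sum]
        simp
      rw [huniv, Finset.univ_unique, Finset.sum_singleton, Finset.sum_singleton,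
        Finset.card_singleton]
      simp
    | (m+1) =>
      rw [slice_empty (by omega)]
      simp
  | succ n ih =>
    intro k c hc hmono f hf l
    by_cases hkbig : n + 1 < k
    · rw [slice_empty hkbig]
      simp
    push_neg at hkbig
    rcases Nat.eq_zero_or_pos k with hk0 | hk1
    · subst hk0
      have hcard : ((slice q (n+1) 0).card : ℝ) = ((slice q n 0).card : ℝ) := by
        have h1 := sum_slice_zero (q := q) (n := n) (fun _ => (1:ℝ))
        simpa [Finset.sum_const, nsmul_eq_mul] using h1
      rw [sum_slice_zero, sum_slice_zero, hcard]
      have hb := ih 0 (fun i => c i.succ) (fun i => hc _)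
        (fun i j hij => hmono _ _ (Fin.succ_le_succ_iff.mpr hij)) _ (bd_cons hf 0) l
      refine hb.trans ?_
      apply mul_le_mul_of_nonneg_left _ (by positivity)
      apply Real.exp_le_exp.mpr
      rw [Fin.sum_univ_succ (f := fun i => (c i)^2)]
      nlinarith [sq_nonneg (c 0), sq_nonneg l]
    · -- main case : 1 ≤ k ≤ n+1
      by_cases hNz : (slice q (n+1) k).card = 0
      · rw [Finset.card_eq_zero.mp hNz]
        simp
      have hNpos : (0:ℝ) < ((slice q (n+1) k).card : ℝ) := by
        exact_mod_cast Nat.pos_of_ne_zero hNz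
      obtain ⟨N, hN⟩ : ∃ x : ℝ, x = ((slice q (n+1) k).card : ℝ) := ⟨_, rfl⟩
      rw [← hN] at hNpos ⊢
      obtain ⟨μ, hμ⟩ : ∃ x : ℝ, x = (∑ y ∈ slice q (n+1) k, f y) / N := ⟨_, rfl⟩
      rw [← hμ]
      obtain ⟨kv, hkv⟩ : ∃ g : Fin q → ℕ, g = fun v => if v = 0 then k else k - 1 := ⟨_, rfl⟩
      obtain ⟨Nv, hNv⟩ : ∃ g : Fin q → ℝ, g = fun v => ((slice q n (kv v)).card : ℝ) := ⟨_, rfl⟩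
      obtain ⟨Av, hAv⟩ : ∃ g : Fin q → ℝ,
        g = fun v => ∑ y ∈ slice q n (kv v), f (Fin.cons v y) := ⟨_, rfl⟩
      obtain ⟨gv, hgv⟩ : ∃ g : Fin q → ℝ,
        g = fun v => if Nv v = 0 then 0 else Av v / Nv v - μ := ⟨_, rfl⟩
      obtain ⟨S', hS'⟩ : ∃ x : ℝ, x = ∑ i : Fin n, (c i.succ)^2 := ⟨_, rfl⟩
      have hNvnn : ∀ v, 0 ≤ Nv v := by
        intro v
        rw [hNv]
        positivity
      have hdec : ∀ h : (Fin (n+1) → Fin q) → ℝ,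
          ∑ x ∈ slice q (n+1) k, h x
            = ∑ v : Fin q, ∑ y ∈ slice q n (kv v), h (Fin.cons v y) := by
        intro h
        simp only [hkv]
        exact sum_slice_succ hk1 h
      have hNsum : N = ∑ v : Fin q, Nv v := by
        have h1 := hdec (fun _ => (1:ℝ))
        simp only [Finset.sum_const, nsmul_eq_mul, mul_one] at h1
        rw [hN, hNv, h1]
      have hAsum : ∑ y ∈ slice q (n+1) k, f y = ∑ v : Fin q, Av v := by
        rw [hAv]
        exact hdec f
      have hemp : ∀ v, Nv v = 0 → slice q n (kv v) = ∅ := by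
        intro v hv
        rw [hNv] at hv
        have h' : ((slice q n (kv v)).card : ℝ) = 0 := hv
        apply Finset.card_eq_zero.mp
        exact_mod_cast h'
      have hAv0 : ∀ v, Nv v = 0 → Av v = 0 := by
        intro v hv
        rw [hAv]
        simp [hemp v hv]
      have hbranch : ∀ v : Fin q,
          ∑ y ∈ slice q n (kv v), Real.exp (l * (f (Fin.cons v y) - μ))
            ≤ Nv v * Real.exp (l * gv v) * Real.exp (2 * l^2 * S') := by
        intro v
        by_cases hv : Nv v = 0
        · rw [hemp v hv, hv]
          simp
        · have harg : ∀ y : Fin n → Fin q, l * (f (Fin.cons v y) - μ)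
              = l * (f (Fin.cons v y) - Av v / Nv v) + l * gv v := by
            intro y
            simp only [hgv]
            rw [if_neg hv]
            ring
          calc ∑ y ∈ slice q n (kv v), Real.exp (l * (f (Fin.cons v y) - μ))
              = (∑ y ∈ slice q n (kv v),
                  Real.exp (l * (f (Fin.cons v y) - Av v / Nv v))) * Real.exp (l * gv v) := by
                rw [Finset.sum_mul]
                apply Finset.sum_congr rfl
                intro y _
                rw [← Real.exp_add, ← harg y]
            _ ≤ (Nv v * Real.exp (2 * l^2 * S')) * Real.exp (l * gv v) := by
                apply mul_le_mul_of_nonneg_right _ (Real.exp_nonneg _)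
                simp only [hAv, hNv, hS']
                exact ih (kv v) (fun i => c i.succ) (fun i => hc _)
                  (fun i j hij => hmono _ _ (Fin.succ_le_succ_iff.mpr hij)) _ (bd_cons hf v) l
            _ = Nv v * Real.exp (l * gv v) * Real.exp (2 * l^2 * S') := by ring
      have hmean : ∑ v : Fin q, Nv v * gv v = 0 := by
        have hterm : ∀ v : Fin q, Nv v * gv v = Av v - Nv v * μ := by
          intro v
          by_cases hv : Nv v = 0
          · simp only [hgv]
            rw [if_pos hv, hv, hAv0 v hv]
            ring
          · simp only [hgv]
            rw [if_neg hv, mul_sub, mul_comm (Nv v) (Av v / Nv v), div_mul_cancel₀ _ hv]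
        rw [Finset.sum_congr rfl (fun v _ => hterm v), Finset.sum_sub_distrib, ← hAsum,
          ← Finset.sum_mul, ← hNsum, hμ, mul_comm, div_mul_cancel₀ _ (ne_of_gt hNpos),
          sub_self]
      have hgbound : ∀ v : Fin q, |gv v| ≤ 2 * c 0 := by
        intro v
        by_cases hv : Nv v = 0
        · have h0 : gv v = 0 := by
            simp only [hgv]
            rw [if_pos hv]
          rw [h0, abs_zero]
          linarith [hc 0]
        · have h0 : gv v = Av v / Nv v - μ := by
            simp only [hgv]
            rw [if_neg hv]
          rw [h0]
          have hkey : N * (Av v / Nv v - μ) = ∑ w : Fin q, (Nv w * (Av v / Nv v) - Av w) := by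
            rw [Finset.sum_sub_distrib, ← Finset.sum_mul, ← hNsum, ← hAsum, hμ, mul_sub,
              mul_comm N ((∑ y ∈ slice q (n+1) k, f y) / N),
              div_mul_cancel₀ _ (ne_of_gt hNpos)]
          have hpair : ∀ w : Fin q, |Nv w * (Av v / Nv v) - Av w| ≤ Nv w * (2 * c 0) := by
            intro w
            by_cases hw : Nv w = 0
            · rw [hw, hAv0 w hw]
              simp
            · have hsplit : Nv w * (Av v / Nv v) - Av w
                  = Nv w * (Av v / Nv v - Av w / Nv w) := by
                rw [mul_sub]
                congr 1
                rw [mul_comm, div_mul_cancel₀ _ hw]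
              rw [hsplit, abs_mul, abs_of_nonneg (hNvnn w)]
              apply mul_le_mul_of_nonneg_left _ (hNvnn w)
              by_cases hvw : v = w
              · subst hvw
                simp [hc 0]
              · by_cases hv0 : v = 0
                · subst hv0
                  have hw0 : w ≠ 0 := fun h => hvw h.symm
                  have hkn : k ≤ n := by
                    by_contra hcon
                    push_neg at hcon
                    apply hv
                    rw [hNv, hkv]
                    simp [slice_empty hcon]
                  have hmc := mu_cross hq hk1 hkn c hc
                    (fun j => hmono 0 j.succ (Fin.zero_le _)) f hf w hw0
                  simp only [hAv, hNv, hkv, if_pos rfl, if_neg hw0]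
                  exact hmc
                · by_cases hw0 : w = 0
                  · subst hw0
                    have hkn : k ≤ n := by
                      by_contra hcon
                      push_neg at hcon
                      apply hw
                      rw [hNv, hkv]
                      simp [slice_empty hcon]
                    have hmc := mu_cross hq hk1 hkn c hc
                      (fun j => hmono 0 j.succ (Fin.zero_le _)) f hf v hv0
                    rw [abs_sub_comm]
                    simp only [hAv, hNv, hkv, if_pos rfl, if_neg hv0]
                    exact hmc
                  · have hms := mu_same (m := k - 1) c hc f hf v w
                    simp only [hAv, hNv, hkv, if_neg hv0, if_neg hw0]
                    refine hms.trans ?_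
                    linarith [hc 0]
          calc |Av v / Nv v - μ| = |N * (Av v / Nv v - μ)| / N := by
                rw [abs_mul, abs_of_pos hNpos, mul_comm, mul_div_assoc,
                  div_self (ne_of_gt hNpos), mul_one]
            _ = |∑ w : Fin q, (Nv w * (Av v / Nv v) - Av w)| / N := by rw [hkey]
            _ ≤ (∑ w : Fin q, Nv w * (2 * c 0)) / N := by
                gcongr
                exact (Finset.abs_sum_le_sum_abs _ _).trans
                  (Finset.sum_le_sum fun w _ => hpair w)
            _ = ((∑ w : Fin q, Nv w) * (2 * c 0)) / N := by rw [Finset.sum_mul]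
            _ = 2 * c 0 := by
                rw [← hNsum, mul_comm, mul_div_assoc, div_self (ne_of_gt hNpos), mul_one]
      calc ∑ x ∈ slice q (n+1) k, Real.exp (l * (f x - μ))
          = ∑ v : Fin q, ∑ y ∈ slice q n (kv v), Real.exp (l * (f (Fin.cons v y) - μ)) :=
            hdec _
        _ ≤ ∑ v : Fin q, Nv v * Real.exp (l * gv v) * Real.exp (2 * l^2 * S') :=
            Finset.sum_le_sum fun v _ => hbranch v
        _ = (∑ v : Fin q, Nv v * Real.exp (l * gv v)) * Real.exp (2 * l^2 * S') := by
            rw [Finset.sum_mul]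
        _ ≤ ((∑ v : Fin q, Nv v) * Real.exp (l^2 * (2 * c 0)^2 / 2))
              * Real.exp (2 * l^2 * S') := by
            apply mul_le_mul_of_nonneg_right _ (Real.exp_nonneg _)
            exact hoeff Finset.univ Nv gv (fun v _ => hNvnn v) (2 * c 0) l
              (by linarith [hc 0]) (fun v _ => hgbound v) hmean
        _ = N * Real.exp (2 * l^2 * ∑ i : Fin (n+1), (c i)^2) := by
            rw [← hNsum, mul_assoc, ← Real.exp_add]
            congr 1
            rw [Fin.sum_univ_succ (f := fun i => (c i)^2), hS']
            ring

lemma tail_sorted (hq : 2 ≤ q) {n k : ℕ} (c : Fin n → ℝ) (hc : ∀ i, 0 ≤ c i)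
    (hc0 : ∃ i, c i ≠ 0) (hmono : ∀ i j : Fin n, i ≤ j → c j ≤ c i)
    (f : (Fin n → Fin q) → ℝ) (hf : BD c f) (t : ℝ) (ht : 0 ≤ t) :
    (((slice q n k).filter fun x =>
        t ≤ |f x - (∑ y ∈ slice q n k, f y) / ((slice q n k).card : ℝ)|).card : ℝ)
      ≤ 2 * Real.exp (-t^2 / (68 * ∑ i, (c i)^2)) * ((slice q n k).card : ℝ) := by
  have hSpos : 0 < ∑ i, (c i)^2 := by
    obtain ⟨i0, hi0⟩ := hc0
    apply Finset.sum_pos' (fun i _ => sq_nonneg _) ⟨i0, Finset.mem_univ _, by positivity⟩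
  obtain ⟨S, hS⟩ : ∃ x : ℝ, x = ∑ i, (c i)^2 := ⟨_, rfl⟩
  rw [← hS] at hSpos ⊢
  obtain ⟨lam, hlam⟩ : ∃ x : ℝ, x = t / (4 * S) := ⟨_, rfl⟩
  have hlamnn : 0 ≤ lam := by
    rw [hlam]
    positivity
  have hNnn : (0:ℝ) ≤ ((slice q n k).card : ℝ) := by positivity
  have hone : ∀ g : (Fin n → Fin q) → ℝ, BD c g →
      (((slice q n k).filter fun x =>
          t ≤ g x - (∑ y ∈ slice q n k, g y) / ((slice q n k).card : ℝ)).card : ℝ)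
        ≤ Real.exp (-t^2/(8*S)) * ((slice q n k).card : ℝ) := by
    intro g hg
    have hcore := core hq n k c hc hmono g hg lam
    rw [← hS] at hcore
    have hexp : 2*lam^2*S - lam*t = -t^2/(8*S) := by
      rw [hlam]
      field_simp
      ring
    calc (((slice q n k).filter fun x =>
            t ≤ g x - (∑ y ∈ slice q n k, g y) / ((slice q n k).card : ℝ)).card : ℝ)
        = ∑ _x ∈ (slice q n k).filter (fun x =>
            t ≤ g x - (∑ y ∈ slice q n k, g y) / ((slice q n k).card : ℝ)), (1:ℝ) := by
          rw [Finset.sum_const, nsmul_eq_mul, mul_one]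
      _ ≤ ∑ x ∈ (slice q n k).filter (fun x =>
            t ≤ g x - (∑ y ∈ slice q n k, g y) / ((slice q n k).card : ℝ)),
            Real.exp (lam * (g x - (∑ y ∈ slice q n k, g y) / ((slice q n k).card : ℝ))
              - lam * t) := by
          apply Finset.sum_le_sum
          intro x hx
          rw [Finset.mem_filter] at hx
          have h0 : 0 ≤ lam * (g x - (∑ y ∈ slice q n k, g y) / ((slice q n k).card : ℝ))
              - lam * t := by
            have := hx.2
            nlinarith
          calc (1:ℝ) = Real.exp 0 := Real.exp_zero.symm
            _ ≤ _ := Real.exp_le_exp.mpr h0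
      _ ≤ ∑ x ∈ slice q n k,
            Real.exp (lam * (g x - (∑ y ∈ slice q n k, g y) / ((slice q n k).card : ℝ))
              - lam * t) :=
          Finset.sum_le_sum_of_subset_of_nonneg (Finset.filter_subset _ _)
            (fun _ _ _ => Real.exp_nonneg _)
      _ = Real.exp (-(lam*t)) * ∑ x ∈ slice q n k,
            Real.exp (lam * (g x - (∑ y ∈ slice q n k, g y) / ((slice q n k).card : ℝ))) := by
          rw [Finset.mul_sum]
          apply Finset.sum_congr rfl
          intro x _
          rw [← Real.exp_add]
          congr 1
          ring
      _ ≤ Real.exp (-(lam*t)) * (((slice q n k).card : ℝ) * Real.exp (2 * lam^2 * S)) :=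
          mul_le_mul_of_nonneg_left hcore (Real.exp_nonneg _)
      _ = Real.exp (-(lam*t) + 2*lam^2*S) * ((slice q n k).card : ℝ) := by
          rw [Real.exp_add]
          ring
      _ = Real.exp (-t^2/(8*S)) * ((slice q n k).card : ℝ) := by
          rw [show -(lam*t) + 2*lam^2*S = 2*lam^2*S - lam*t by ring, hexp]
  have hneg : BD c (fun x => -f x) := by
    intro x x'
    have h1 := hf x' x
    have h2 : |(fun x => -f x) x - (fun x => -f x) x'| = |f x' - f x| := by
      simp only []
      rw [show -f x - -f x' = f x' - f x by ring]
    rw [h2]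
    refine h1.trans ?_
    apply le_of_eq
    apply Finset.sum_congr rfl
    intro i _
    by_cases h : x i = x' i <;> simp [h, Ne, eq_comm]
  have hsumneg : (∑ y ∈ slice q n k, (fun x => -f x) y)
      = -(∑ y ∈ slice q n k, f y) := by
    simp
  have hsub : (slice q n k).filter (fun x =>
        t ≤ |f x - (∑ y ∈ slice q n k, f y) / ((slice q n k).card : ℝ)|)
      ⊆ ((slice q n k).filter fun x =>
          t ≤ f x - (∑ y ∈ slice q n k, f y) / ((slice q n k).card : ℝ))
        ∪ ((slice q n k).filter fun x =>
          t ≤ (fun x => -f x) x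
            - (∑ y ∈ slice q n k, (fun x => -f x) y) / ((slice q n k).card : ℝ)) := by
    intro x hx
    rw [Finset.mem_filter] at hx
    rw [Finset.mem_union, Finset.mem_filter, Finset.mem_filter]
    rcases le_abs.mp hx.2 with h | h
    · exact Or.inl ⟨hx.1, h⟩
    · refine Or.inr ⟨hx.1, ?_⟩
      rw [hsumneg, neg_div]
      simp only []
      linarith
  have hcard := Finset.card_le_card hsub
  have hcard2 := Finset.card_union_le
    ((slice q n k).filter fun x =>
      t ≤ f x - (∑ y ∈ slice q n k, f y) / ((slice q n k).card : ℝ))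
    ((slice q n k).filter fun x =>
      t ≤ (fun x => -f x) x
        - (∑ y ∈ slice q n k, (fun x => -f x) y) / ((slice q n k).card : ℝ))
  have h1 := hone f hf
  have h2 := hone (fun x => -f x) hneg
  have hmain : (((slice q n k).filter fun x =>
      t ≤ |f x - (∑ y ∈ slice q n k, f y) / ((slice q n k).card : ℝ)|).card : ℝ)
      ≤ 2 * Real.exp (-t^2/(8*S)) * ((slice q n k).card : ℝ) := by
    have hc1 : (((slice q n k).filter fun x =>
        t ≤ |f x - (∑ y ∈ slice q n k, f y) / ((slice q n k).card : ℝ)|).card : ℝ)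
        ≤ (((slice q n k).filter fun x =>
            t ≤ f x - (∑ y ∈ slice q n k, f y) / ((slice q n k).card : ℝ)).card : ℝ)
          + (((slice q n k).filter fun x =>
            t ≤ (fun x => -f x) x
              - (∑ y ∈ slice q n k, (fun x => -f x) y) / ((slice q n k).card : ℝ)).card : ℝ) := by
      have := hcard.trans hcard2
      exact_mod_cast this
    linarith
  refine hmain.trans ?_
  have hexp2 : Real.exp (-t^2/(8*S)) ≤ Real.exp (-t^2/(68*S)) := by
    apply Real.exp_le_exp.mpr
    rw [div_le_div_iff₀ (by positivity) (by positivity)]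
    nlinarith [sq_nonneg t]
  nlinarith [Real.exp_nonneg (-t^2/(68*S)), Real.exp_nonneg (-t^2/(8*S))]

lemma wt_perm {n : ℕ} (σ : Equiv.Perm (Fin n)) (x : Fin n → Fin q) :
    wt (fun j => x (σ j)) = wt x := by
  rw [wt_eq_sum, wt_eq_sum]
  exact Fintype.sum_equiv σ _ _ (fun j => rfl)

lemma perm_sum {n k : ℕ} (σ : Equiv.Perm (Fin n)) (h : (Fin n → Fin q) → ℝ) :
    ∑ x ∈ slice q n k, h (fun j => x (σ j)) = ∑ y ∈ slice q n k, h y := by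
  apply Finset.sum_nbij' (i := fun x => fun j => x (σ j))
    (j := fun y => fun j => y (σ.symm j))
  · intro x hx
    rw [mem_slice] at hx ⊢
    rw [wt_perm]
    exact hx
  · intro y hy
    rw [mem_slice] at hy ⊢
    rw [wt_perm σ.symm]
    exact hy
  · intro x _
    funext j
    simp
  · intro y _
    funext j
    simp
  · intro x _
    rfl

lemma perm_filter_card {n k : ℕ} (σ : Equiv.Perm (Fin n)) (p : (Fin n → Fin q) → Prop)
    [DecidablePred p] :
    ((slice q n k).filter fun x => p (fun j => x (σ j))).card
      = ((slice q n k).filter p).card := by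
  apply Finset.card_nbij' (i := fun x => fun j => x (σ j))
    (j := fun y => fun j => y (σ.symm j))
  · intro x hx
    rw [Finset.mem_coe, Finset.mem_filter, mem_slice] at hx ⊢
    exact ⟨by rw [wt_perm]; exact hx.1, hx.2⟩
  · intro y hy
    rw [Finset.mem_coe, Finset.mem_filter, mem_slice] at hy ⊢
    refine ⟨by rw [wt_perm σ.symm]; exact hy.1, ?_⟩
    have : (fun j => (fun j' => y (σ.symm j')) (σ j)) = y := by
      funext j
      simp
    rw [this]
    exact hy.2
  · intro x _
    funext j
    simp
  · intro y _
    funext j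
    simp

lemma bd_perm {n : ℕ} (σ : Equiv.Perm (Fin n)) {c : Fin n → ℝ} {f : (Fin n → Fin q) → ℝ}
    (hf : BD c f) :
    BD (fun i => c (σ i)) (fun y => f (fun j => y (σ.symm j))) := by
  intro y y'
  refine (hf _ _).trans (le_of_eq ?_)
  exact (Fintype.sum_equiv σ (fun j => if y j ≠ y' j then c (σ j) else 0)
    (fun i => if y (σ.symm i) ≠ y' (σ.symm i) then c i else 0) (fun j => by simp)).symm

end Stmt6Aux

open Stmt6Aux in
/-- Non-uniform concentration inequality for functions with bounded differences
on a slice (fixed weight level) of the q-ary cube. -/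
theorem stmt6 (q n : ℕ) (hq : 2 ≤ q) (hn : 1 ≤ n) (k : ℕ) (hk : k ≤ n)
    (c : Fin n → ℝ) (hc : ∀ i, 0 ≤ c i) (hc0 : ∃ i, c i ≠ 0)
    (f : (Fin n → Fin q) → ℝ)
    (hf : ∀ x x' : Fin n → Fin q,
      |f x - f x'| ≤ ∑ i, if x i ≠ x' i then c i else 0)
    (t : ℝ) (ht : 0 ≤ t) :
    (((Finset.univ.filter fun x : Fin n → Fin q =>
          (Finset.univ.filter fun i => (x i : ℕ) ≠ 0).card = k).filter fun x =>
        t ≤ |f x -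
          (∑ y ∈ Finset.univ.filter fun y : Fin n → Fin q =>
              (Finset.univ.filter fun i => (y i : ℕ) ≠ 0).card = k, f y) /
            ((Finset.univ.filter fun y : Fin n → Fin q =>
              (Finset.univ.filter fun i => (y i : ℕ) ≠ 0).card = k).card : ℝ)|).card : ℝ) ≤
      2 * Real.exp (-t ^ 2 / (68 * ∑ i, (c i) ^ 2)) *
        ((Finset.univ.filter fun x : Fin n → Fin q =>
          (Finset.univ.filter fun i => (x i : ℕ) ≠ 0).card = k).card : ℝ) := by
  haveI : NeZero q := ⟨by omega⟩
  have hset : (Finset.univ.filter fun x : Fin n → Fin q =>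
      (Finset.univ.filter fun i => (x i : ℕ) ≠ 0).card = k) = slice q n k := by
    ext x
    have hfe : (Finset.univ.filter fun i => (x i : ℕ) ≠ 0)
        = (Finset.univ.filter fun i => x i ≠ 0) := by
      apply Finset.filter_congr
      intro i _
      rw [not_iff_not, Fin.ext_iff]
      simp
    simp only [Finset.mem_filter, Finset.mem_univ, true_and, Stmt6Aux.mem_slice]
    rw [hfe]
    exact Iff.rfl
  rw [hset]
  -- sort the weights
  obtain ⟨σ, hσ⟩ : ∃ x : Equiv.Perm (Fin n), x = Tuple.sort (fun i => -c i) := ⟨_, rfl⟩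
  have hmono : ∀ i j : Fin n, i ≤ j → c (σ j) ≤ c (σ i) := by
    intro i j hij
    have hms := Tuple.monotone_sort (fun i => -c i) hij
    rw [← hσ] at hms
    simp only [Function.comp_apply] at hms
    linarith
  have hbd : BD (fun i => c (σ i)) (fun y => f (fun j => y (σ.symm j))) := bd_perm σ hf
  have hc' : ∀ i, 0 ≤ c (σ i) := fun i => hc _
  obtain ⟨i0, hi0⟩ := hc0
  have hc0' : ∃ i, c (σ i) ≠ 0 := ⟨σ.symm i0, by simpa using hi0⟩
  have hts := tail_sorted (k := k) hq (fun i => c (σ i)) hc' hc0' hmono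
    (fun y => f (fun j => y (σ.symm j))) hbd t ht
  -- transfer the average
  have hμeq : ∑ y ∈ slice q n k, f (fun j => y (σ.symm j)) = ∑ y ∈ slice q n k, f y :=
    perm_sum σ.symm f
  rw [hμeq] at hts
  -- transfer the sum of squares
  have hSeq : ∑ i, (c (σ i))^2 = ∑ i, (c i)^2 :=
    Equiv.sum_comp σ (fun j => (c j)^2)
  rw [hSeq] at hts
  -- transfer the cardinality of the bad set
  have hcardB : ((slice q n k).filter fun y =>
        t ≤ |f (fun j => y (σ.symm j)) -
          (∑ y ∈ slice q n k, f y) / ((slice q n k).card : ℝ)|).card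
      = ((slice q n k).filter fun x =>
        t ≤ |f x - (∑ y ∈ slice q n k, f y) / ((slice q n k).card : ℝ)|).card := by
    have hpc := perm_filter_card (k := k) σ (fun y =>
      t ≤ |f (fun j => y (σ.symm j)) -
        (∑ y ∈ slice q n k, f y) / ((slice q n k).card : ℝ)|)
    rw [← hpc]
    congr 1
    apply Finset.filter_congr
    intro x _
    have : (fun j => (fun j' => x (σ j')) (σ.symm j)) = x := by
      funext j
      simp
    rw [this]
  rw [hcardB] at hts
  exact hts
end

section
/- Let n ≥ 1 and 0 ≤ k ≤ n be integers and let c₁,…,c_n be non-negative reals not all zero. Suppose g : {0,1}^n → ℝ satisfies the bounded differences condition |g(x) − g(x')| ≤ Σ_{i=1}^{n} c_i·1[x_i ≠ x'_i] for all x, x' ∈ {0,1}^n. Let ξ ∈ {0,1}^n be drawn uniformly at random from the set of binary words with exactly k ones. Then for all t ≥ 0, P(|g(ξ) − E g(ξ)| ≥ t) ≤ 2·exp(−t² / (8·Σ_{i=1}^{n} c_i²)). -/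
open Finset Real

section Slice

variable {ι : Type*} [Fintype ι] [DecidableEq ι]

/-- The slice of the Boolean cube: words with exactly `k` ones. -/
def bslice (ι : Type*) [Fintype ι] [DecidableEq ι] (k : ℕ) : Finset (ι → Bool) :=
  Finset.univ.filter fun x => (Finset.univ.filter fun i => x i = true).card = k

lemma bslice_nonempty {k : ℕ} (hk : k ≤ Fintype.card ι) : (bslice ι k).Nonempty := by
  obtain ⟨s, hs, hcard⟩ := Finset.exists_subset_card_eq (s := (Finset.univ : Finset ι))
    (by simpa using hk : k ≤ (Finset.univ : Finset ι).card)
  refine ⟨fun i => i ∈ s, ?_⟩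
  simp only [bslice, mem_filter, mem_univ, true_and]
  rw [← hcard]
  congr 1
  ext i
  simp

lemma bslice_zero : bslice ι 0 = {fun _ => false} := by
  ext x
  simp only [bslice, mem_filter, mem_univ, true_and, mem_singleton, Finset.card_eq_zero,
    Finset.filter_eq_empty_iff]
  constructor
  · intro h
    funext i
    simpa using @h i trivial
  · intro h i _
    simp [h]

end Slice

section Ext

variable {ι : Type*} [Fintype ι] [DecidableEq ι]

/-- Extend a word on `{j // j ≠ i0}` by a value at `i0`. -/
def bext (i0 : ι) (b : Bool) (y : {j : ι // j ≠ i0} → Bool) : ι → Bool :=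
  fun i => if h : i = i0 then b else y ⟨i, h⟩

lemma bext_apply_ne (i0 : ι) (b : Bool) (y : {j : ι // j ≠ i0} → Bool)
    (j : {j : ι // j ≠ i0}) : bext i0 b y j.1 = y j := by
  simp [bext, j.2]

lemma bext_apply_self (i0 : ι) (b : Bool) (y : {j : ι // j ≠ i0} → Bool) :
    bext i0 b y i0 = b := by simp [bext]

lemma count_bext (i0 : ι) (b : Bool) (y : {j : ι // j ≠ i0} → Bool) :
    (Finset.univ.filter fun i => bext i0 b y i = true).card =
      (Finset.univ.filter fun j => y j = true).card + (if b then 1 else 0) := by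
  classical
  have h1 : ∀ (z : ι → Bool), (Finset.univ.filter fun i => z i = true).card
      = ∑ i : ι, (if z i = true then 1 else 0) := by
    intro z
    rw [Finset.card_filter]
  have h2 : (Finset.univ.filter fun j : {j : ι // j ≠ i0} => y j = true).card
      = ∑ j : {j : ι // j ≠ i0}, (if y j = true then 1 else 0) := by
    rw [Finset.card_filter]
  rw [h1, h2, Fintype.sum_eq_add_sum_compl i0]
  rw [bext_apply_self]
  have h3 : ∑ i ∈ ({i0}ᶜ : Finset ι), (if bext i0 b y i = true then 1 else 0)
      = ∑ j : {j : ι // j ≠ i0}, (if y j = true then 1 else 0) := by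
    rw [Finset.sum_subtype (p := fun x => x ≠ i0) ({i0}ᶜ : Finset ι) (by simp)]
    refine Finset.sum_congr rfl fun j _ => ?_
    rw [bext_apply_ne]
  rw [h3]
  cases b <;> simp [add_comm]

end Ext

section Decomp

variable {ι : Type*} [Fintype ι] [DecidableEq ι]

lemma bext_restrict (i0 : ι) (x : ι → Bool) :
    bext i0 (x i0) (fun j => x j.1) = x := by
  funext i
  by_cases h : i = i0 <;> simp [bext, h]

lemma mem_bslice {k : ℕ} {x : ι → Bool} :
    x ∈ bslice ι k ↔ (Finset.univ.filter fun i => x i = true).card = k := by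
  simp [bslice]

lemma sum_bslice_decomp (i0 : ι) {k : ℕ} (hk : 1 ≤ k) (F : (ι → Bool) → ℝ) :
    ∑ x ∈ bslice ι k, F x =
      (∑ y ∈ bslice {j : ι // j ≠ i0} k, F (bext i0 false y)) +
      (∑ y ∈ bslice {j : ι // j ≠ i0} (k - 1), F (bext i0 true y)) := by
  classical
  rw [← Finset.sum_filter_add_sum_filter_not (bslice ι k) (fun x => x i0 = false) F]
  congr 1
  · refine Finset.sum_nbij' (fun x => fun j => x j.1) (fun y => bext i0 false y) ?_ ?_ ?_ ?_ ?_
    · intro x hx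
      rw [mem_bslice]
      simp only [Finset.mem_filter] at hx
      obtain ⟨hx1, hx2⟩ := hx
      rw [mem_bslice] at hx1
      have := count_bext i0 (x i0) (fun j => x j.1)
      rw [bext_restrict] at this
      rw [hx2] at this
      simpa [hx1] using this.symm
    · intro y hy
      rw [mem_bslice] at hy
      simp only [Finset.mem_filter]
      constructor
      · rw [mem_bslice, count_bext, hy]
        simp
      · exact bext_apply_self i0 false y
    · intro x hx
      simp only [Finset.mem_filter] at hx
      conv_rhs => rw [← bext_restrict i0 x]
      rw [hx.2]
    · intro y hy
      funext j
      exact bext_apply_ne i0 false y j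
    · intro x hx
      simp only [Finset.mem_filter] at hx
      conv_lhs => rw [← bext_restrict i0 x, hx.2]
  · refine Finset.sum_nbij' (fun x => fun j => x j.1) (fun y => bext i0 true y) ?_ ?_ ?_ ?_ ?_
    · intro x hx
      rw [mem_bslice]
      simp only [Finset.mem_filter] at hx
      obtain ⟨hx1, hx2⟩ := hx
      rw [mem_bslice] at hx1
      have hxt : x i0 = true := by
        cases h : x i0
        · exact absurd h hx2
        · rfl
      have := count_bext i0 (x i0) (fun j => x j.1)
      rw [bext_restrict] at this
      rw [hx1, hxt] at this
      simp only [if_true] at this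
      rw [this, Nat.add_sub_cancel]
    · intro y hy
      rw [mem_bslice] at hy
      simp only [Finset.mem_filter]
      constructor
      · rw [mem_bslice, count_bext, hy]
        simp only [if_true]
        omega
      · simp [bext_apply_self]
    · intro x hx
      simp only [Finset.mem_filter] at hx
      have hxt : x i0 = true := by
        cases h : x i0
        · exact absurd h hx.2
        · rfl
      conv_rhs => rw [← bext_restrict i0 x]
      rw [hxt]
    · intro y hy
      funext j
      exact bext_apply_ne i0 true y j
    · intro x hx
      simp only [Finset.mem_filter] at hx
      have hxt : x i0 = true := by
        cases h : x i0
        · exact absurd h hx.2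
        · rfl
      conv_lhs => rw [← bext_restrict i0 x, hxt]

end Decomp

section Hoeffding

lemma exp_chord {M x : ℝ} (hM : 0 < M) (hx : |x| ≤ M) (L : ℝ) :
    M * Real.exp (L * x) ≤ M * Real.cosh (L * M) + x * Real.sinh (L * M) := by
  have hx1 : -M ≤ x := (abs_le.1 hx).1
  have hx2 : x ≤ M := (abs_le.1 hx).2
  have hMne : M ≠ 0 := ne_of_gt hM
  set a : ℝ := (M - x) / (2 * M) with ha
  set b : ℝ := (M + x) / (2 * M) with hb
  have ha0 : 0 ≤ a := div_nonneg (by linarith) (by linarith)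
  have hb0 : 0 ≤ b := div_nonneg (by linarith) (by linarith)
  have hab : a + b = 1 := by
    rw [ha, hb, ← add_div, div_eq_one_iff_eq (by positivity : (2:ℝ) * M ≠ 0)]
    ring
  have hcomb : a * (L * (-M)) + b * (L * M) = L * x := by
    rw [ha, hb, div_mul_eq_mul_div, div_mul_eq_mul_div, ← add_div,
      div_eq_iff (by positivity : (2:ℝ) * M ≠ 0)]
    ring
  have hcx := convexOn_exp.2 (Set.mem_univ (L * (-M))) (Set.mem_univ (L * M)) ha0 hb0 hab
  rw [smul_eq_mul, smul_eq_mul, hcomb] at hcx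
  have hMa : M * a = (M - x) / 2 := by
    rw [ha, mul_div_assoc']
    rw [show M * (M - x) = (M - x) * M by ring, show (2:ℝ) * M = M * 2 by ring,
      mul_comm (M - x) M, mul_div_mul_left _ _ hMne]
  have hMb : M * b = (M + x) / 2 := by
    rw [hb, mul_div_assoc']
    rw [show (2:ℝ) * M = M * 2 by ring, mul_div_mul_left _ _ hMne]
  calc M * Real.exp (L * x)
      ≤ M * (a * Real.exp (L * (-M)) + b * Real.exp (L * M)) := by
        exact mul_le_mul_of_nonneg_left hcx (le_of_lt hM)
    _ = (M * a) * Real.exp (L * (-M)) + (M * b) * Real.exp (L * M) := by ring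
    _ = M * Real.cosh (L * M) + x * Real.sinh (L * M) := by
        rw [hMa, hMb, Real.cosh_eq, Real.sinh_eq,
          show L * (-M) = -(L * M) by ring]
        ring

lemma two_point_exp (p q a b M L : ℝ) (hp : 0 ≤ p) (hq : 0 ≤ q) (hpq : p + q = 1)
    (hmean : p * a + q * b = 0) (hM : 0 ≤ M) (ha : |a| ≤ M) (hb : |b| ≤ M) :
    p * Real.exp (L * a) + q * Real.exp (L * b) ≤ Real.exp (L ^ 2 * M ^ 2 / 2) := by
  rcases eq_or_lt_of_le hM with hM0 | hM0
  · have ha0 : a = 0 := by rw [← hM0] at ha; simpa using ha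
    have hb0 : b = 0 := by rw [← hM0] at hb; simpa using hb
    rw [ha0, hb0]
    simp only [mul_zero, Real.exp_zero, mul_one, hpq]
    exact Real.one_le_exp (by positivity)
  · have key : p * Real.exp (L * a) + q * Real.exp (L * b) ≤ Real.cosh (L * M) := by
      refine le_of_mul_le_mul_left ?_ hM0
      calc M * (p * Real.exp (L * a) + q * Real.exp (L * b))
          = p * (M * Real.exp (L * a)) + q * (M * Real.exp (L * b)) := by ring
        _ ≤ p * (M * Real.cosh (L * M) + a * Real.sinh (L * M))
            + q * (M * Real.cosh (L * M) + b * Real.sinh (L * M)) := by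
            gcongr
            · exact exp_chord hM0 ha L
            · exact exp_chord hM0 hb L
        _ = (p + q) * (M * Real.cosh (L * M)) + (p * a + q * b) * Real.sinh (L * M) := by
            ring
        _ = M * Real.cosh (L * M) := by rw [hpq, hmean]; ring
    refine key.trans ?_
    calc Real.cosh (L * M) ≤ Real.exp ((L * M) ^ 2 / 2) := Real.cosh_le_exp_half_sq (L * M)
      _ = Real.exp (L ^ 2 * M ^ 2 / 2) := by rw [mul_pow]

end Hoeffding

section Coupling

variable {ι : Type*} [Fintype ι] [DecidableEq ι]

lemma filter_update_false (y : ι → Bool) (j : ι) (hj : y j = true) :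
    (Finset.univ.filter fun i => Function.update y j false i = true) =
      (Finset.univ.filter fun i => y i = true).erase j := by
  ext i
  by_cases h : i = j
  · subst h; simp [Function.update_self]
  · simp [Function.update_of_ne h, h]

lemma filter_update_true (z : ι → Bool) (j : ι) :
    (Finset.univ.filter fun i => Function.update z j true i = true) =
      insert j (Finset.univ.filter fun i => z i = true) := by
  ext i
  by_cases h : i = j
  · subst h; simp [Function.update_self]
  · simp [Function.update_of_ne h, h]

lemma count_update_false {k : ℕ} (y : ι → Bool) (hy : y ∈ bslice ι k) (j : ι)
    (hj : y j = true) : Function.update y j false ∈ bslice ι (k - 1) := by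
  rw [mem_bslice] at hy ⊢
  rw [filter_update_false y j hj, Finset.card_erase_of_mem (by simp [hj]), hy]

lemma count_update_true {k : ℕ} (z : ι → Bool) (hz : z ∈ bslice ι (k - 1)) (j : ι)
    (hj : z j = false) (hk : 1 ≤ k) : Function.update z j true ∈ bslice ι k := by
  rw [mem_bslice] at hz ⊢
  rw [filter_update_true z j, Finset.card_insert_of_notMem (by simp [hj]), hz]
  omega

lemma card_filter_false {k : ℕ} (z : ι → Bool) (hz : z ∈ bslice ι k) :
    (Finset.univ.filter fun j => z j = false).card = Fintype.card ι - k := by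
  rw [mem_bslice] at hz
  have : (Finset.univ.filter fun j => z j = false) =
      (Finset.univ.filter fun j => z j = true)ᶜ := by
    ext i
    simp only [Finset.mem_filter, Finset.mem_univ, true_and, Finset.mem_compl]
    cases h : z i <;> simp
  rw [this, Finset.card_compl, hz]

end Coupling

section MeanDiff

variable {ι : Type*} [Fintype ι] [DecidableEq ι]

lemma mean_diff_le {k : ℕ} (hk1 : 1 ≤ k) (hk2 : k ≤ Fintype.card ι)
    (h0 h1 : (ι → Bool) → ℝ) (D : ℝ)
    (hD : ∀ y : ι → Bool, y ∈ bslice ι k → ∀ j : ι, y j = true →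
      |h1 (Function.update y j false) - h0 y| ≤ D) :
    |(∑ z ∈ bslice ι (k - 1), h1 z) / ((bslice ι (k - 1)).card : ℝ) -
      (∑ y ∈ bslice ι k, h0 y) / ((bslice ι k).card : ℝ)| ≤ D := by
  classical
  set m := Fintype.card ι with hm
  set A := bslice ι (k - 1) with hA
  set B := bslice ι k with hB
  set P : Finset ((ι → Bool) × ι) := (B ×ˢ Finset.univ).filter fun p => p.1 p.2 = true with hP
  set Q : Finset ((ι → Bool) × ι) := (A ×ˢ Finset.univ).filter fun p => p.1 p.2 = false with hQ
  have hAne : A.Nonempty := bslice_nonempty (by omega)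
  have hBne : B.Nonempty := bslice_nonempty hk2
  -- sum over P of a function of the first coordinate
  have sumP : ∀ F : (ι → Bool) × ι → ℝ, ∑ p ∈ P, F p =
      ∑ y ∈ B, ∑ j ∈ Finset.univ.filter fun j => y j = true, F (y, j) := by
    intro F
    rw [hP, Finset.sum_filter, Finset.sum_product]
    refine Finset.sum_congr rfl fun y _ => ?_
    rw [Finset.sum_filter]
  have sumQ : ∀ F : (ι → Bool) × ι → ℝ, ∑ p ∈ Q, F p =
      ∑ z ∈ A, ∑ j ∈ Finset.univ.filter fun j => z j = false, F (z, j) := by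
    intro F
    rw [hQ, Finset.sum_filter, Finset.sum_product]
    refine Finset.sum_congr rfl fun z _ => ?_
    rw [Finset.sum_filter]
  -- reindexing P ≃ Q
  have reindex : ∀ F : (ι → Bool) → ℝ,
      ∑ p ∈ P, F (Function.update p.1 p.2 false) = ∑ q ∈ Q, F q.1 := by
    intro F
    refine Finset.sum_nbij' (fun p => (Function.update p.1 p.2 false, p.2))
      (fun q => (Function.update q.1 q.2 true, q.2)) ?_ ?_ ?_ ?_ ?_
    · intro p hp
      rw [hP, Finset.mem_filter, Finset.mem_product] at hp
      rw [hQ, Finset.mem_filter, Finset.mem_product]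
      exact ⟨⟨count_update_false p.1 hp.1.1 p.2 hp.2, Finset.mem_univ _⟩,
        by simp [Function.update_self]⟩
    · intro q hq
      rw [hQ, Finset.mem_filter, Finset.mem_product] at hq
      rw [hP, Finset.mem_filter, Finset.mem_product]
      exact ⟨⟨count_update_true q.1 hq.1.1 q.2 hq.2 hk1, Finset.mem_univ _⟩,
        by simp [Function.update_self]⟩
    · intro p hp
      rw [hP, Finset.mem_filter] at hp
      have : Function.update (Function.update p.1 p.2 false) p.2 true = p.1 := by
        rw [Function.update_idem, ← hp.2, Function.update_eq_self]
      simp [this]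
    · intro q hq
      rw [hQ, Finset.mem_filter] at hq
      have : Function.update (Function.update q.1 q.2 true) q.2 false = q.1 := by
        rw [Function.update_idem, ← hq.2, Function.update_eq_self]
      simp [this]
    · intro p hp
      rfl
  -- the three counting identities
  have hcount : ∀ y ∈ B, (Finset.univ.filter fun j => y j = true).card = k := fun y hy =>
    mem_bslice.1 hy
  have cardP : (P.card : ℝ) = k * B.card := by
    have h := sumP (fun _ => (1 : ℝ))
    simp only [Finset.sum_const, nsmul_eq_mul, mul_one] at h
    rw [h, Finset.sum_congr rfl fun y hy => by rw [hcount y hy],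
      Finset.sum_const, nsmul_eq_mul]
    ring
  have cardQ : (P.card : ℝ) = (m - (k - 1) : ℕ) * A.card := by
    have hh1 : ∑ p ∈ P, (1 : ℝ) = ∑ q ∈ Q, (1 : ℝ) := reindex (fun _ => 1)
    have hh2 := sumQ (fun _ => (1 : ℝ))
    simp only [Finset.sum_const, nsmul_eq_mul, mul_one] at hh1 hh2
    rw [hh1, hh2, Finset.sum_congr rfl fun z hz => by rw [card_filter_false z hz],
      Finset.sum_const, nsmul_eq_mul]
    rw [hm]
    ring
  -- main double count
  set S1 := ∑ z ∈ A, h1 z with hS1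
  set S0 := ∑ y ∈ B, h0 y with hS0
  have e1 : ∑ p ∈ P, h1 (Function.update p.1 p.2 false) = ((m - (k - 1) : ℕ) : ℝ) * S1 := by
    rw [reindex h1, sumQ (fun q => h1 q.1), hS1, Finset.mul_sum]
    refine Finset.sum_congr rfl fun z hz => ?_
    show (∑ _j ∈ Finset.univ.filter fun j => z j = false, h1 z) = _
    rw [Finset.sum_const, nsmul_eq_mul, card_filter_false z hz, hm]
  have e2 : ∑ p ∈ P, h0 p.1 = (k : ℝ) * S0 := by
    rw [sumP (fun p => h0 p.1), hS0, Finset.mul_sum]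
    refine Finset.sum_congr rfl fun y hy => ?_
    show (∑ _j ∈ Finset.univ.filter fun j => y j = true, h0 y) = _
    rw [Finset.sum_const, nsmul_eq_mul, hcount y hy]
  have key : ((m - (k - 1) : ℕ) : ℝ) * S1 - (k : ℝ) * S0 =
      ∑ p ∈ P, (h1 (Function.update p.1 p.2 false) - h0 p.1) := by
    rw [Finset.sum_sub_distrib, e1, e2]
  have hDnonneg : 0 ≤ D := by
    obtain ⟨y, hy⟩ := hBne
    have hy' := mem_bslice.1 hy
    have : (Finset.univ.filter fun j => y j = true).Nonempty := by
      rw [← Finset.card_pos, hy']; omega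
    obtain ⟨j, hj⟩ := this
    simp only [Finset.mem_filter] at hj
    exact (abs_nonneg _).trans (hD y hy j hj.2)
  have bound : |((m - (k - 1) : ℕ) : ℝ) * S1 - (k : ℝ) * S0| ≤ P.card * D := by
    rw [key]
    refine (Finset.abs_sum_le_sum_abs _ _).trans ?_
    rw [Finset.card_eq_sum_ones P]
    push_cast
    rw [Finset.sum_mul, one_mul]
    refine Finset.sum_le_sum fun p hp => ?_
    rw [hP, Finset.mem_filter, Finset.mem_product] at hp
    exact hD p.1 hp.1.1 p.2 hp.2
  -- conclude
  have hAcard : (0 : ℝ) < A.card := by exact_mod_cast Finset.card_pos.2 hAne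
  have hBcard : (0 : ℝ) < B.card := by exact_mod_cast Finset.card_pos.2 hBne
  have hPcard : (0 : ℝ) < P.card := by
    rw [cardP]
    have : (0:ℝ) < (k:ℝ) := by exact_mod_cast hk1
    positivity
  have expand : S1 / (A.card : ℝ) - S0 / (B.card : ℝ) =
      (((m - (k - 1) : ℕ) : ℝ) * S1 - (k : ℝ) * S0) / (P.card : ℝ) := by
    rw [div_sub_div _ _ (ne_of_gt hAcard) (ne_of_gt hBcard),
      div_eq_div_iff (by positivity) (ne_of_gt hPcard)]
    have e1 : S1 * (B.card : ℝ) * (P.card : ℝ)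
        = S1 * (B.card : ℝ) * (((m - (k - 1) : ℕ) : ℝ) * A.card) := by rw [← cardQ]
    have e2 : (A.card : ℝ) * S0 * (P.card : ℝ)
        = (A.card : ℝ) * S0 * ((k : ℝ) * B.card) := by rw [← cardP]
    linear_combination e1 - e2
  rw [expand, abs_div, abs_of_pos hPcard, div_le_iff₀ hPcard]
  calc |((m - (k - 1) : ℕ) : ℝ) * S1 - (k : ℝ) * S0| ≤ P.card * D := bound
    _ = D * P.card := by ring

end MeanDiff

section Main

lemma bslice_full {ι : Type*} [Fintype ι] [DecidableEq ι] :
    bslice ι (Fintype.card ι) = {fun _ => true} := by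
  ext x
  simp only [bslice, Finset.mem_filter, Finset.mem_univ, true_and, Finset.mem_singleton]
  constructor
  · intro h
    have : (Finset.univ.filter fun i => x i = true) = Finset.univ := by
      apply Finset.eq_univ_of_card
      rw [h]
    funext i
    have := Finset.mem_filter.1 (this ▸ Finset.mem_univ i)
    exact this.2
  · intro h
    subst h
    rw [Finset.filter_true_of_mem (by simp), Finset.card_univ]

lemma singleton_slice_case {ι : Type*} [Fintype ι] [DecidableEq ι] {k : ℕ}
    (x0 : ι → Bool) (h : bslice ι k = {x0}) (c : ι → ℝ) (hc : ∀ i, 0 ≤ c i)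
    (g : (ι → Bool) → ℝ) (L : ℝ) :
    ∑ x ∈ bslice ι k, Real.exp (L * (g x -
        (∑ y ∈ bslice ι k, g y) / ((bslice ι k).card : ℝ))) ≤
      ((bslice ι k).card : ℝ) * Real.exp (2 * L ^ 2 * ∑ i, c i ^ 2) := by
  rw [h]
  simp only [Finset.sum_singleton, Finset.card_singleton, Nat.cast_one, div_one, sub_self,
    mul_zero, Real.exp_zero, one_mul]
  refine Real.one_le_exp ?_
  have : (0:ℝ) ≤ ∑ i, c i ^ 2 := Finset.sum_nonneg fun i _ => sq_nonneg _
  positivity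

set_option maxHeartbeats 1000000 in
theorem mgf_bound (N : ℕ) : ∀ {ι : Type} [Fintype ι] [DecidableEq ι],
    Fintype.card ι = N → ∀ (k : ℕ), k ≤ N → ∀ (c : ι → ℝ), (∀ i, 0 ≤ c i) →
    ∀ (g : (ι → Bool) → ℝ),
    (∀ x x' : ι → Bool, |g x - g x'| ≤ ∑ i, if x i ≠ x' i then c i else 0) →
    ∀ L : ℝ,
    ∑ x ∈ bslice ι k, Real.exp (L * (g x -
        (∑ y ∈ bslice ι k, g y) / ((bslice ι k).card : ℝ))) ≤
      ((bslice ι k).card : ℝ) * Real.exp (2 * L ^ 2 * ∑ i, c i ^ 2) := by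
  induction N using Nat.strong_induction_on with
  | _ N IH =>
    intro ι _ _ hcard k hk c hc g hg L
    classical
    -- trivial cases
    rcases Nat.eq_zero_or_pos k with hk0 | hk1
    · subst hk0
      exact singleton_slice_case _ bslice_zero c hc g L
    rcases eq_or_lt_of_le hk with hkN | hkN
    · subst hkN
      exact singleton_slice_case _ (hcard ▸ bslice_full) c hc g L
    -- main case : 1 ≤ k ≤ N - 1
    have hN1 : 1 ≤ N := le_trans hk1 hk
    have hne : Nonempty ι := by
      rw [← Fintype.card_pos_iff, hcard]; omega
    obtain ⟨i0, -, hmax⟩ := Finset.exists_max_image Finset.univ c ⟨Classical.arbitrary ι,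
      Finset.mem_univ _⟩
    have hmax' : ∀ j : ι, c j ≤ c i0 := fun j => hmax j (Finset.mem_univ j)
    set ι' := {j : ι // j ≠ i0} with hι'
    have hcard' : Fintype.card ι' = N - 1 := by
      show Fintype.card {j : ι // j ≠ i0} = N - 1
      rw [Fintype.card_subtype_compl, hcard, Fintype.card_subtype_eq]
    set c' : ι' → ℝ := fun j => c j.1 with hc'
    set g0 : (ι' → Bool) → ℝ := fun y => g (bext i0 false y) with hg0
    set g1 : (ι' → Bool) → ℝ := fun y => g (bext i0 true y) with hg1
    -- sum splitting over the coordinate i0 for any function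
    have split := fun F => sum_bslice_decomp (ι := ι) i0 hk1 F
    -- bounded differences for g0, g1
    have hsum_ext : ∀ (b : Bool) (y y' : ι' → Bool),
        (∑ i : ι, if bext i0 b y i ≠ bext i0 b y' i then c i else 0) =
          ∑ j : ι', if y j ≠ y' j then c' j else 0 := by
      intro b y y'
      rw [Fintype.sum_eq_add_sum_compl i0]
      rw [bext_apply_self, bext_apply_self]
      rw [if_neg (by simp : ¬ (b ≠ b))]
      rw [Finset.sum_subtype (p := fun x => x ≠ i0) ({i0}ᶜ : Finset ι) (by simp)]
      rw [zero_add]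
      refine Finset.sum_congr rfl fun j _ => ?_
      rw [bext_apply_ne, bext_apply_ne]
    have hg0' : ∀ y y' : ι' → Bool, |g0 y - g0 y'| ≤ ∑ j, if y j ≠ y' j then c' j else 0 := by
      intro y y'
      rw [← hsum_ext false y y']
      exact hg _ _
    have hg1' : ∀ y y' : ι' → Bool, |g1 y - g1 y'| ≤ ∑ j, if y j ≠ y' j then c' j else 0 := by
      intro y y'
      rw [← hsum_ext true y y']
      exact hg _ _
    -- the two sub-slices
    have hS0ne : (bslice ι' k).Nonempty := bslice_nonempty (by omega)
    have hS1ne : (bslice ι' (k - 1)).Nonempty := bslice_nonempty (by omega)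
    set N0 : ℝ := ((bslice ι' k).card : ℝ) with hN0def
    set N1 : ℝ := ((bslice ι' (k - 1)).card : ℝ) with hN1def
    have hN0 : 0 < N0 := by rw [hN0def]; exact_mod_cast Finset.card_pos.2 hS0ne
    have hN1 : 0 < N1 := by rw [hN1def]; exact_mod_cast Finset.card_pos.2 hS1ne
    have cardsplit : ((bslice ι k).card : ℝ) = N0 + N1 := by
      have h := split (fun _ => (1 : ℝ))
      simp only [Finset.sum_const, nsmul_eq_mul, mul_one] at h
      exact h
    set μ : ℝ := (∑ y ∈ bslice ι k, g y) / ((bslice ι k).card : ℝ) with hμdef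
    set μ0 : ℝ := (∑ y ∈ bslice ι' k, g0 y) / N0 with hμ0def
    set μ1 : ℝ := (∑ y ∈ bslice ι' (k - 1), g1 y) / N1 with hμ1def
    have sumsplit : ∑ y ∈ bslice ι k, g y = N0 * μ0 + N1 * μ1 := by
      rw [hμ0def, hμ1def, mul_div_cancel₀ _ (ne_of_gt hN0), mul_div_cancel₀ _ (ne_of_gt hN1)]
      exact split g
    have hμeq : μ = (N0 * μ0 + N1 * μ1) / (N0 + N1) := by
      rw [hμdef, sumsplit, cardsplit]
    have hNN : (0:ℝ) < N0 + N1 := by linarith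
    have hinv : (N0 + N1) * (N0 + N1)⁻¹ = 1 := mul_inv_cancel₀ (ne_of_gt hNN)
    -- coupling bound
    have hdiff : |μ1 - μ0| ≤ 2 * c i0 := by
      refine mean_diff_le hk1 (by omega) g0 g1 (2 * c i0) ?_
      intro y hy j hj
      rw [hg1, hg0]
      refine (hg _ _).trans ?_
      rw [← Finset.sum_filter]
      have hsub : (Finset.univ.filter fun i =>
          bext i0 true (Function.update y j false) i ≠ bext i0 false y i) ⊆ {i0, j.1} := by
        intro i hi
        rw [Finset.mem_filter] at hi
        rw [Finset.mem_insert, Finset.mem_singleton]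
        by_contra hcon
        push_neg at hcon
        obtain ⟨hi0, hij⟩ := hcon
        apply hi.2
        rw [show i = (⟨i, hi0⟩ : ι').1 from rfl, bext_apply_ne, bext_apply_ne]
        rw [Function.update_of_ne (by simp [Subtype.ext_iff, hij])]
      refine (Finset.sum_le_sum_of_subset_of_nonneg hsub fun i _ _ => hc i).trans ?_
      rw [Finset.sum_pair (Ne.symm j.2)]
      have := hmax' j.1
      linarith
    have habs0 : |μ0 - μ| ≤ 2 * c i0 := by
      have e : μ0 - μ = (N1 / (N0 + N1)) * (μ0 - μ1) := by
        rw [hμeq]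
        linear_combination (-μ0) * hinv
      rw [e, abs_mul, abs_of_pos (div_pos hN1 hNN), abs_sub_comm]
      calc N1 / (N0 + N1) * |μ1 - μ0| ≤ 1 * (2 * c i0) := by
            refine mul_le_mul ?_ hdiff (abs_nonneg _) zero_le_one
            rw [div_le_one hNN]; linarith
        _ = 2 * c i0 := one_mul _
    have habs1 : |μ1 - μ| ≤ 2 * c i0 := by
      have e : μ1 - μ = (N0 / (N0 + N1)) * (μ1 - μ0) := by
        rw [hμeq]
        linear_combination (-μ1) * hinv
      rw [e, abs_mul, abs_of_pos (div_pos hN0 hNN)]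
      calc N0 / (N0 + N1) * |μ1 - μ0| ≤ 1 * (2 * c i0) := by
            refine mul_le_mul ?_ hdiff (abs_nonneg _) zero_le_one
            rw [div_le_one hNN]; linarith
        _ = 2 * c i0 := one_mul _
    have hmean0 : (N0 / (N0 + N1)) * (μ0 - μ) + (N1 / (N0 + N1)) * (μ1 - μ) = 0 := by
      rw [hμeq]
      linear_combination (-(N0 * μ0 + N1 * μ1) * (N0 + N1)⁻¹) * hinv
    -- induction hypotheses
    have IH0 := IH (N - 1) (by omega) hcard' k (by omega) c' (fun j => hc j.1) g0 hg0' L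
    have IH1 := IH (N - 1) (by omega) hcard' (k - 1) (by omega) c' (fun j => hc j.1) g1 hg1' L
    rw [← hμ0def] at IH0
    rw [← hμ1def] at IH1
    -- variance split
    have Vsplit : ∑ i : ι, c i ^ 2 = c i0 ^ 2 + ∑ j : ι', c' j ^ 2 := by
      rw [Fintype.sum_eq_add_sum_compl i0,
        Finset.sum_subtype (p := fun x => x ≠ i0) ({i0}ᶜ : Finset ι) (by simp)]
    set E' : ℝ := Real.exp (2 * L ^ 2 * ∑ j : ι', c' j ^ 2) with hE'
    have hE'pos : 0 < E' := Real.exp_pos _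
    -- main chain
    calc ∑ x ∈ bslice ι k, Real.exp (L * (g x - μ))
        = (∑ y ∈ bslice ι' k, Real.exp (L * (g0 y - μ)))
          + ∑ y ∈ bslice ι' (k - 1), Real.exp (L * (g1 y - μ)) :=
          split (fun x => Real.exp (L * (g x - μ)))
      _ = Real.exp (L * (μ0 - μ)) * (∑ y ∈ bslice ι' k, Real.exp (L * (g0 y - μ0)))
          + Real.exp (L * (μ1 - μ)) * ∑ y ∈ bslice ι' (k - 1), Real.exp (L * (g1 y - μ1)) := by
          rw [Finset.mul_sum, Finset.mul_sum]
          congr 1 <;> refine Finset.sum_congr rfl fun y _ => ?_ <;>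
            rw [← Real.exp_add] <;> congr 1 <;> ring
      _ ≤ Real.exp (L * (μ0 - μ)) * (N0 * E') + Real.exp (L * (μ1 - μ)) * (N1 * E') := by
          refine add_le_add ?_ ?_
          · exact mul_le_mul_of_nonneg_left IH0 (Real.exp_pos _).le
          · exact mul_le_mul_of_nonneg_left IH1 (Real.exp_pos _).le
      _ = (N0 + N1) * E' * ((N0 / (N0 + N1)) * Real.exp (L * (μ0 - μ))
            + (N1 / (N0 + N1)) * Real.exp (L * (μ1 - μ))) := by
          linear_combination (-(N0 * Real.exp (L * (μ0 - μ))
            + N1 * Real.exp (L * (μ1 - μ))) * E') * hinv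
      _ ≤ (N0 + N1) * E' * Real.exp (L ^ 2 * (2 * c i0) ^ 2 / 2) := by
          refine mul_le_mul_of_nonneg_left ?_ (by positivity)
          refine two_point_exp _ _ _ _ _ _ (by positivity) (by positivity) ?_ hmean0
            (by have := hc i0; linarith) habs0 habs1
          rw [← add_div, div_self (ne_of_gt hNN)]
      _ = ((bslice ι k).card : ℝ) * Real.exp (2 * L ^ 2 * ∑ i : ι, c i ^ 2) := by
          rw [cardsplit, hE', mul_assoc, ← Real.exp_add]
          congr 2
          rw [Vsplit]
          ring

end Main

section Tail

lemma tail_bound {ι : Type} [Fintype ι] [DecidableEq ι] (k : ℕ) (hk : k ≤ Fintype.card ι)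
    (c : ι → ℝ) (hc : ∀ i, 0 ≤ c i) (hV : 0 < ∑ i, c i ^ 2)
    (g : (ι → Bool) → ℝ)
    (hg : ∀ x x' : ι → Bool, |g x - g x'| ≤ ∑ i, if x i ≠ x' i then c i else 0)
    (t : ℝ) (ht : 0 ≤ t) :
    (((bslice ι k).filter fun x => t ≤ g x -
        (∑ y ∈ bslice ι k, g y) / ((bslice ι k).card : ℝ)).card : ℝ) ≤
      Real.exp (-t ^ 2 / (8 * ∑ i, c i ^ 2)) * ((bslice ι k).card : ℝ) := by
  classical
  set V : ℝ := ∑ i, c i ^ 2 with hVdef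
  set μ : ℝ := (∑ y ∈ bslice ι k, g y) / ((bslice ι k).card : ℝ) with hμ
  set L : ℝ := t / (4 * V) with hL
  have hL0 : 0 ≤ L := by positivity
  set F := (bslice ι k).filter fun x => t ≤ g x - μ with hF
  have h1 : (F.card : ℝ) * Real.exp (L * t) ≤
      ((bslice ι k).card : ℝ) * Real.exp (2 * L ^ 2 * V) := by
    calc (F.card : ℝ) * Real.exp (L * t) = ∑ _x ∈ F, Real.exp (L * t) := by
          rw [Finset.sum_const, nsmul_eq_mul]
      _ ≤ ∑ x ∈ F, Real.exp (L * (g x - μ)) := by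
          refine Finset.sum_le_sum fun x hx => ?_
          rw [Real.exp_le_exp]
          exact mul_le_mul_of_nonneg_left (Finset.mem_filter.1 hx).2 hL0
      _ ≤ ∑ x ∈ bslice ι k, Real.exp (L * (g x - μ)) :=
          Finset.sum_le_sum_of_subset_of_nonneg (Finset.filter_subset _ _)
            (fun _ _ _ => (Real.exp_pos _).le)
      _ ≤ ((bslice ι k).card : ℝ) * Real.exp (2 * L ^ 2 * V) :=
          mgf_bound (Fintype.card ι) rfl k hk c hc g hg L
  have h2 : (F.card : ℝ) ≤ ((bslice ι k).card : ℝ) * Real.exp (2 * L ^ 2 * V) /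
      Real.exp (L * t) := by
    rw [le_div_iff₀ (Real.exp_pos _)]
    exact h1
  refine h2.trans (le_of_eq ?_)
  rw [div_eq_mul_inv, ← Real.exp_neg, mul_assoc, ← Real.exp_add]
  rw [mul_comm (Real.exp _) ((bslice ι k).card : ℝ)]
  congr 1
  rw [hL]
  field_simp
  ring

end Tail

/-- Concentration inequality for functions with bounded differences on a slice
(words with exactly k ones) of the binary cube. -/
theorem stmt7 (n : ℕ) (hn : 1 ≤ n) (k : ℕ) (hk : k ≤ n)
    (c : Fin n → ℝ) (hc : ∀ i, 0 ≤ c i) (hc0 : ∃ i, c i ≠ 0)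
    (g : (Fin n → Bool) → ℝ)
    (hg : ∀ x x' : Fin n → Bool,
      |g x - g x'| ≤ ∑ i, if x i ≠ x' i then c i else 0)
    (t : ℝ) (ht : 0 ≤ t) :
    (((Finset.univ.filter fun x : Fin n → Bool =>
          (Finset.univ.filter fun i => x i = true).card = k).filter fun x =>
        t ≤ |g x -
          (∑ y ∈ Finset.univ.filter fun y : Fin n → Bool =>
              (Finset.univ.filter fun i => y i = true).card = k, g y) /
            ((Finset.univ.filter fun y : Fin n → Bool =>
              (Finset.univ.filter fun i => y i = true).card = k).card : ℝ)|).card : ℝ) ≤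
      2 * Real.exp (-t ^ 2 / (8 * ∑ i, (c i) ^ 2)) *
        ((Finset.univ.filter fun x : Fin n → Bool =>
          (Finset.univ.filter fun i => x i = true).card = k).card : ℝ) := by
  classical
  have hcardFin : Fintype.card (Fin n) = n := Fintype.card_fin n
  have hV : 0 < ∑ i, c i ^ 2 := by
    obtain ⟨i, hi⟩ := hc0
    exact Finset.sum_pos' (fun j _ => sq_nonneg _) ⟨i, Finset.mem_univ i, by positivity⟩
  set S : Finset (Fin n → Bool) := bslice (Fin n) k with hS
  have hSeq : (Finset.univ.filter fun x : Fin n → Bool =>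
      (Finset.univ.filter fun i => x i = true).card = k) = S := rfl
  rw [hSeq]
  set μ : ℝ := (∑ y ∈ S, g y) / (S.card : ℝ) with hμ
  -- the function -g also has bounded differences
  have hgneg : ∀ x x' : Fin n → Bool,
      |(fun z => -g z) x - (fun z => -g z) x'| ≤ ∑ i, if x i ≠ x' i then c i else 0 := by
    intro x x'
    simp only
    rw [show -g x - -g x' = -(g x - g x') by ring, abs_neg]
    exact hg x x'
  have tail1 := tail_bound k (by rw [hcardFin]; exact hk) c hc hV g hg t ht
  have tail2 := tail_bound k (by rw [hcardFin]; exact hk) c hc hV (fun z => -g z) hgneg t ht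
  rw [← hS, ← hμ] at tail1
  have hμneg : (∑ y ∈ bslice (Fin n) k, -g y) / ((bslice (Fin n) k).card : ℝ) = -μ := by
    rw [← hS, hμ, Finset.sum_neg_distrib, neg_div]
  rw [← hS] at tail2
  rw [hμneg] at tail2
  -- split the absolute value event
  have hsubset : (S.filter fun x => t ≤ |g x - μ|) ⊆
      (S.filter fun x => t ≤ g x - μ) ∪ (S.filter fun x => t ≤ -g x - -μ) := by
    intro x hx
    rw [Finset.mem_filter] at hx
    rw [Finset.mem_union, Finset.mem_filter, Finset.mem_filter]
    rcases le_abs.1 hx.2 with h | h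
    · exact Or.inl ⟨hx.1, h⟩
    · exact Or.inr ⟨hx.1, by linarith⟩
  calc ((S.filter fun x => t ≤ |g x - μ|).card : ℝ)
      ≤ (((S.filter fun x => t ≤ g x - μ) ∪ (S.filter fun x => t ≤ -g x - -μ)).card : ℝ) := by
        exact_mod_cast Finset.card_le_card hsubset
    _ ≤ ((S.filter fun x => t ≤ g x - μ).card : ℝ)
        + ((S.filter fun x => t ≤ -g x - -μ).card : ℝ) := by
        exact_mod_cast Finset.card_union_le _ _
    _ ≤ Real.exp (-t ^ 2 / (8 * ∑ i, c i ^ 2)) * (S.card : ℝ)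
        + Real.exp (-t ^ 2 / (8 * ∑ i, c i ^ 2)) * (S.card : ℝ) := add_le_add tail1 tail2
    _ = 2 * Real.exp (-t ^ 2 / (8 * ∑ i, c i ^ 2)) * (S.card : ℝ) := by ring
end

section
/- Let n ≥ 2 and 2 ≤ k ≤ n be integers. For J ⊆ {1,…,n}, let D_J = {σ ∈ S_n : σ(i) ≠ i if and only if i ∈ J}. Suppose f is a real-valued function on the permutations with exactly k non-fixed points satisfying |f(σ) − f(τ)| ≤ Δ(σ,τ) for all such σ, τ, and for a k-element set J ⊆ {1,…,n} let g(J) denote the average of f over D_J. Then for any two k-element sets J, J' ⊆ {1,…,n} with |J ∩ J'| = k−1, one has |g(J) − g(J')| ≤ 3. -/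
open Finset

/-- The Hamming distance between two permutations. -/
def permDist {n : ℕ} (σ τ : Equiv.Perm (Fin n)) : ℕ :=
  (Finset.univ.filter fun i => σ i ≠ τ i).card

/-- The set of permutations whose set of non-fixed points is exactly J. -/
def derangeOn {n : ℕ} (J : Finset (Fin n)) : Finset (Equiv.Perm (Fin n)) :=
  Finset.univ.filter fun σ => ∀ i, σ i ≠ i ↔ i ∈ J

/-- If f is Lipschitz on permutations with exactly k non-fixed points, then the
averages of f over D_J and D_J' differ by at most 3 whenever |J ∩ J'| = k-1. -/
theorem stmt9 (n k : ℕ) (hn : 2 ≤ n) (hk : 2 ≤ k) (hkn : k ≤ n)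
    (f : Equiv.Perm (Fin n) → ℝ)
    (hf : ∀ σ τ : Equiv.Perm (Fin n),
      (Finset.univ.filter fun i => σ i ≠ i).card = k →
      (Finset.univ.filter fun i => τ i ≠ i).card = k →
      |f σ - f τ| ≤ (permDist σ τ : ℝ))
    (J J' : Finset (Fin n)) (hJ : J.card = k) (hJ' : J'.card = k)
    (hJJ' : (J ∩ J').card = k - 1) :
    |(∑ σ ∈ derangeOn J, f σ) / ((derangeOn J).card : ℝ) -
      (∑ σ ∈ derangeOn J', f σ) / ((derangeOn J').card : ℝ)| ≤ 3 := by
  classical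
  have hcard1 : (J \ J').card = 1 := by
    have h := Finset.card_sdiff_add_card_inter J J'
    omega
  have hcard2 : (J' \ J).card = 1 := by
    have h := Finset.card_sdiff_add_card_inter J' J
    rw [Finset.inter_comm] at h
    omega
  obtain ⟨a, ha⟩ := Finset.card_eq_one.mp hcard1
  obtain ⟨b, hb⟩ := Finset.card_eq_one.mp hcard2
  have haa : a ∈ J \ J' := ha ▸ Finset.mem_singleton_self a
  have hbb : b ∈ J' \ J := hb ▸ Finset.mem_singleton_self b
  rw [Finset.mem_sdiff] at haa hbb
  obtain ⟨haJ, haJ'⟩ := haa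
  obtain ⟨hbJ', hbJ⟩ := hbb
  have hab : a ≠ b := fun h => hbJ (h ▸ haJ)
  set e := Equiv.swap a b with he
  have hee : ∀ i, e (e i) = i := fun i => Equiv.swap_apply_self a b i
  have hswapmem : ∀ i : Fin n, e i ∈ J ↔ i ∈ J' := by
    intro i
    rcases eq_or_ne i a with rfl | hia
    · rw [he, Equiv.swap_apply_left]
      exact iff_of_false hbJ haJ'
    rcases eq_or_ne i b with rfl | hib
    · rw [he, Equiv.swap_apply_right]
      exact iff_of_true haJ hbJ'
    · rw [he, Equiv.swap_apply_of_ne_of_ne hia hib]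
      constructor
      · intro h
        by_contra h'
        exact hia (Finset.mem_singleton.mp (ha ▸ Finset.mem_sdiff.mpr ⟨h, h'⟩))
      · intro h
        by_contra h'
        exact hib (Finset.mem_singleton.mp (hb ▸ Finset.mem_sdiff.mpr ⟨h, h'⟩))
  have hswapmem' : ∀ i : Fin n, e i ∈ J' ↔ i ∈ J := by
    intro i
    have h := hswapmem (e i)
    rw [hee] at h
    exact h.symm
  -- generic membership transport
  have key : ∀ (K K' : Finset (Fin n)), (∀ i, e i ∈ K ↔ i ∈ K') →
      ∀ σ, σ ∈ derangeOn K → e * σ * e ∈ derangeOn K' := by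
    intro K K' hmem σ hσ
    simp only [derangeOn, Finset.mem_filter, Finset.mem_univ, true_and] at hσ ⊢
    intro i
    have hred : (e * σ * e) i ≠ i ↔ σ (e i) ≠ e i := by
      constructor
      · intro h hc
        apply h
        show e (σ (e i)) = i
        rw [hc, hee]
      · intro h hc
        apply h
        have hc' : e (σ (e i)) = i := hc
        have := congrArg e hc'
        rwa [hee] at this
    exact hred.trans ((hσ (e i)).trans (hmem i))
  have hmemD : ∀ σ, σ ∈ derangeOn J → e * σ * e ∈ derangeOn J' := key J J' hswapmem
  have hmemD' : ∀ σ, σ ∈ derangeOn J' → e * σ * e ∈ derangeOn J := key J' J hswapmem'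
  have hinv : ∀ τ : Equiv.Perm (Fin n), e * (e * τ * e) * e = τ := by
    intro τ
    ext i
    simp only [Equiv.Perm.mul_apply]
    rw [hee, hee]
  have hinj : Set.InjOn (fun σ => e * σ * e) (derangeOn J) := by
    intro x _ y _ h
    simp only at h
    exact mul_left_cancel (mul_right_cancel h)
  have hImg : derangeOn J' = (derangeOn J).image (fun σ => e * σ * e) := by
    ext τ
    simp only [Finset.mem_image]
    constructor
    · intro hτ
      exact ⟨e * τ * e, hmemD' τ hτ, hinv τ⟩
    · rintro ⟨σ, hσ, rfl⟩
      exact hmemD σ hσ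
  have hsum : ∑ σ ∈ derangeOn J', f σ = ∑ σ ∈ derangeOn J, f (e * σ * e) := by
    rw [hImg, Finset.sum_image (fun x hx y hy h => hinj hx hy h)]
  have hcardeq : (derangeOn J').card = (derangeOn J).card := by
    rw [hImg, Finset.card_image_of_injOn hinj]
  have hfilt : ∀ (K : Finset (Fin n)) (σ : Equiv.Perm (Fin n)), σ ∈ derangeOn K →
      (Finset.univ.filter fun i => σ i ≠ i) = K := by
    intro K σ hσ
    simp only [derangeOn, Finset.mem_filter, Finset.mem_univ, true_and] at hσ
    ext i
    simp [hσ i]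
  have hdist : ∀ σ ∈ derangeOn J, permDist σ (e * σ * e) ≤ 3 := by
    intro σ hσ
    have hσ' := hσ
    simp only [derangeOn, Finset.mem_filter, Finset.mem_univ, true_and] at hσ'
    have hsub : (Finset.univ.filter fun i => σ i ≠ (e * σ * e) i) ⊆
        ({a, b, σ⁻¹ a} : Finset (Fin n)) := by
      intro i hi
      rw [Finset.mem_filter] at hi
      by_contra hcon
      simp only [Finset.mem_insert, Finset.mem_singleton] at hcon
      push_neg at hcon
      obtain ⟨hia, hib, hic⟩ := hcon
      have hei : e i = i := Equiv.swap_apply_of_ne_of_ne hia hib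
      have hσib : σ i ≠ b := by
        intro h
        have hb' : σ b = b := by
          by_contra hc
          exact hbJ ((hσ' b).mp hc)
        exact hib (σ.injective (h.trans hb'.symm))
      have hσia : σ i ≠ a := by
        intro h
        apply hic
        rw [← h]; exact (σ.symm_apply_apply i).symm
      apply hi.2
      have : (e * σ * e) i = e (σ (e i)) := rfl
      rw [this, hei, Equiv.swap_apply_of_ne_of_ne hσia hσib]
    have h0 := Finset.card_le_card hsub
    have h1 := Finset.card_insert_le a ({b, σ⁻¹ a} : Finset (Fin n))
    have h2 := Finset.card_insert_le b ({σ⁻¹ a} : Finset (Fin n))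
    simp only [Finset.card_singleton] at h2
    unfold permDist
    omega
  have hbound : ∀ σ ∈ derangeOn J, |f σ - f (e * σ * e)| ≤ 3 := by
    intro σ hσ
    have h1 : (Finset.univ.filter fun i => σ i ≠ i).card = k := by
      rw [hfilt J σ hσ, hJ]
    have h2 : (Finset.univ.filter fun i => (e * σ * e) i ≠ i).card = k := by
      rw [hfilt J' _ (hmemD σ hσ), hJ']
    calc |f σ - f (e * σ * e)| ≤ (permDist σ (e * σ * e) : ℝ) := hf _ _ h1 h2
      _ ≤ 3 := by exact_mod_cast hdist σ hσ
  by_cases h0 : (derangeOn J).card = 0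
  · have hJ0 : derangeOn J = ∅ := Finset.card_eq_zero.mp h0
    have hJ'0 : derangeOn J' = ∅ := Finset.card_eq_zero.mp (hcardeq.trans h0)
    rw [hJ0, hJ'0]
    simp
  · have hN : (0:ℝ) < ((derangeOn J).card : ℝ) :=
      Nat.cast_pos.mpr (Nat.pos_of_ne_zero h0)
    rw [hsum, hcardeq, div_sub_div_same, ← Finset.sum_sub_distrib, abs_div,
      abs_of_pos hN, div_le_iff₀ hN]
    calc |∑ σ ∈ derangeOn J, (f σ - f (e * σ * e))|
        ≤ ∑ σ ∈ derangeOn J, |f σ - f (e * σ * e)| := Finset.abs_sum_le_sum_abs _ _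
      _ ≤ ∑ _σ ∈ derangeOn J, (3:ℝ) := Finset.sum_le_sum hbound
      _ = 3 * ((derangeOn J).card : ℝ) := by
          rw [Finset.sum_const, nsmul_eq_mul, mul_comm]
end

section
/- Let q ≥ 2 be an integer and let p be a real number with 0 < p < (q−1)/q. There exist c > 0 and n₀ (depending only on p and q) such that for every n ≥ n₀ and every integer t with 0 ≤ t < ⌊pn⌋: vol_q(n, ⌊pn⌋ − t) ≤ 2·e^{−ct}·vol_q(n, ⌊pn⌋). -/
open Finset

/-- Exponential growth of the volume of q-ary Hamming balls at radius ⌊pn⌋. -/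
theorem stmt11 (q : ℕ) (hq : 2 ≤ q) (p : ℝ) (hp : 0 < p) (hp' : p < ((q : ℝ) - 1) / q) :
    ∃ c > (0 : ℝ), ∃ n₀ : ℕ, ∀ n : ℕ, n₀ ≤ n → ∀ t : ℕ, t < ⌊p * (n : ℝ)⌋₊ →
      (∑ i ∈ Finset.range (⌊p * (n : ℝ)⌋₊ - t + 1), (n.choose i : ℝ) * ((q : ℝ) - 1) ^ i) ≤
        2 * Real.exp (-c * t) *
          ∑ i ∈ Finset.range (⌊p * (n : ℝ)⌋₊ + 1), (n.choose i : ℝ) * ((q : ℝ) - 1) ^ i := by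
  have hq1 : (1:ℝ) ≤ (q:ℝ) - 1 := by
    have : (2:ℝ) ≤ q := by exact_mod_cast hq
    linarith
  have hqpos : (0:ℝ) < q := by linarith
  have hp1 : p < 1 := lt_of_lt_of_le hp' (by rw [div_le_one hqpos]; linarith)
  set K : ℝ := (1 - p) * ((q:ℝ) - 1) / p with hK
  have hKp : K * p = (1 - p) * ((q:ℝ) - 1) := by
    rw [hK, div_mul_cancel₀ _ hp.ne']
  have hK1 : 1 < K := by
    rw [hK, lt_div_iff₀ hp]
    have h1 : p * q < (q:ℝ) - 1 := by
      rw [lt_div_iff₀ hqpos] at hp'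
      linarith
    nlinarith
  set lam : ℝ := (1 + K) / 2 with hlam
  have hlam1 : 1 < lam := by rw [hlam]; linarith
  have hlamK : lam ≤ K := by rw [hlam]; linarith
  have hlampos : (0:ℝ) < lam := by linarith
  refine ⟨Real.log lam, Real.log_pos hlam1, 0, fun n _ t ht => ?_⟩
  set r := ⌊p * (n : ℝ)⌋₊ with hr
  have hrn : (r : ℝ) ≤ p * n := Nat.floor_le (by positivity)
  have htr : t ≤ r := le_of_lt ht
  set a : ℕ → ℝ := fun i => (n.choose i : ℝ) * ((q : ℝ) - 1) ^ i with ha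
  have hanonneg : ∀ i, 0 ≤ a i := fun i => by
    apply mul_nonneg (Nat.cast_nonneg _)
    positivity
  -- step inequality
  have step : ∀ i, i + 1 ≤ r → lam * a i ≤ a (i + 1) := by
    intro i hi
    have hi1 : (i : ℝ) + 1 ≤ p * n := by
      have : ((i + 1 : ℕ) : ℝ) ≤ (r : ℝ) := by exact_mod_cast hi
      push_cast at this
      linarith
    have hin : i < n := by
      by_contra h
      push_neg at h
      have : (n : ℝ) ≤ i := by exact_mod_cast h
      nlinarith [show (0:ℝ) ≤ (n:ℝ) from Nat.cast_nonneg n]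
    have hpn : (0:ℝ) < p * n := lt_of_lt_of_le (show (0:ℝ) < (i:ℝ)+1 by positivity) hi1
    have hkey : lam * ((i : ℝ) + 1) ≤ ((n : ℝ) - i) * ((q:ℝ) - 1) := by
      have h1 : lam * ((i:ℝ)+1) ≤ lam * (p*n) := mul_le_mul_of_nonneg_left hi1 hlampos.le
      have h2 : lam * (p*n) ≤ K * (p*n) := mul_le_mul_of_nonneg_right hlamK hpn.le
      have h3 : K * (p*n) = (1-p)*((q:ℝ)-1)*n := by rw [← hKp]; ring
      have h4 : (1-p)*((q:ℝ)-1)*n ≤ ((n:ℝ) - i) * ((q:ℝ)-1) := by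
        nlinarith [mul_le_mul_of_nonneg_left (show (1:ℝ) ≤ p*n - i by linarith)
          (show (0:ℝ) ≤ (q:ℝ)-1 by linarith)]
      linarith
    have hchoose : ((n.choose (i+1) : ℝ)) * ((i:ℝ) + 1) = (n.choose i : ℝ) * ((n:ℝ) - i) := by
      have := Nat.choose_succ_right_eq n i
      have hcast : ((n.choose (i+1) * (i+1) : ℕ) : ℝ) = ((n.choose i * (n - i) : ℕ) : ℝ) := by
        exact_mod_cast congrArg (Nat.cast : ℕ → ℝ) this
      push_cast [Nat.cast_sub (le_of_lt hin)] at hcast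
      linarith
    have hQi : (0:ℝ) < ((q:ℝ) - 1) ^ i := by positivity
    have hcnn : (0:ℝ) ≤ (n.choose i : ℝ) := Nat.cast_nonneg _
    have hip : (0:ℝ) < (i:ℝ) + 1 := by positivity
    rw [ha]
    simp only []
    rw [pow_succ]
    -- goal: lam * (choose i * Q^i) ≤ choose (i+1) * (Q^i * Q)
    rw [← mul_le_mul_iff_of_pos_right hip]
    calc lam * ((n.choose i : ℝ) * ((q:ℝ) - 1) ^ i) * ((i:ℝ) + 1)
        = (lam * ((i:ℝ) + 1)) * ((n.choose i : ℝ) * ((q:ℝ) - 1) ^ i) := by ring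
      _ ≤ (((n:ℝ) - i) * ((q:ℝ) - 1)) * ((n.choose i : ℝ) * ((q:ℝ) - 1) ^ i) := by
          apply mul_le_mul_of_nonneg_right hkey
          exact mul_nonneg hcnn (le_of_lt hQi)
      _ = ((n.choose (i+1) : ℝ)) * ((i:ℝ) + 1) * (((q:ℝ) - 1) ^ i * ((q:ℝ) - 1)) := by
          rw [hchoose]; ring
      _ = (n.choose (i+1) : ℝ) * (((q:ℝ) - 1) ^ i * ((q:ℝ) - 1)) * ((i:ℝ) + 1) := by ring
  -- iterated step
  have key : ∀ s i, i + s ≤ r → lam ^ s * a i ≤ a (i + s) := by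
    intro s
    induction s with
    | zero => intro i _; simp
    | succ m ih =>
      intro i hi
      have h1 : i + m ≤ r := by omega
      have h2 : lam ^ m * a i ≤ a (i + m) := ih i h1
      calc lam ^ (m+1) * a i = lam * (lam ^ m * a i) := by ring
        _ ≤ lam * a (i + m) := by
            apply mul_le_mul_of_nonneg_left h2 (le_of_lt hlampos)
        _ ≤ a (i + m + 1) := step (i + m) (by omega)
        _ = a (i + (m + 1)) := by ring_nf
  -- sum comparison
  have hsum : lam ^ t * (∑ i ∈ Finset.range (r - t + 1), a i) ≤ ∑ i ∈ Finset.range (r + 1), a i := by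
    rw [Finset.mul_sum]
    calc ∑ i ∈ Finset.range (r - t + 1), lam ^ t * a i
        ≤ ∑ i ∈ Finset.range (r - t + 1), a (i + t) := by
          apply Finset.sum_le_sum
          intro i hi
          apply key
          simp only [Finset.mem_range] at hi
          omega
      _ = ∑ j ∈ Finset.Ico t (r + 1), a j := by
          rw [Finset.sum_Ico_eq_sum_range]
          have : r + 1 - t = r - t + 1 := by omega
          rw [this]
          apply Finset.sum_congr rfl
          intro i _
          rw [Nat.add_comm]
      _ ≤ ∑ j ∈ Finset.range (r + 1), a j := by
          apply Finset.sum_le_sum_of_subset_of_nonneg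
          · intro x hx
            simp only [Finset.mem_Ico] at hx
            simp only [Finset.mem_range]
            omega
          · intro i _ _
            exact hanonneg i
  have hltpos : (0:ℝ) < lam ^ t := pow_pos hlampos t
  have hexp : Real.exp (-(Real.log lam) * t) = (lam ^ t)⁻¹ := by
    rw [neg_mul, Real.exp_neg]
    congr 1
    rw [mul_comm, Real.exp_nat_mul, Real.exp_log hlampos]
  have hS2 : (0:ℝ) ≤ ∑ i ∈ Finset.range (r + 1), a i :=
    Finset.sum_nonneg fun i _ => hanonneg i
  have hS1 : ∑ i ∈ Finset.range (r - t + 1), a i ≤ (lam ^ t)⁻¹ * ∑ i ∈ Finset.range (r + 1), a i := by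
    rw [← mul_le_mul_iff_of_pos_left hltpos]
    calc lam ^ t * (∑ i ∈ Finset.range (r - t + 1), a i)
        ≤ ∑ i ∈ Finset.range (r + 1), a i := hsum
      _ = lam ^ t * ((lam ^ t)⁻¹ * ∑ i ∈ Finset.range (r + 1), a i) := by
          rw [← mul_assoc, mul_inv_cancel₀ (ne_of_gt hltpos), one_mul]
  rw [hexp]
  calc (∑ i ∈ Finset.range (r - t + 1), a i)
      ≤ (lam ^ t)⁻¹ * ∑ i ∈ Finset.range (r + 1), a i := hS1
    _ ≤ 2 * (lam ^ t)⁻¹ * ∑ i ∈ Finset.range (r + 1), a i := by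
        apply mul_le_mul_of_nonneg_right _ hS2
        nlinarith [inv_pos.mpr hltpos]
end

section
/- Let q ≥ 2 and n ≥ 1 be integers, let a, b ∈ {0,1,…,q−1}^n with Δ(a,b) = k, and let s be an integer with 0 ≤ s ≤ n. Let x be drawn uniformly at random from the Hamming sphere S(a,s) = {x ∈ {0,1,…,q−1}^n : Δ(x,a) = s} (which is non-empty). Then E[Δ(x,b) − Δ(x,a)] = k·(1 − s/n − s/((q−1)n)). -/
/-!
Write `Δ(x,b) - Δ(x,a)` as the sum over coordinates of `[x i = a i] - [x i = b i]`; coordinates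
where `a` and `b` agree contribute nothing. Deleting a coordinate `i` identifies the words of
`S(a,s)` with `x i = c` with a Hamming sphere of one dimension less, of radius `s` if `c = a i`
and `s - 1` otherwise. Since `|S(a,s)| = C(n,s) (q-1)^s`, on `S(a,s)` the frequency of
`x i = a i` is `1 - s/n` and that of `x i = c ≠ a i` is `s/((q-1)n)`, so each of the `k`
coordinates where `a` and `b` differ contributes `1 - s/n - s/((q-1)n)`.
-/

open Finset

lemma choose_mul_succ_add_choose_succ_mul (m s : ℕ) :
    m.choose s * (m + 1) + (m + 1).choose s * s = (m + 1).choose s * (m + 1) := by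
  cases s with
  | zero => simp
  | succ t => rw [← Nat.add_one_mul_choose_eq, Nat.choose_succ_succ]; ring

section HammingSphere

variable {ι α : Type*} [Fintype ι] [DecidableEq α]

lemma hammingDist_sub_hammingDist_eq_sum (x a b : ι → α) :
    (hammingDist x b : ℝ) - hammingDist x a =
      ∑ i, ((if x i = a i then 1 else 0) - (if x i = b i then 1 else 0)) := by
  simp only [hammingDist, card_filter, Nat.cast_sum, ← sum_sub_distrib]
  refine sum_congr rfl fun i _ => ?_
  split_ifs <;> simp_all

variable [DecidableEq ι]

lemma card_subtype_ne (i : ι) : Fintype.card {j // j ≠ i} = Fintype.card ι - 1 :=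
  Set.card_ne_eq i

lemma hammingDist_eq_ite_add_hammingDist_subtype_ne (x y : ι → α) (i : ι) :
    hammingDist x y =
      (if x i = y i then 0 else 1) + hammingDist (fun j : {j // j ≠ i} => x j) (fun j => y j) := by
  simp only [hammingDist, card_filter]
  rw [Fintype.sum_eq_add_sum_subtype_ne _ i]
  simp [ite_not]

variable [Fintype α]

def hammingSphere (a : ι → α) (s : ℕ) : Finset (ι → α) :=
  univ.filter fun x => hammingDist x a = s

@[simp]
lemma mem_hammingSphere {a x : ι → α} {s : ℕ} : x ∈ hammingSphere a s ↔ hammingDist x a = s := by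
  simp [hammingSphere]

lemma filter_disagree_eq_piFinset (a : ι → α) (T : Finset ι) :
    (univ.filter fun x : ι → α => univ.filter (fun i => x i ≠ a i) = T) =
      Fintype.piFinset fun i => if i ∈ T then univ.erase (a i) else {a i} := by
  ext x
  simp only [mem_filter, mem_univ, true_and, Fintype.mem_piFinset, Finset.ext_iff]
  refine forall_congr' fun i => ?_
  split_ifs with hi <;> simp [hi]

lemma card_hammingSphere (a : ι → α) (s : ℕ) :
    #(hammingSphere a s) = (Fintype.card ι).choose s * (Fintype.card α - 1) ^ s := by
  have hmaps : Set.MapsTo (fun x : ι → α => univ.filter fun i => x i ≠ a i) (hammingSphere a s)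
      (powersetCard s (univ : Finset ι)) := fun x hx => by
    simpa [hammingDist] using hx
  rw [card_eq_sum_card_fiberwise hmaps, ← card_univ (α := ι),
    ← card_powersetCard, ← smul_eq_mul, ← sum_const]
  refine sum_congr rfl fun T hT => ?_
  obtain ⟨-, hTs⟩ := mem_powersetCard.mp hT
  have : (hammingSphere a s).filter (fun x => univ.filter (fun i => x i ≠ a i) = T) =
      univ.filter fun x : ι → α => univ.filter (fun i => x i ≠ a i) = T := by
    ext x
    simp only [mem_filter, mem_hammingSphere, mem_univ, true_and, and_iff_right_iff_imp]
    rintro rfl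
    exact hTs
  rw [this, filter_disagree_eq_piFinset, Fintype.card_piFinset]
  simp [apply_ite, prod_ite_mem, hTs]

lemma card_filter_hammingSphere_apply_eq (a : ι → α) (s : ℕ) (i : ι) (c : α) :
    #((hammingSphere a s).filter (· i = c)) =
      #(univ.filter fun y : {j // j ≠ i} → α =>
        (if c = a i then 0 else 1) + hammingDist y (fun j => a j) = s) := by
  refine card_nbij' (fun x => (Equiv.funSplitAt i α x).2)
    (fun y => (Equiv.funSplitAt i α).symm (c, y)) ?_ ?_ ?_ ?_
  · intro x hx
    simp only [coe_filter, mem_hammingSphere, Set.mem_ofPred_eq] at hx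
    simp [← hx.1, hammingDist_eq_ite_add_hammingDist_subtype_ne x a i, hx.2]
  · intro y hy
    simp only [coe_filter, mem_univ, true_and, Set.mem_ofPred_eq] at hy
    have hrestrict : (fun j : {j // j ≠ i} => (Equiv.funSplitAt i α).symm (c, y) j) = y :=
      funext fun j => by simp [j.2]
    simp only [coe_filter, mem_hammingSphere, Set.mem_ofPred_eq,
      hammingDist_eq_ite_add_hammingDist_subtype_ne _ a i, hrestrict, ← hy]
    simp
  · intro x hx
    simp only [coe_filter, mem_hammingSphere, Set.mem_ofPred_eq] at hx
    rw [← hx.2]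
    exact (Equiv.funSplitAt i α).symm_apply_apply x
  · intro y _
    simp

lemma card_filter_hammingSphere_apply_eq_self_mul (a : ι → α) (s : ℕ) (i : ι) :
    #((hammingSphere a s).filter (· i = a i)) * Fintype.card ι + #(hammingSphere a s) * s =
      #(hammingSphere a s) * Fintype.card ι := by
  obtain ⟨m, hm⟩ := Nat.exists_eq_add_one.mpr (Fintype.card_pos_iff.mpr ⟨i⟩)
  rw [card_filter_hammingSphere_apply_eq, if_pos rfl]
  simp only [zero_add]
  rw [← hammingSphere, card_hammingSphere, card_hammingSphere, card_subtype_ne, hm,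
    Nat.add_sub_cancel]
  calc _ = (m.choose s * (m + 1) + (m + 1).choose s * s) * (Fintype.card α - 1) ^ s := by ring
    _ = _ := by rw [choose_mul_succ_add_choose_succ_mul]; ring

lemma card_filter_hammingSphere_apply_eq_of_ne_mul (a : ι → α) (s : ℕ) {i : ι} {c : α}
    (hc : c ≠ a i) :
    #((hammingSphere a s).filter (· i = c)) * (Fintype.card ι * (Fintype.card α - 1)) =
      #(hammingSphere a s) * s := by
  obtain ⟨m, hm⟩ := Nat.exists_eq_add_one.mpr (Fintype.card_pos_iff.mpr ⟨i⟩)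
  rw [card_filter_hammingSphere_apply_eq, if_neg hc]
  cases s with
  | zero => simp
  | succ t =>
    simp only [add_comm 1, Nat.add_right_cancel_iff]
    rw [← hammingSphere, card_hammingSphere, card_hammingSphere, card_subtype_ne, hm,
      Nat.add_sub_cancel, pow_succ]
    calc _ = (m + 1) * m.choose t * (Fintype.card α - 1) ^ t * (Fintype.card α - 1) := by ring
      _ = _ := by rw [Nat.add_one_mul_choose_eq]; ring

lemma sum_hammingSphere_apply_eq_sub_apply_eq (a b : ι → α) (s : ℕ) {i : ι} (hab : a i ≠ b i) :
    ∑ x ∈ hammingSphere a s, ((if x i = a i then 1 else 0) - (if x i = b i then 1 else 0) : ℝ) =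
      #(hammingSphere a s) *
        (1 - s / Fintype.card ι - s / ((Fintype.card α - 1) * Fintype.card ι)) := by
  have hι : (0 : ℝ) < Fintype.card ι := by exact_mod_cast Fintype.card_pos_iff.mpr ⟨i⟩
  have hα : 1 < Fintype.card α := Fintype.one_lt_card_iff.mpr ⟨a i, b i, hab⟩
  have hα' : (0 : ℝ) < Fintype.card α - 1 := by
    rw [sub_pos]; exact_mod_cast hα
  have hself : (#((hammingSphere a s).filter (· i = a i)) : ℝ) * Fintype.card ι +
      #(hammingSphere a s) * s = #(hammingSphere a s) * Fintype.card ι := by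
    exact_mod_cast card_filter_hammingSphere_apply_eq_self_mul a s i
  have hother : (#((hammingSphere a s).filter (· i = b i)) : ℝ) *
      (Fintype.card ι * (Fintype.card α - 1)) = #(hammingSphere a s) * s := by
    rw [← Nat.cast_one, ← Nat.cast_sub hα.le]
    exact_mod_cast card_filter_hammingSphere_apply_eq_of_ne_mul a s hab.symm
  rw [sum_sub_distrib, sum_boole, sum_boole]
  field_simp
  linear_combination (Fintype.card α - 1 : ℝ) * hself - hother

lemma sum_hammingSphere_hammingDist_sub (a b : ι → α) (s : ℕ) :
    ∑ x ∈ hammingSphere a s, ((hammingDist x b : ℝ) - hammingDist x a) =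
      hammingDist a b * (#(hammingSphere a s) *
        (1 - s / Fintype.card ι - s / ((Fintype.card α - 1) * Fintype.card ι))) := by
  have hcoord : ∀ i, ∑ x ∈ hammingSphere a s,
      ((if x i = a i then 1 else 0) - (if x i = b i then 1 else 0) : ℝ) =
        if a i = b i then (0 : ℝ) else #(hammingSphere a s) *
          (1 - s / Fintype.card ι - s / ((Fintype.card α - 1) * Fintype.card ι)) := by
    intro i
    split_ifs with hab
    · simp [hab]
    · exact sum_hammingSphere_apply_eq_sub_apply_eq a b s hab
  rw [sum_congr rfl fun x _ => hammingDist_sub_hammingDist_eq_sum x a b, sum_comm,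
    sum_congr rfl fun i _ => hcoord i, sum_ite, sum_const_zero, zero_add, sum_const, nsmul_eq_mul]
  rfl

end HammingSphere

theorem stmt12_general (q n : ℕ) (hq : 2 ≤ q) (a b : Fin n → Fin q)
    (k s : ℕ) (hk : hammingDist a b = k) (hs : s ≤ n) :
    (Finset.univ.filter fun x : Fin n → Fin q => hammingDist x a = s).Nonempty ∧
    (∑ x ∈ Finset.univ.filter fun x : Fin n → Fin q => hammingDist x a = s,
        ((hammingDist x b : ℝ) - (hammingDist x a : ℝ))) /
      ((Finset.univ.filter fun x : Fin n → Fin q => hammingDist x a = s).card : ℝ) =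
      (k : ℝ) * (1 - (s : ℝ) / n - (s : ℝ) / (((q : ℝ) - 1) * n)) := by
  change (hammingSphere a s).Nonempty ∧
    (∑ x ∈ hammingSphere a s, ((hammingDist x b : ℝ) - hammingDist x a)) /
      (#(hammingSphere a s) : ℝ) = _
  have hcard : 0 < #(hammingSphere a s) := by
    rw [card_hammingSphere, Fintype.card_fin, Fintype.card_fin]
    exact Nat.mul_pos (Nat.choose_pos hs) (pow_pos (by omega) s)
  refine ⟨card_pos.mp hcard, ?_⟩
  rw [div_eq_iff (by positivity), sum_hammingSphere_hammingDist_sub, hk]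
  simp only [Fintype.card_fin]
  ring

/-- Exact expectation of d(x,b) - d(x,a) for x uniform on a Hamming sphere around a. -/
theorem stmt12 (q n : ℕ) (hq : 2 ≤ q) (hn : 1 ≤ n) (a b : Fin n → Fin q)
    (k s : ℕ) (hk : hammingDist a b = k) (hs : s ≤ n) :
    (Finset.univ.filter fun x : Fin n → Fin q => hammingDist x a = s).Nonempty ∧
    (∑ x ∈ Finset.univ.filter fun x : Fin n → Fin q => hammingDist x a = s,
        ((hammingDist x b : ℝ) - (hammingDist x a : ℝ))) /
      ((Finset.univ.filter fun x : Fin n → Fin q => hammingDist x a = s).card : ℝ) =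
      (k : ℝ) * (1 - (s : ℝ) / n - (s : ℝ) / (((q : ℝ) - 1) * n)) :=
  stmt12_general q n hq a b k s hk hs
end

section
/- Let n, w, s be integers with 1 ≤ w ≤ n−1 and 0 ≤ s ≤ min(w, n−w). Let A, B be w-element subsets of {1,…,n} with |A \ B| = k. Let X be drawn uniformly at random from the set of w-element subsets of {1,…,n} with |A \ X| = s (this set is non-empty). Then E[|B \ X| − |A \ X|] = k·((w−s)/w − s/(n−w)). -/
open Finset

variable {α : Type*} [DecidableEq α]

lemma aux_filter_not_mem (U : Finset α) (i : α) (s : ℕ) :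
    (U.powersetCard s).filter (fun S => i ∉ S) = (U.erase i).powersetCard s := by
  ext T
  simp only [mem_filter, mem_powersetCard, subset_erase]
  tauto

lemma aux_sum_sdiff_card (U C : Finset α) (s : ℕ) (hC : C ⊆ U) :
    ∑ T ∈ U.powersetCard s, (C \ T).card = C.card * (U.card - 1).choose s := by
  have h1 : ∀ T : Finset α, (C \ T).card = ∑ i ∈ C, if i ∉ T then 1 else 0 := by
    intro T
    rw [Finset.sdiff_eq_filter, Finset.card_filter]
  simp_rw [h1]
  rw [Finset.sum_comm]
  rw [Finset.sum_congr rfl (fun i hi => ?_), Finset.sum_const, smul_eq_mul]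
  rw [← Finset.sum_filter, Finset.sum_const, smul_eq_mul, mul_one,
    aux_filter_not_mem, Finset.card_powersetCard, Finset.card_erase_of_mem (hC hi)]

lemma aux_sum_inter_card (U D : Finset α) (s : ℕ) (hD : D ⊆ U) :
    ∑ S ∈ U.powersetCard s, (D ∩ S).card
      = D.card * ((U.card).choose s - (U.card - 1).choose s) := by
  have h1 : ∀ S : Finset α, (D ∩ S).card = ∑ i ∈ D, if i ∈ S then 1 else 0 := by
    intro S
    rw [← Finset.filter_mem_eq_inter, Finset.card_filter]
  simp_rw [h1]
  rw [Finset.sum_comm]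
  rw [Finset.sum_congr rfl (fun i hi => ?_), Finset.sum_const, smul_eq_mul]
  have hsplit := Finset.card_filter_add_card_filter_not
    (s := U.powersetCard s) (p := fun S => i ∈ S)
  rw [← Finset.sum_filter, Finset.sum_const, smul_eq_mul, mul_one]
  have h2 : ((U.powersetCard s).filter (fun S => i ∉ S)).card = (U.card - 1).choose s := by
    rw [aux_filter_not_mem, Finset.card_powersetCard, Finset.card_erase_of_mem (hD hi)]
  have h3 : (U.powersetCard s).card = (U.card).choose s := Finset.card_powersetCard _ _
  have h4 := Nat.choose_le_choose s (Nat.sub_le U.card 1)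
  omega

/-- Exact expectation of |B \ X| - |A \ X| for X uniform on a Johnson sphere around A. -/
theorem stmt14 (n w s : ℕ) (hw1 : 1 ≤ w) (hw2 : w ≤ n - 1) (hs : s ≤ min w (n - w))
    (A B : Finset (Fin n)) (hA : A.card = w) (hB : B.card = w)
    (k : ℕ) (hk : (A \ B).card = k) :
    (Finset.univ.filter fun X : Finset (Fin n) => X.card = w ∧ (A \ X).card = s).Nonempty ∧
    (∑ X ∈ Finset.univ.filter fun X : Finset (Fin n) => X.card = w ∧ (A \ X).card = s,
        (((B \ X).card : ℝ) - ((A \ X).card : ℝ))) /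
      ((Finset.univ.filter fun X : Finset (Fin n) =>
        X.card = w ∧ (A \ X).card = s).card : ℝ) =
      (k : ℝ) * (((w : ℝ) - s) / w - (s : ℝ) / ((n : ℝ) - w)) := by
  have hsw : s ≤ w := le_trans hs (min_le_left _ _)
  have hsnw : s ≤ n - w := le_trans hs (min_le_right _ _)
  have hn : w + 1 ≤ n := by omega
  have hnw1 : 1 ≤ n - w := by omega
  have hAc : Aᶜ.card = n - w := by
    rw [Finset.card_compl, hA]; simp
  set F : Finset (Finset (Fin n)) :=
    Finset.univ.filter fun X => X.card = w ∧ (A \ X).card = s with hFdef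
  set P : Finset (Finset (Fin n) × Finset (Fin n)) :=
    (A.powersetCard s) ×ˢ (Aᶜ.powersetCard s) with hPdef
  have hPmem : ∀ p : Finset (Fin n) × Finset (Fin n), p ∈ P →
      p.1 ⊆ A ∧ p.1.card = s ∧ (∀ i ∈ p.2, i ∉ A) ∧ p.2.card = s := by
    rintro ⟨S, T⟩ hp
    simp only [hPdef, Finset.mem_product, Finset.mem_powersetCard] at hp
    exact ⟨hp.1.1, hp.1.2, fun i hi => by simpa using hp.2.1 hi, hp.2.2⟩
  -- forward map sends P into F
  have hfor : ∀ p ∈ P, (A \ p.1 ∪ p.2) ∈ F := by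
    rintro ⟨S, T⟩ hp
    obtain ⟨hSA, hScard, hTA, hTcard⟩ := hPmem _ hp
    replace hSA : S ⊆ A := hSA
    replace hScard : S.card = s := hScard
    replace hTA : ∀ i ∈ T, i ∉ A := hTA
    replace hTcard : T.card = s := hTcard
    have hdisj : Disjoint (A \ S) T := by
      rw [Finset.disjoint_left]
      intro i hi hiT
      exact hTA i hiT (Finset.mem_sdiff.mp hi).1
    have hAd : A \ (A \ S ∪ T) = S := by
      ext i
      simp only [Finset.mem_sdiff, Finset.mem_union, not_or, not_and, not_not]
      have h1 := hSA (x := i)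
      have h2 := hTA i
      constructor
      · rintro ⟨hiA, hi2, _⟩; exact hi2 hiA
      · intro hiS; exact ⟨h1 hiS, fun _ => hiS, fun h => h2 h (h1 hiS)⟩
    rw [hFdef, Finset.mem_filter]
    refine ⟨Finset.mem_univ _, ?_, ?_⟩
    · rw [Finset.card_union_of_disjoint hdisj, Finset.card_sdiff_of_subset hSA, hA, hScard]
      omega
    · rw [hAd, hScard]
  have hback : ∀ X ∈ F, (A \ X, X \ A) ∈ P := by
    intro X hX
    rw [hFdef, Finset.mem_filter] at hX
    obtain ⟨-, hXcard, hAXcard⟩ := hX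
    have h1 : (A \ X).card + (A ∩ X).card = A.card := Finset.card_sdiff_add_card_inter A X
    have h2 : (X \ A).card + (X ∩ A).card = X.card := Finset.card_sdiff_add_card_inter X A
    have h3 : (A ∩ X).card = (X ∩ A).card := by rw [Finset.inter_comm]
    rw [hPdef, Finset.mem_product, Finset.mem_powersetCard, Finset.mem_powersetCard]
    refine ⟨⟨Finset.sdiff_subset, hAXcard⟩, ?_, ?_⟩
    · intro i hi
      simp only [Finset.mem_compl]
      exact (Finset.mem_sdiff.mp hi).2
    · show (X \ A).card = s
      omega
  have hli : ∀ p ∈ P, (A \ (A \ p.1 ∪ p.2), (A \ p.1 ∪ p.2) \ A) = p := by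
    rintro ⟨S, T⟩ hp
    obtain ⟨hSA, hScard, hTA, hTcard⟩ := hPmem _ hp
    replace hSA : S ⊆ A := hSA
    replace hScard : S.card = s := hScard
    replace hTA : ∀ i ∈ T, i ∉ A := hTA
    replace hTcard : T.card = s := hTcard
    have h1 := fun i => hSA (x := i)
    have h2 := hTA
    have e1 : A \ (A \ S ∪ T) = S := by
      ext i
      simp only [Finset.mem_sdiff, Finset.mem_union, not_or, not_and, not_not]
      constructor
      · rintro ⟨hiA, hi2, _⟩; exact hi2 hiA
      · intro hiS; exact ⟨h1 i hiS, fun _ => hiS, fun h => h2 i h (h1 i hiS)⟩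
    have e2 : (A \ S ∪ T) \ A = T := by
      ext i
      simp only [Finset.mem_sdiff, Finset.mem_union]
      constructor
      · rintro ⟨hi1 | hi2, hiA⟩
        · exact absurd hi1.1 hiA
        · exact hi2
      · intro hiT; exact ⟨Or.inr hiT, h2 i hiT⟩
    rw [e1, e2]
  have hri : ∀ X ∈ F, (A \ (A \ X) ∪ (X \ A)) = X := by
    intro X _
    ext i
    simp only [Finset.mem_union, Finset.mem_sdiff, not_and, not_not]
    tauto
  -- cardinality of F
  have hcardF : F.card = w.choose s * (n - w).choose s := by
    have := Finset.card_nbij' (s := P) (t := F)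
      (fun p => A \ p.1 ∪ p.2) (fun X => (A \ X, X \ A)) hfor hback hli hri
    rw [← this, hPdef, Finset.card_product, Finset.card_powersetCard,
      Finset.card_powersetCard, hA, hAc]
  have hchposw : 0 < w.choose s := Nat.choose_pos hsw
  have hchposnw : 0 < (n - w).choose s := Nat.choose_pos hsnw
  have hFne : F.Nonempty := by
    rw [← Finset.card_pos, hcardF]
    positivity
  refine ⟨hFne, ?_⟩
  -- useful cards
  have hkBA : (B \ A).card = k := by
    rw [Finset.card_sdiff_comm (hB.trans hA.symm), hk]
  have hBAc : B \ A ⊆ Aᶜ := by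
    intro i hi
    simp only [Finset.mem_compl]
    exact (Finset.mem_sdiff.mp hi).2
  have hABA : A \ B ⊆ A := Finset.sdiff_subset
  -- transport the sum
  have hsum : (∑ X ∈ F, (((B \ X).card : ℝ) - ((A \ X).card : ℝ)))
      = ∑ p ∈ P, ((((B \ A) \ p.2).card : ℝ) - (((A \ B) ∩ p.1).card : ℝ)) := by
    refine Finset.sum_nbij' (fun X => (A \ X, X \ A)) (fun p => A \ p.1 ∪ p.2)
      hback hfor hri hli ?_
    intro X _
    have e1 : B \ X = ((B ∩ A) \ X) ∪ ((B \ A) \ X) := by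
      ext i; simp only [Finset.mem_sdiff, Finset.mem_union, Finset.mem_inter]; tauto
    have e2 : A \ X = ((A ∩ B) \ X) ∪ ((A \ B) \ X) := by
      ext i; simp only [Finset.mem_sdiff, Finset.mem_union, Finset.mem_inter]; tauto
    have d1 : Disjoint ((B ∩ A) \ X) ((B \ A) \ X) := by
      rw [Finset.disjoint_left]
      intro i hi1 hi2
      exact (Finset.mem_sdiff.mp (Finset.mem_sdiff.mp hi2).1).2
        (Finset.mem_inter.mp (Finset.mem_sdiff.mp hi1).1).2
    have d2 : Disjoint ((A ∩ B) \ X) ((A \ B) \ X) := by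
      rw [Finset.disjoint_left]
      intro i hi1 hi2
      exact (Finset.mem_sdiff.mp (Finset.mem_sdiff.mp hi2).1).2
        (Finset.mem_inter.mp (Finset.mem_sdiff.mp hi1).1).2
    have c1 : (B \ X).card = ((B ∩ A) \ X).card + ((B \ A) \ X).card := by
      rw [e1, Finset.card_union_of_disjoint d1]
    have c2 : (A \ X).card = ((A ∩ B) \ X).card + ((A \ B) \ X).card := by
      rw [e2, Finset.card_union_of_disjoint d2]
    have e3 : (B \ A) \ (X \ A) = (B \ A) \ X := by
      ext i; simp only [Finset.mem_sdiff, not_and, not_not]; tauto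
    have e4 : (A \ B) ∩ (A \ X) = (A \ B) \ X := by
      ext i; simp only [Finset.mem_sdiff, Finset.mem_inter]; tauto
    have e5 : (B ∩ A) = (A ∩ B) := Finset.inter_comm B A
    rw [c1, c2, e3, e4, e5]
    push_cast
    ring
  rw [hsum, hPdef, Finset.sum_product]
  -- compute the inner sums
  have hin : ∀ S ∈ A.powersetCard s,
      (∑ T ∈ Aᶜ.powersetCard s, ((((B \ A) \ T).card : ℝ) - (((A \ B) ∩ S).card : ℝ)))
      = (k : ℝ) * ((n - w - 1).choose s : ℝ)
        - ((n - w).choose s : ℝ) * (((A \ B) ∩ S).card : ℝ) := by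
    intro S _
    rw [Finset.sum_sub_distrib, Finset.sum_const, Finset.card_powersetCard, hAc]
    have := aux_sum_sdiff_card Aᶜ (B \ A) s hBAc
    rw [hAc, hkBA] at this
    have hcast : (∑ T ∈ Aᶜ.powersetCard s, (((B \ A) \ T).card : ℝ))
        = ((k * (n - w - 1).choose s : ℕ) : ℝ) := by
      rw [← this]; push_cast; rfl
    rw [hcast]
    push_cast
    ring
  rw [Finset.sum_congr rfl hin, Finset.sum_sub_distrib, Finset.sum_const,
    Finset.card_powersetCard, hA, ← Finset.mul_sum]
  have hS : (∑ S ∈ A.powersetCard s, (((A \ B) ∩ S).card : ℝ))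
      = ((k * (w.choose s - (w - 1).choose s) : ℕ) : ℝ) := by
    have := aux_sum_inter_card A (A \ B) s hABA
    rw [hA, hk] at this
    rw [← this]; push_cast; rfl
  rw [hS, hcardF]
  -- final algebra
  have hchle1 : (w - 1).choose s ≤ w.choose s := Nat.choose_le_choose s (Nat.sub_le w 1)
  have f1 : ((n - w - 1).choose s : ℝ) * ((n - w : ℕ) : ℝ)
      = ((n - w).choose s : ℝ) * (((n - w : ℕ) : ℝ) - (s : ℝ)) := by
    have hnat := Nat.choose_mul_succ_eq (n - w - 1) s
    have h1 : n - w - 1 + 1 = n - w := by omega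
    rw [h1] at hnat
    have h2 : ((n - w - s : ℕ) : ℝ) = ((n - w : ℕ) : ℝ) - (s : ℝ) := by
      push_cast [Nat.cast_sub hsnw]; ring
    calc ((n - w - 1).choose s : ℝ) * ((n - w : ℕ) : ℝ)
        = (((n - w - 1).choose s * (n - w) : ℕ) : ℝ) := by push_cast; ring
      _ = (((n - w).choose s * (n - w - s) : ℕ) : ℝ) := by rw [hnat]
      _ = _ := by push_cast [Nat.cast_sub hsnw]; ring
  have f2 : ((w - 1).choose s : ℝ) * (w : ℝ)
      = (w.choose s : ℝ) * ((w : ℝ) - (s : ℝ)) := by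
    have hnat := Nat.choose_mul_succ_eq (w - 1) s
    have h1 : w - 1 + 1 = w := by omega
    rw [h1] at hnat
    calc ((w - 1).choose s : ℝ) * (w : ℝ)
        = (((w - 1).choose s * w : ℕ) : ℝ) := by push_cast; ring
      _ = ((w.choose s * (w - s) : ℕ) : ℝ) := by rw [hnat]
      _ = _ := by push_cast [Nat.cast_sub hsw]; ring
  have hNW : ((n : ℝ) - (w : ℝ)) = ((n - w : ℕ) : ℝ) := by
    rw [Nat.cast_sub (by omega : w ≤ n)]
  rw [hNW]
  have hW0 : (w : ℝ) ≠ 0 := by positivity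
  have hNW0 : ((n - w : ℕ) : ℝ) ≠ 0 := by
    have : (0:ℕ) < n - w := by omega
    exact_mod_cast Nat.pos_iff_ne_zero.mp this
  have hD0 : (w.choose s : ℝ) ≠ 0 := by positivity
  have hC0 : ((n - w).choose s : ℝ) ≠ 0 := by positivity
  push_cast [Nat.cast_sub hchle1]
  field_simp
  ring_nf
  linear_combination ((k : ℝ) * (w : ℝ) * (w.choose s : ℝ)) * f1
    + ((k : ℝ) * ((n - w : ℕ) : ℝ) * ((n - w).choose s : ℝ)) * f2
end
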